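/- arXiv:1201.6166 — 10 statements merged into one kernel-verified Lean document; each statement's English description precedes it below -/
import Mathlib

section
/- Let T₁ and T₂ be two nontrivial trees (trees with at least two vertices) with n₁ and n₂ vertices respectively, where without loss of generality n₁ ≤ n₂. Then for every r with 4 ≤ r ≤ n₁ + 1, the r-th order conditional chromatic number of the join satisfies χ_r(T₁ + T₂) = 2(r − 1). -/
open SimpleGraph

noncomputable section

/-- The degree of a vertex, as the natural cardinality of its open neighborhood. -/
def gDeg {V : Type*} (G : SimpleGraph V) (v : V) : ℕ := (G.neighborSet v).ncard

/-- The maximum degree of a graph. -/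
def gMaxDeg {V : Type*} (G : SimpleGraph V) : ℕ := sSup {d : ℕ | ∃ v, gDeg G v = d}

/-- The minimum degree of a graph. -/
def gMinDeg {V : Type*} (G : SimpleGraph V) : ℕ := sInf {d : ℕ | ∃ v, gDeg G v = d}

/-- `c` is a conditional `(k,r)`-coloring of `G`: a surjective map onto the `k` colors that is
proper (C1), and such that every vertex `v` sees at least `min (d v) r` colors on its
neighborhood (C2). -/
def IsCondColoring {V : Type*} (G : SimpleGraph V) (r : ℕ) {k : ℕ} (c : V → Fin k) : Prop :=
  Function.Surjective c ∧
  (∀ ⦃u v⦄, G.Adj u v → c u ≠ c v) ∧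
  ∀ v : V, min (gDeg G v) r ≤ (c '' G.neighborSet v).ncard

/-- The `r`-th order conditional chromatic number of `G`. -/
def condChrom {V : Type*} (G : SimpleGraph V) (r : ℕ) : ℕ :=
  sInf {k : ℕ | ∃ c : V → Fin k, IsCondColoring G r c}

end

/-- The join of two graphs: the disjoint union together with all cross edges. -/
def graphJoin {α β : Type*} (G : SimpleGraph α) (H : SimpleGraph β) : SimpleGraph (α ⊕ β) where
  Adj x y :=
    match x, y with
    | Sum.inl a, Sum.inl b => G.Adj a b
    | Sum.inr a, Sum.inr b => H.Adj a b
    | _, _ => True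
  symm := ⟨by rintro (a | a) (b | b) h <;> first | exact h.symm | trivial⟩
  loopless := ⟨by rintro (a | a) h <;> exact h.ne rfl⟩

lemma aux_exists_nbr {V : Type*} {T : SimpleGraph V} (hc : T.Connected) (hnt : Nontrivial V)
    (v : V) : ∃ w, T.Adj v w := by
  obtain ⟨w, hw⟩ := exists_ne v
  obtain ⟨p⟩ := hc v w
  exact ⟨p.getVert 1, p.adj_snd (Walk.not_nil_of_ne (Ne.symm hw))⟩

lemma aux_dist_parity {V : Type*} {T : SimpleGraph V} (hT : T.IsTree) (root : V) {x y : V}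
    (h : T.Adj x y) : T.dist root x % 2 ≠ T.dist root y % 2 := by
  have conn := hT.isConnected
  have key : ∀ a b : V, T.Adj a b → T.dist root a = T.dist root b → False := by
    classical
    intro a b hab heq
    obtain ⟨p, hp, hlen⟩ := conn.exists_path_of_dist root a
    rcases Nat.eq_zero_or_pos (T.dist root a) with hd0 | hdpos
    · have ha : root = a := (conn.dist_eq_zero_iff).mp hd0
      have hb : root = b := (conn.dist_eq_zero_iff).mp (heq ▸ hd0)
      exact hab.ne (ha ▸ hb ▸ rfl)
    by_cases hb : b ∈ p.support
    · have hq : T.dist root b ≤ (p.takeUntil b hb).length := T.dist_le _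
      have hsplit := congrArg Walk.length (p.take_spec hb)
      rw [Walk.length_append] at hsplit
      have hdrop : 1 ≤ (p.dropUntil b hb).length := by
        rcases Nat.eq_zero_or_pos (p.dropUntil b hb).length with h0 | h1
        · exact absurd (Walk.eq_of_length_eq_zero h0) hab.ne'
        · exact h1
      omega
    · have hpath2 : (Walk.cons hab.symm p.reverse).IsPath := by
        rw [Walk.cons_isPath_iff]
        exact ⟨hp.reverse, by simpa [Walk.support_reverse] using hb⟩
      obtain ⟨q, hq, hqlen⟩ := conn.exists_path_of_dist root b
      obtain ⟨w, _, huniq⟩ := hT.existsUnique_path b root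
      have e1 := huniq _ hpath2
      have e2 := huniq _ hq.reverse
      have : (Walk.cons hab.symm p.reverse).length = q.reverse.length := by rw [e1, e2]
      simp only [Walk.length_cons, Walk.length_reverse] at this
      omega
  intro hmod
  have h1 : T.dist root y ≤ T.dist root x + 1 := by
    have ht := conn.dist_triangle (u := root) (v := x) (w := y)
    rwa [(dist_eq_one_iff_adj).mpr h] at ht
  have h2 : T.dist root x ≤ T.dist root y + 1 := by
    have ht := conn.dist_triangle (u := root) (v := y) (w := x)
    rwa [(dist_eq_one_iff_adj).mpr h.symm] at ht
  have h3 : T.dist root x ≠ T.dist root y := key x y h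
  omega

lemma aux_exists_leaf {V : Type*} [Fintype V] (T : SimpleGraph V) (hT : T.IsTree)
    (h2 : 2 ≤ Fintype.card V) : ∃ v, (T.neighborSet v).ncard = 1 := by
  classical
  have hnt : Nontrivial V := Fintype.one_lt_card_iff_nontrivial.mp h2
  have hncard : ∀ v, (T.neighborSet v).ncard = T.degree v := by
    intro v
    rw [Set.ncard_eq_toFinset_card', ← neighborFinset_def]
    rfl
  by_contra hno
  push_neg at hno
  have hdeg2 : ∀ v, 2 ≤ T.degree v := by
    intro v
    have h1 : 0 < T.degree v :=
      (T.degree_pos_iff_exists_adj v).mpr (aux_exists_nbr hT.isConnected hnt v)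
    have hne1 : T.degree v ≠ 1 := fun h => hno v (by rw [hncard, h])
    omega
  have hsum := T.sum_degrees_eq_twice_card_edges
  have hcard := hT.card_edgeFinset
  have hlow : Finset.univ.card • 2 ≤ ∑ v, T.degree v :=
    Finset.card_nsmul_le_sum Finset.univ _ 2 (fun v _ => hdeg2 v)
  rw [Finset.card_univ, smul_eq_mul] at hlow
  omega

lemma aux_surj_coloring {V : Type*} [Fintype V] (T : SimpleGraph V) (hT : T.IsTree)
    (h2 : 2 ≤ Fintype.card V) (m : ℕ) (hm : 2 ≤ m) (hmn : m ≤ Fintype.card V) :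
    ∃ f : V → Fin m, Function.Surjective f ∧ ∀ ⦃x y⦄, T.Adj x y → f x ≠ f y := by
  classical
  have hnt : Nontrivial V := Fintype.one_lt_card_iff_nontrivial.mp h2
  obtain ⟨u⟩ := hT.isConnected.nonempty
  obtain ⟨v, huv⟩ := aux_exists_nbr hT.isConnected hnt u
  have hcard2 : ({u, v} : Finset V).card = 2 := by
    rw [Finset.card_insert_of_notMem (by simp [huv.ne]), Finset.card_singleton]
  have hsub : m - 2 ≤ (Finset.univ \ {u, v} : Finset V).card := by
    rw [Finset.card_sdiff_of_subset (Finset.subset_univ _), Finset.card_univ, hcard2]; omega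
  obtain ⟨S, hS, hScard⟩ := Finset.exists_subset_card_eq hsub
  have e : (S : Finset V) ≃ Fin (m - 2) := S.equivFinOfCardEq hScard
  have hu : u ∉ S := fun h => by have := hS h; simp at this
  have hv : v ∉ S := fun h => by have := hS h; simp at this
  have h0m : 0 < m := by omega
  have h1m : 1 < m := by omega
  set g : V → Fin m := fun x => if T.dist u x % 2 = 0 then ⟨0, h0m⟩ else ⟨1, h1m⟩ with hg
  have hEm : ∀ i : Fin (m - 2), i.val + 2 < m := fun i => by omega
  set f : V → Fin m := fun x =>
    if hx : x ∈ S then ⟨(e ⟨x, hx⟩).val + 2, hEm _⟩ else g x with hf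
  have hfS : ∀ x (hx : x ∈ S), f x = ⟨(e ⟨x, hx⟩).val + 2, hEm _⟩ := fun x hx => dif_pos hx
  have hfnS : ∀ x, x ∉ S → f x = g x := fun x hx => dif_neg hx
  have hfu : f u = ⟨0, h0m⟩ := by
    rw [hfnS u hu, hg]; simp [SimpleGraph.dist_self]
  have hfv : f v = ⟨1, h1m⟩ := by
    have hd : T.dist u v = 1 := (dist_eq_one_iff_adj).mpr huv
    rw [hfnS v hv, hg]; simp [hd]
  refine ⟨f, ?_, ?_⟩
  · intro j
    by_cases hj : 2 ≤ j.val
    · refine ⟨(e.symm ⟨j.val - 2, by omega⟩).1, Fin.ext ?_⟩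
      rw [hfS _ (e.symm ⟨j.val - 2, by omega⟩).2]
      show (e ⟨(e.symm ⟨j.val - 2, by omega⟩).1, (e.symm ⟨j.val - 2, by omega⟩).2⟩).val + 2 = j.val
      rw [Subtype.eta, Equiv.apply_symm_apply]
      show (j.val - 2) + 2 = j.val
      omega
    · have hj01 : j.val = 0 ∨ j.val = 1 := by omega
      rcases hj01 with h | h
      · exact ⟨u, by rw [hfu]; exact (Fin.ext h.symm)⟩
      · exact ⟨v, by rw [hfv]; exact (Fin.ext h.symm)⟩
  · intro x y hxy heq
    have hne : x ≠ y := hxy.ne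
    have hpar := aux_dist_parity hT u hxy
    have hgval : ∀ z, (g z).val = 0 ∨ (g z).val = 1 := by
      intro z; rw [hg]; dsimp only; split_ifs <;> simp
    have hgne : (g x).val ≠ (g y).val := by
      rw [hg]; dsimp only; split_ifs <;> simp_all
    by_cases hx : x ∈ S <;> by_cases hy : y ∈ S
    · rw [hfS x hx, hfS y hy] at heq
      have hval : (e ⟨x, hx⟩).val + 2 = (e ⟨y, hy⟩).val + 2 := congrArg Fin.val heq
      have he : e ⟨x, hx⟩ = e ⟨y, hy⟩ := Fin.ext (by omega)
      exact hne (congrArg Subtype.val (e.injective he))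
    · rw [hfS x hx, hfnS y hy] at heq
      have hval : (e ⟨x, hx⟩).val + 2 = (g y).val := congrArg Fin.val heq
      have := hgval y; omega
    · rw [hfnS x hx, hfS y hy] at heq
      have hval : (g x).val = (e ⟨y, hy⟩).val + 2 := congrArg Fin.val heq
      have := hgval x; omega
    · rw [hfnS x hx, hfnS y hy] at heq
      exact hgne (congrArg Fin.val heq)

/-- If `T₁`, `T₂` are nontrivial trees with `n₁ ≤ n₂` vertices, then for every
`r` with `4 ≤ r ≤ n₁ + 1`, `χ_r(T₁ + T₂) = 2(r - 1)`. -/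
theorem condChrom_join_trees {V₁ V₂ : Type*} [Fintype V₁] [Fintype V₂]
    (T₁ : SimpleGraph V₁) (T₂ : SimpleGraph V₂) (hT₁ : T₁.IsTree) (hT₂ : T₂.IsTree)
    (n₁ n₂ : ℕ) (hn₁ : Fintype.card V₁ = n₁) (hn₂ : Fintype.card V₂ = n₂)
    (h₁ : 2 ≤ n₁) (h₂ : 2 ≤ n₂) (hle : n₁ ≤ n₂)
    (r : ℕ) (hr : 4 ≤ r) (hr' : r ≤ n₁ + 1) :
    condChrom (graphJoin T₁ T₂) r = 2 * (r - 1) := by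
  classical
  subst hn₁ hn₂
  set J := graphJoin T₁ T₂ with hJ
  set m := r - 1 with hmdef
  have hm3 : 3 ≤ m := by omega
  have hnt1 : Nontrivial V₁ := Fintype.one_lt_card_iff_nontrivial.mp h₁
  have hnt2 : Nontrivial V₂ := Fintype.one_lt_card_iff_nontrivial.mp h₂
  have hadj_lr : ∀ (a : V₁) (b : V₂), J.Adj (Sum.inl a) (Sum.inr b) := fun a b => trivial
  have hadj_ll : ∀ {a b : V₁}, T₁.Adj a b → J.Adj (Sum.inl a) (Sum.inl b) := fun h => h
  have hadj_rr : ∀ {a b : V₂}, T₂.Adj a b → J.Adj (Sum.inr a) (Sum.inr b) := fun h => h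
  -- Upper bound: a conditional (2m, r)-coloring.
  obtain ⟨f₁, hf₁s, hf₁p⟩ := aux_surj_coloring T₁ hT₁ h₁ m (by omega) (by omega)
  obtain ⟨f₂, hf₂s, hf₂p⟩ := aux_surj_coloring T₂ hT₂ h₂ m (by omega) (by omega)
  have hm2m : ∀ i : Fin m, (i : ℕ) < 2 * m := fun i => by have := i.isLt; omega
  have hm2m' : ∀ i : Fin m, m + (i : ℕ) < 2 * m := fun i => by have := i.isLt; omega
  set c : V₁ ⊕ V₂ → Fin (2 * m) :=
    Sum.elim (fun a => ⟨(f₁ a).val, hm2m _⟩) (fun b => ⟨m + (f₂ b).val, hm2m' _⟩) with hc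
  set R : Set (Fin (2 * m)) :=
    Set.range (fun i : Fin m => (⟨m + i.val, hm2m' i⟩ : Fin (2 * m))) with hR
  set L : Set (Fin (2 * m)) :=
    Set.range (fun i : Fin m => (⟨i.val, hm2m i⟩ : Fin (2 * m))) with hL
  have hRcard : R.ncard = m := by
    rw [hR, ← Set.image_univ, Set.ncard_image_of_injective _ (fun i j hij => by
      rw [Fin.mk.injEq] at hij
      exact Fin.ext (by omega)), Set.ncard_univ, Nat.card_eq_fintype_card, Fintype.card_fin]
  have hLcard : L.ncard = m := by
    rw [hL, ← Set.image_univ, Set.ncard_image_of_injective _ (fun i j hij => by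
      rw [Fin.mk.injEq] at hij
      exact Fin.ext hij), Set.ncard_univ, Nat.card_eq_fintype_card, Fintype.card_fin]
  have hupper : IsCondColoring J r c := by
    refine ⟨?_, ?_, ?_⟩
    · intro j
      have hj2 := j.isLt
      by_cases hj : j.val < m
      · obtain ⟨a, ha⟩ := hf₁s ⟨j.val, hj⟩
        refine ⟨Sum.inl a, Fin.ext ?_⟩
        show (f₁ a).val = j.val
        rw [ha]
      · obtain ⟨b, hb⟩ := hf₂s ⟨j.val - m, by omega⟩
        refine ⟨Sum.inr b, Fin.ext ?_⟩
        show m + (f₂ b).val = j.val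
        rw [hb]
        show m + (j.val - m) = j.val
        omega
    · rintro (a | a) (b | b) h heq
      · have h' : T₁.Adj a b := h
        have hval : (⟨(f₁ a).val, hm2m _⟩ : Fin (2 * m)) = ⟨(f₁ b).val, hm2m _⟩ := heq
        rw [Fin.mk.injEq] at hval
        exact hf₁p h' (Fin.ext hval)
      · have hval : (⟨(f₁ a).val, hm2m _⟩ : Fin (2 * m)) = ⟨m + (f₂ b).val, hm2m' _⟩ := heq
        rw [Fin.mk.injEq] at hval
        have := (f₁ a).isLt
        omega
      · have hval : (⟨m + (f₂ a).val, hm2m' _⟩ : Fin (2 * m)) = ⟨(f₁ b).val, hm2m _⟩ := heq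
        rw [Fin.mk.injEq] at hval
        have := (f₁ b).isLt
        omega
      · have h' : T₂.Adj a b := h
        have hval : (⟨m + (f₂ a).val, hm2m' _⟩ : Fin (2 * m)) = ⟨m + (f₂ b).val, hm2m' _⟩ := heq
        rw [Fin.mk.injEq] at hval
        exact hf₂p h' (Fin.ext (by omega))
    · rintro (a | a)
      · obtain ⟨b₀, hb₀⟩ := aux_exists_nbr hT₁.isConnected hnt1 a
        refine (min_le_right _ _).trans ?_
        have hx : c (Sum.inl b₀) ∉ R := by
          rintro ⟨i, hi⟩
          have hval : (⟨m + i.val, hm2m' i⟩ : Fin (2 * m)) = ⟨(f₁ b₀).val, hm2m _⟩ := hi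
          rw [Fin.mk.injEq] at hval
          have := (f₁ b₀).isLt
          omega
        have hsub : insert (c (Sum.inl b₀)) R ⊆ c '' J.neighborSet (Sum.inl a) := by
          intro x hxmem
          rcases Set.mem_insert_iff.mp hxmem with rfl | ⟨i, rfl⟩
          · exact ⟨Sum.inl b₀, hb₀, rfl⟩
          · obtain ⟨b, hb⟩ := hf₂s i
            refine ⟨Sum.inr b, hadj_lr a b, Fin.ext ?_⟩
            show m + (f₂ b).val = m + i.val
            rw [hb]
        calc r = m + 1 := by omega
          _ = (insert (c (Sum.inl b₀)) R).ncard := by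
              rw [Set.ncard_insert_of_notMem hx (Set.toFinite R), hRcard]
          _ ≤ _ := Set.ncard_le_ncard hsub (Set.toFinite _)
      · obtain ⟨b₀, hb₀⟩ := aux_exists_nbr hT₂.isConnected hnt2 a
        refine (min_le_right _ _).trans ?_
        have hx : c (Sum.inr b₀) ∉ L := by
          rintro ⟨i, hi⟩
          have hval : (⟨i.val, hm2m i⟩ : Fin (2 * m)) = ⟨m + (f₂ b₀).val, hm2m' _⟩ := hi
          rw [Fin.mk.injEq] at hval
          have := i.isLt
          omega
        have hsub : insert (c (Sum.inr b₀)) L ⊆ c '' J.neighborSet (Sum.inr a) := by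
          intro x hxmem
          rcases Set.mem_insert_iff.mp hxmem with rfl | ⟨i, rfl⟩
          · exact ⟨Sum.inr b₀, hb₀, rfl⟩
          · obtain ⟨b, hb⟩ := hf₁s i
            refine ⟨Sum.inl b, trivial, Fin.ext ?_⟩
            show (f₁ b).val = i.val
            rw [hb]
        calc r = m + 1 := by omega
          _ = (insert (c (Sum.inr b₀)) L).ncard := by
              rw [Set.ncard_insert_of_notMem hx (Set.toFinite L), hLcard]
          _ ≤ _ := Set.ncard_le_ncard hsub (Set.toFinite _)
  -- Lower bound.
  have hlow : ∀ (k : ℕ) (c' : V₁ ⊕ V₂ → Fin k), IsCondColoring J r c' → 2 * m ≤ k := by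
    intro k c' hcol
    obtain ⟨hsurj, hprop, hC2⟩ := hcol
    set A := Set.range (fun a : V₁ => c' (Sum.inl a)) with hA
    set B := Set.range (fun b : V₂ => c' (Sum.inr b)) with hB
    have hdisj : Disjoint A B := by
      rw [Set.disjoint_left]
      rintro x ⟨a, rfl⟩ ⟨b, hb⟩
      exact hprop (hadj_lr a b) hb.symm
    have hBcard : m ≤ B.ncard := by
      by_contra hlt
      push_neg at hlt
      obtain ⟨a, ha⟩ := aux_exists_leaf T₁ hT₁ h₁
      have hsubN : (Sum.inr '' (Set.univ : Set V₂)) ∪ (Sum.inl '' T₁.neighborSet a) ⊆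
          J.neighborSet (Sum.inl a) := by
        rintro x (⟨b, -, rfl⟩ | ⟨b, hbmem, rfl⟩)
        · exact hadj_lr a b
        · exact hbmem
      have hdisjN : Disjoint (Sum.inr '' (Set.univ : Set V₂)) (Sum.inl '' T₁.neighborSet a) := by
        rw [Set.disjoint_left]
        rintro x ⟨b, -, rfl⟩ ⟨b', -, h'⟩
        exact Sum.inl_ne_inr h'
      have hN1 : ((Sum.inr : V₂ → V₁ ⊕ V₂) '' (Set.univ : Set V₂)).ncard = Fintype.card V₂ := by
        rw [Set.ncard_image_of_injective _ Sum.inr_injective, Set.ncard_univ,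
          Nat.card_eq_fintype_card]
      have hN2 : ((Sum.inl : V₁ → V₁ ⊕ V₂) '' T₁.neighborSet a).ncard = 1 := by
        rw [Set.ncard_image_of_injective _ Sum.inl_injective, ha]
      have hdeg : r ≤ gDeg J (Sum.inl a) := by
        have hmono := Set.ncard_le_ncard hsubN (Set.toFinite _)
        rw [Set.ncard_union_eq hdisjN (Set.toFinite _) (Set.toFinite _), hN1, hN2] at hmono
        unfold gDeg
        omega
      have hC := hC2 (Sum.inl a)
      rw [min_eq_right hdeg] at hC
      have himg : c' '' J.neighborSet (Sum.inl a) ⊆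
          ((fun x => c' (Sum.inl x)) '' T₁.neighborSet a) ∪ B := by
        rintro x ⟨w, hw, rfl⟩
        cases w with
        | inl b => exact Or.inl ⟨b, hw, rfl⟩
        | inr b => exact Or.inr ⟨b, rfl⟩
      have hle2 := Set.ncard_le_ncard himg (Set.toFinite _)
      have hle3 := Set.ncard_union_le ((fun x => c' (Sum.inl x)) '' T₁.neighborSet a) B
      have hle4 : ((fun x => c' (Sum.inl x)) '' T₁.neighborSet a).ncard ≤ 1 :=
        le_of_le_of_eq (Set.ncard_image_le (Set.toFinite _)) ha
      omega
    have hAcard : m ≤ A.ncard := by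
      by_contra hlt
      push_neg at hlt
      obtain ⟨a, ha⟩ := aux_exists_leaf T₂ hT₂ h₂
      have hsubN : (Sum.inl '' (Set.univ : Set V₁)) ∪ (Sum.inr '' T₂.neighborSet a) ⊆
          J.neighborSet (Sum.inr a) := by
        rintro x (⟨b, -, rfl⟩ | ⟨b, hbmem, rfl⟩)
        · exact trivial
        · exact hbmem
      have hdisjN : Disjoint (Sum.inl '' (Set.univ : Set V₁)) (Sum.inr '' T₂.neighborSet a) := by
        rw [Set.disjoint_left]
        rintro x ⟨b, -, rfl⟩ ⟨b', -, h'⟩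
        exact Sum.inr_ne_inl h'
      have hN1 : ((Sum.inl : V₁ → V₁ ⊕ V₂) '' (Set.univ : Set V₁)).ncard = Fintype.card V₁ := by
        rw [Set.ncard_image_of_injective _ Sum.inl_injective, Set.ncard_univ,
          Nat.card_eq_fintype_card]
      have hN2 : ((Sum.inr : V₂ → V₁ ⊕ V₂) '' T₂.neighborSet a).ncard = 1 := by
        rw [Set.ncard_image_of_injective _ Sum.inr_injective, ha]
      have hdeg : r ≤ gDeg J (Sum.inr a) := by
        have hmono := Set.ncard_le_ncard hsubN (Set.toFinite _)
        rw [Set.ncard_union_eq hdisjN (Set.toFinite _) (Set.toFinite _), hN1, hN2] at hmono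
        unfold gDeg
        omega
      have hC := hC2 (Sum.inr a)
      rw [min_eq_right hdeg] at hC
      have himg : c' '' J.neighborSet (Sum.inr a) ⊆
          ((fun x => c' (Sum.inr x)) '' T₂.neighborSet a) ∪ A := by
        rintro x ⟨w, hw, rfl⟩
        cases w with
        | inl b => exact Or.inr ⟨b, rfl⟩
        | inr b => exact Or.inl ⟨b, hw, rfl⟩
      have hle2 := Set.ncard_le_ncard himg (Set.toFinite _)
      have hle3 := Set.ncard_union_le ((fun x => c' (Sum.inr x)) '' T₂.neighborSet a) A
      have hle4 : ((fun x => c' (Sum.inr x)) '' T₂.neighborSet a).ncard ≤ 1 :=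
        le_of_le_of_eq (Set.ncard_image_le (Set.toFinite _)) ha
      omega
    have hunion : (A ∪ B).ncard = A.ncard + B.ncard :=
      Set.ncard_union_eq hdisj (Set.toFinite _) (Set.toFinite _)
    have hk : (A ∪ B).ncard ≤ k := by
      have hmono := Set.ncard_le_ncard (Set.subset_univ (A ∪ B)) (Set.toFinite _)
      rwa [Set.ncard_univ, Nat.card_eq_fintype_card, Fintype.card_fin] at hmono
    omega
  have hmem : 2 * m ∈ {k : ℕ | ∃ c : V₁ ⊕ V₂ → Fin k, IsCondColoring J r c} := ⟨c, hupper⟩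
  refine le_antisymm (Nat.sInf_le hmem) ?_
  obtain ⟨c', hc'⟩ := Nat.sInf_mem (⟨2 * m, hmem⟩ :
    Set.Nonempty {k : ℕ | ∃ c : V₁ ⊕ V₂ → Fin k, IsCondColoring J r c})
  exact hlow _ c' hc'
end

section
/- Let G₁ and G₂ be two (finite simple) graphs, and let r₁ and r₂ be integers with r₁ ≥ δ(G₁) and r₂ ≥ δ(G₂), where δ denotes minimum degree. Then for every r with 0 < r ≤ δ(G₁) + δ(G₂), the r-th order conditional chromatic number of the Cartesian product satisfies χ_r(G₁ □ G₂) ≤ χ_{r₁}(G₁) · χ_{r₂}(G₂). -/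
open SimpleGraph

lemma exists_condColoring_card {V : Type*} [Fintype V] (G : SimpleGraph V) (r : ℕ) :
    ∃ c : V → Fin (Fintype.card V), IsCondColoring G r c := by
  classical
  refine ⟨Fintype.equivFin V, (Fintype.equivFin V).surjective, ?_, ?_⟩
  · intro u v h he
    exact h.ne ((Fintype.equivFin V).injective he)
  · intro v
    rw [Set.ncard_image_of_injective _ (Fintype.equivFin V).injective]
    exact min_le_left _ _

lemma condChrom_spec {V : Type*} [Fintype V] (G : SimpleGraph V) (r : ℕ) :
    ∃ c : V → Fin (condChrom G r), IsCondColoring G r c := by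
  have h : condChrom G r ∈ {k : ℕ | ∃ c : V → Fin k, IsCondColoring G r c} :=
    Nat.sInf_mem ⟨Fintype.card V, exists_condColoring_card G r⟩
  exact h

/-- If `r₁ ≥ δ(G₁)` and `r₂ ≥ δ(G₂)`, then for every `r` with
`0 < r ≤ δ(G₁) + δ(G₂)`, `χ_r(G₁ □ G₂) ≤ χ_{r₁}(G₁) · χ_{r₂}(G₂)`. -/
theorem condChrom_boxProd_le {V₁ V₂ : Type*} [Fintype V₁] [Fintype V₂]
    (G₁ : SimpleGraph V₁) (G₂ : SimpleGraph V₂) (r₁ r₂ : ℕ)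
    (h₁ : gMinDeg G₁ ≤ r₁) (h₂ : gMinDeg G₂ ≤ r₂)
    (r : ℕ) (hr : 0 < r) (hr' : r ≤ gMinDeg G₁ + gMinDeg G₂) :
    condChrom (G₁ □ G₂) r ≤ condChrom G₁ r₁ * condChrom G₂ r₂ := by
  classical
  obtain ⟨c₁, hs₁, hp₁, hc₁⟩ := condChrom_spec G₁ r₁
  obtain ⟨c₂, hs₂, hp₂, hc₂⟩ := condChrom_spec G₂ r₂
  have hmem : condChrom G₁ r₁ * condChrom G₂ r₂ ∈
      {k : ℕ | ∃ c : V₁ × V₂ → Fin k, IsCondColoring (G₁ □ G₂) r c} := by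
    refine ⟨fun p => finProdFinEquiv (c₁ p.1, c₂ p.2), ?_, ?_, ?_⟩
    · have hsf : Function.Surjective (fun p : V₁ × V₂ => (c₁ p.1, c₂ p.2)) :=
        hs₁.prodMap hs₂
      exact finProdFinEquiv.surjective.comp hsf
    · rintro ⟨a, b⟩ ⟨a', b'⟩ hadj he
      have he' : (c₁ a, c₂ b) = (c₁ a', c₂ b') := finProdFinEquiv.injective he
      rw [SimpleGraph.boxProd_adj] at hadj
      rcases hadj with ⟨h, _⟩ | ⟨h, _⟩
      · exact hp₁ h (congrArg Prod.fst he')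
      · exact hp₂ h (congrArg Prod.snd he')
    · rintro ⟨a, b⟩
      have hN : (G₁ □ G₂).neighborSet (a, b) =
          (G₁.neighborSet a) ×ˢ {b} ∪ {a} ×ˢ (G₂.neighborSet b) := by
        ext ⟨x, y⟩
        simp only [SimpleGraph.mem_neighborSet, SimpleGraph.boxProd_adj, Set.mem_union,
          Set.mem_prod, Set.mem_singleton_iff]
        constructor
        · rintro (⟨h, h'⟩ | ⟨h, h'⟩)
          · exact Or.inl ⟨h, h'.symm⟩
          · exact Or.inr ⟨h'.symm, h⟩
        · rintro (⟨h, h'⟩ | ⟨h, h'⟩)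
          · exact Or.inl ⟨h, h'.symm⟩
          · exact Or.inr ⟨h', h.symm⟩
      have himg : (fun p : V₁ × V₂ => (c₁ p.1, c₂ p.2)) ''
            ((G₁.neighborSet a) ×ˢ {b} ∪ {a} ×ˢ (G₂.neighborSet b)) =
          (c₁ '' G₁.neighborSet a) ×ˢ {c₂ b} ∪ {c₁ a} ×ˢ (c₂ '' G₂.neighborSet b) := by
        rw [Set.image_union]
        congr 1
        · ext ⟨u, v⟩
          simp only [Set.mem_image, Set.mem_prod, Set.mem_singleton_iff, Prod.mk.injEq,
            Prod.exists]
          constructor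
          · rintro ⟨x, y, ⟨hx, rfl⟩, rfl, rfl⟩
            exact ⟨⟨x, hx, rfl⟩, rfl⟩
          · rintro ⟨⟨x, hx, rfl⟩, rfl⟩
            exact ⟨x, b, ⟨hx, rfl⟩, rfl, rfl⟩
        · ext ⟨u, v⟩
          simp only [Set.mem_image, Set.mem_prod, Set.mem_singleton_iff, Prod.mk.injEq,
            Prod.exists]
          constructor
          · rintro ⟨x, y, ⟨rfl, hy⟩, rfl, rfl⟩
            exact ⟨rfl, ⟨y, hy, rfl⟩⟩
          · rintro ⟨rfl, ⟨y, hy, rfl⟩⟩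
            exact ⟨a, y, ⟨rfl, hy⟩, rfl, rfl⟩
      have hdisj : Disjoint ((c₁ '' G₁.neighborSet a) ×ˢ {c₂ b})
          ({c₁ a} ×ˢ (c₂ '' G₂.neighborSet b)) := by
        rw [Set.disjoint_left]
        rintro ⟨u, v⟩ ⟨_, hv⟩ ⟨_, hv'⟩
        simp only [Set.mem_singleton_iff] at hv
        obtain ⟨y, hy, hyv⟩ := hv'
        exact hp₂ hy (hyv.trans hv).symm
      have hcard1 : ((c₁ '' G₁.neighborSet a) ×ˢ ({c₂ b} : Set (Fin (condChrom G₂ r₂)))).ncard =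
          (c₁ '' G₁.neighborSet a).ncard := by
        rw [Set.prod_singleton, Set.ncard_image_of_injective]
        intro x y h
        exact ((Prod.mk.injEq _ _ _ _).mp h).1
      have hcard2 : (({c₁ a} : Set (Fin (condChrom G₁ r₁))) ×ˢ (c₂ '' G₂.neighborSet b)).ncard =
          (c₂ '' G₂.neighborSet b).ncard := by
        rw [Set.singleton_prod, Set.ncard_image_of_injective]
        intro x y h
        exact ((Prod.mk.injEq _ _ _ _).mp h).2
      have hunion : ((fun p : V₁ × V₂ => (c₁ p.1, c₂ p.2)) ''
            (G₁ □ G₂).neighborSet (a, b)).ncard =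
          (c₁ '' G₁.neighborSet a).ncard + (c₂ '' G₂.neighborSet b).ncard := by
        rw [hN, himg, Set.ncard_union_eq hdisj (Set.toFinite _) (Set.toFinite _),
          hcard1, hcard2]
      have hrw : (fun p : V₁ × V₂ => finProdFinEquiv (c₁ p.1, c₂ p.2)) ''
            (G₁ □ G₂).neighborSet (a, b) =
          finProdFinEquiv '' ((fun p : V₁ × V₂ => (c₁ p.1, c₂ p.2)) ''
            (G₁ □ G₂).neighborSet (a, b)) := by
        rw [← Set.image_comp]; rfl
      have hδ1 : gMinDeg G₁ ≤ min (gDeg G₁ a) r₁ := le_min (Nat.sInf_le ⟨a, rfl⟩) h₁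
      have hδ2 : gMinDeg G₂ ≤ min (gDeg G₂ b) r₂ := le_min (Nat.sInf_le ⟨b, rfl⟩) h₂
      calc min (gDeg (G₁ □ G₂) (a, b)) r ≤ r := min_le_right _ _
        _ ≤ gMinDeg G₁ + gMinDeg G₂ := hr'
        _ ≤ min (gDeg G₁ a) r₁ + min (gDeg G₂ b) r₂ := Nat.add_le_add hδ1 hδ2
        _ ≤ (c₁ '' G₁.neighborSet a).ncard + (c₂ '' G₂.neighborSet b).ncard :=
            Nat.add_le_add (hc₁ a) (hc₂ b)
        _ = ((fun p : V₁ × V₂ => (c₁ p.1, c₂ p.2)) ''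
              (G₁ □ G₂).neighborSet (a, b)).ncard := hunion.symm
        _ = ((fun p : V₁ × V₂ => finProdFinEquiv (c₁ p.1, c₂ p.2)) ''
              (G₁ □ G₂).neighborSet (a, b)).ncard := by
            rw [hrw, Set.ncard_image_of_injective _ finProdFinEquiv.injective]
  exact Nat.sInf_le hmem
end

section
/- Let G be a (finite simple) graph, let 0 < r ≤ Δ(G), and let S be a subset of V(G) such that (i) every vertex u ∈ S has degree d(u) ≤ r, and (ii) for all u₁, u₂ ∈ S, either u₁u₂ ∈ E(G) or there exists u₃ ∈ S with u₁, u₂ ∈ N(u₃) (or both). Then χ_r(G) ≥ |S|. -/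
open SimpleGraph

/-- **Lemma 3.1.** If `0 < r ≤ Δ(G)` and `S ⊆ V(G)` is such that (i) every
`u ∈ S` has degree at most `r`, and (ii) any two distinct vertices of `S` are adjacent or have
a common neighbor in `S`, then `χ_r(G) ≥ |S|`. -/
theorem condChrom_ge_of_Vset {V : Type*} [Fintype V] (G : SimpleGraph V) (r : ℕ)
    (hr : 0 < r) (hrΔ : r ≤ gMaxDeg G) (S : Set V)
    (h₁ : ∀ u ∈ S, gDeg G u ≤ r)
    (h₂ : ∀ u₁ ∈ S, ∀ u₂ ∈ S, u₁ ≠ u₂ →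
      G.Adj u₁ u₂ ∨ ∃ u₃ ∈ S, u₁ ∈ G.neighborSet u₃ ∧ u₂ ∈ G.neighborSet u₃) :
    S.ncard ≤ condChrom G r := by
  classical
  -- Nonemptiness: a bijective coloring with |V| colors works.
  have hne : {k : ℕ | ∃ c : V → Fin k, IsCondColoring G r c}.Nonempty := by
    refine ⟨Fintype.card V, (Fintype.equivFin V : V → Fin (Fintype.card V)), ?_, ?_, ?_⟩
    · exact (Fintype.equivFin V).surjective
    · intro u v huv
      simp only [ne_eq, EmbeddingLike.apply_eq_iff_eq]
      exact huv.ne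
    · intro v
      rw [Set.ncard_image_of_injOn ((Fintype.equivFin V).injective.injOn)]
      exact min_le_left _ _
  refine le_csInf hne ?_
  rintro k ⟨c, hsurj, hproper, hcond⟩
  -- c is injective on S
  have hinj : Set.InjOn c S := by
    intro u₁ hu₁ u₂ hu₂ hcc
    by_contra hne'
    rcases h₂ u₁ hu₁ u₂ hu₂ hne' with hadj | ⟨u₃, hu₃, hu₁₃, hu₂₃⟩
    · exact hproper hadj hcc
    · have hfin : (G.neighborSet u₃).Finite := Set.toFinite _
      have hle : (c '' G.neighborSet u₃).ncard ≤ (G.neighborSet u₃).ncard :=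
        Set.ncard_image_le hfin
      have hmin : min (gDeg G u₃) r = gDeg G u₃ := min_eq_left (h₁ u₃ hu₃)
      have := hcond u₃
      rw [hmin] at this
      have heq : (c '' G.neighborSet u₃).ncard = (G.neighborSet u₃).ncard :=
        le_antisymm hle this
      have hinjN : Set.InjOn c (G.neighborSet u₃) :=
        Set.injOn_of_ncard_image_eq heq hfin
      exact hne' (hinjN hu₁₃ hu₂₃ hcc)
  calc S.ncard = (c '' S).ncard := (Set.ncard_image_of_injOn hinj).symm
    _ ≤ (Set.univ : Set (Fin k)).ncard := Set.ncard_le_ncard (Set.subset_univ _) Set.finite_univ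
    _ = k := by rw [Set.ncard_univ, Nat.card_eq_fintype_card, Fintype.card_fin]
end

section
/- Let G be a (finite simple) graph and c : V(G) → {1,...,k} a (not necessarily proper) coloring such that for a given r > 0, every vertex v has at least min{d(v), r} distinct colors among its neighbors (condition (C2)). If G satisfies condition (C3): for every edge uv of G there exists a vertex w with d(w) ≤ r and u, v ∈ N_G(w), then c is a proper coloring (satisfies (C1)), and hence c is a conditional (k,r)-coloring of G. -/
open SimpleGraph

/-- **Lemma 3.2.** Let `c : V(G) → {1, …, k}` be a (surjective, not necessarily
proper) coloring satisfying (C2) for a given `r > 0`. If `G` satisfies (C3): every edge `uv`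
has a vertex `w` with `d(w) ≤ r` and `u, v ∈ N(w)`, then `c` satisfies (C1) and hence `c` is
a conditional `(k,r)`-coloring of `G`. -/
theorem isCondColoring_of_C2_C3 {V : Type*} [Fintype V] (G : SimpleGraph V) (r k : ℕ)
    (hr : 0 < r) (c : V → Fin k) (hsurj : Function.Surjective c)
    (hC2 : ∀ v, min (gDeg G v) r ≤ (c '' G.neighborSet v).ncard)
    (hC3 : ∀ ⦃u v⦄, G.Adj u v →
      ∃ w, gDeg G w ≤ r ∧ u ∈ G.neighborSet w ∧ v ∈ G.neighborSet w) :
    (∀ ⦃u v⦄, G.Adj u v → c u ≠ c v) ∧ IsCondColoring G r c := by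
  have hC1 : ∀ ⦃u v⦄, G.Adj u v → c u ≠ c v := by
    intro u v huv
    obtain ⟨w, hw, hu, hv⟩ := hC3 huv
    have hmin : min (gDeg G w) r = gDeg G w := min_eq_left hw
    have h1 : gDeg G w ≤ (c '' G.neighborSet w).ncard := hmin ▸ hC2 w
    have h2 : (c '' G.neighborSet w).ncard ≤ gDeg G w :=
      Set.ncard_image_le (Set.toFinite _)
    have heq : (c '' G.neighborSet w).ncard = (G.neighborSet w).ncard :=
      le_antisymm h2 h1
    have hinj := Set.injOn_of_ncard_image_eq heq (Set.toFinite _)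
    intro hc
    exact huv.ne (hinj hu hv hc)
  exact ⟨hC1, hsurj, hC1, hC2⟩
end

section
/- For integers k ≥ 3 and n ≥ 2, let Wd(k,n) be the windmill graph. Then χ_r(Wd(k,n)) = k if 2 ≤ r ≤ k − 1, and χ_r(Wd(k,n)) = min{r, Δ} + 1 if r ≥ k, where Δ = n(k−1) is the maximum degree of Wd(k,n). -/
open SimpleGraph

/-- The windmill graph `Wd(k,n)`: `n` copies of `K_k` sharing one common center vertex
(`none` is the center, and `some (i, a)` is the `a`-th non-center vertex of the `i`-th copy). -/
def windmill (k n : ℕ) : SimpleGraph (Option (Fin n × Fin (k - 1))) where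
  Adj x y := x ≠ y ∧ (x = none ∨ y = none ∨ ∃ i a b, x = some (i, a) ∧ y = some (i, b))
  symm := by
    constructor
    rintro x y ⟨hne, h | h | ⟨i, a, b, h1, h2⟩⟩
    · exact ⟨hne.symm, Or.inr (Or.inl h)⟩
    · exact ⟨hne.symm, Or.inl h⟩
    · exact ⟨hne.symm, Or.inr (Or.inr ⟨i, b, a, h2, h1⟩)⟩
  loopless := by constructor; rintro x ⟨hne, -⟩; exact hne rfl

section Aux
variable {k n : ℕ}

lemma wm_ncard_compl_singleton {α : Type*} [Fintype α] (a : α) :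
    ({a}ᶜ : Set α).ncard = Fintype.card α - 1 := by
  have h := Set.ncard_add_ncard_compl ({a} : Set α) (Set.toFinite _) (Set.toFinite _)
  simp only [Set.ncard_singleton, Nat.card_eq_fintype_card] at h
  omega

lemma wm_mem_nbhd_none {x : Option (Fin n × Fin (k-1))} :
    x ∈ (windmill k n).neighborSet none ↔ x ≠ none := by
  constructor
  · rintro ⟨hne, -⟩ rfl; exact hne rfl
  · intro hx; exact ⟨fun h => hx h.symm, Or.inl rfl⟩

lemma wm_mem_nbhd_some {i : Fin n} {a : Fin (k-1)} {x : Option (Fin n × Fin (k-1))} :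
    x ∈ (windmill k n).neighborSet (some (i, a)) ↔
      x = none ∨ ∃ b, b ≠ a ∧ x = some (i, b) := by
  constructor
  · rintro ⟨hne, h | h | ⟨i', a', b, h1, h2⟩⟩
    · simp at h
    · exact Or.inl h
    · simp only [Option.some.injEq, Prod.mk.injEq] at h1
      obtain ⟨rfl, rfl⟩ := h1
      refine Or.inr ⟨b, ?_, h2⟩
      rintro rfl; exact hne h2.symm
  · rintro (rfl | ⟨b, hba, rfl⟩)
    · exact ⟨fun h => by simp at h, Or.inr (Or.inl rfl)⟩
    · refine ⟨?_, Or.inr (Or.inr ⟨i, a, b, rfl, rfl⟩)⟩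
      simp only [ne_eq, Option.some.injEq, Prod.mk.injEq, true_and]
      exact fun h => hba h.symm

lemma wm_nbhd_none_eq :
    (windmill k n).neighborSet none = ({none}ᶜ : Set (Option (Fin n × Fin (k-1)))) := by
  ext x; simpa using wm_mem_nbhd_none

lemma wm_gdeg_none : gDeg (windmill k n) none = n * (k - 1) := by
  rw [gDeg, wm_nbhd_none_eq, wm_ncard_compl_singleton]
  simp

lemma wm_gdeg_le (v : Option (Fin n × Fin (k-1))) :
    gDeg (windmill k n) v ≤ n * (k - 1) := by
  have hsub : (windmill k n).neighborSet v ⊆ {v}ᶜ := by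
    intro x hx
    simp only [Set.mem_compl_iff, Set.mem_singleton_iff]
    rintro rfl
    exact (windmill k n).irrefl hx
  have := Set.ncard_le_ncard hsub (Set.toFinite _)
  rw [wm_ncard_compl_singleton] at this
  simpa [gDeg] using this

lemma wm_c2_of_injOn {V : Type*} (G : SimpleGraph V) (r : ℕ) {k' : ℕ} (c : V → Fin k')
    (v : V) (h : Set.InjOn c (G.neighborSet v)) :
    min (gDeg G v) r ≤ (c '' G.neighborSet v).ncard := by
  rw [Set.ncard_image_of_injOn h]
  exact min_le_left _ _

lemma wm_modinj {m x a b : ℕ} (ha : a < m) (hb : b < m)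
    (h : (x + a) % m = (x + b) % m) : a = b := by
  have h2 : a ≡ b [MOD m] := Nat.ModEq.add_left_cancel' x h
  rwa [Nat.ModEq, Nat.mod_eq_of_lt ha, Nat.mod_eq_of_lt hb] at h2

end Aux

def wcol1 (k n : ℕ) (hk : 3 ≤ k) : Option (Fin n × Fin (k-1)) → Fin k := fun x =>
  match x with
  | none => ⟨0, by omega⟩
  | some (_, a) => ⟨a.val + 1, by have := a.isLt; omega⟩

section Part2
variable {k n : ℕ}

lemma wm_mem2 (hk : 3 ≤ k) (hn : 2 ≤ n) (r : ℕ) (hr : r ≤ k - 1) :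
    IsCondColoring (windmill k n) r (wcol1 k n hk) := by
  refine ⟨?_, ?_, ?_⟩
  · -- surjective
    intro y
    by_cases hy : y.val = 0
    · exact ⟨none, Fin.ext (by simpa [wcol1] using hy.symm)⟩
    · refine ⟨some (⟨0, by omega⟩, ⟨y.val - 1, by have := y.isLt; omega⟩), ?_⟩
      apply Fin.ext
      show (y.val - 1) + 1 = y.val
      omega
  · -- proper
    rintro u v ⟨hne, hstr⟩ hcc
    rcases u with _ | ⟨i, a⟩ <;> rcases v with _ | ⟨j, b⟩
    · exact hne rfl
    · simp [wcol1, Fin.ext_iff] at hcc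
    · simp [wcol1, Fin.ext_iff] at hcc
    · rcases hstr with h | h | ⟨i', a', b', h1, h2⟩
      · simp at h
      · simp at h
      · simp only [Option.some.injEq, Prod.mk.injEq] at h1 h2
        obtain ⟨rfl, rfl⟩ := h1
        obtain ⟨rfl, rfl⟩ := h2
        simp only [wcol1, Fin.ext_iff] at hcc
        refine hne ?_
        simp only [Option.some.injEq, Prod.mk.injEq, true_and]
        exact Fin.ext (by omega)
  · -- C2
    rintro (_ | ⟨i, a⟩)
    · -- center
      have himg : wcol1 k n hk '' (windmill k n).neighborSet none
          = ({(⟨0, by omega⟩ : Fin k)}ᶜ : Set (Fin k)) := by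
        ext y
        simp only [Set.mem_image, Set.mem_compl_iff, Set.mem_singleton_iff]
        constructor
        · rintro ⟨x, hx, rfl⟩
          rcases x with _ | ⟨j, b⟩
          · exact absurd rfl (wm_mem_nbhd_none.mp hx)
          · simp [wcol1, Fin.ext_iff]
        · intro hy
          have hy0 : y.val ≠ 0 := fun h => hy (Fin.ext h)
          refine ⟨some (⟨0, by omega⟩, ⟨y.val - 1, by have := y.isLt; omega⟩),
            wm_mem_nbhd_none.mpr (by simp), ?_⟩
          apply Fin.ext
          show (y.val - 1) + 1 = y.val
          omega
      rw [himg, wm_ncard_compl_singleton]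
      simp only [Fintype.card_fin]
      have : min (gDeg (windmill k n) none) r ≤ r := min_le_right _ _
      omega
    · -- leaf
      apply wm_c2_of_injOn
      intro x hx y hy hxy
      rw [wm_mem_nbhd_some] at hx hy
      rcases hx with rfl | ⟨b₁, hb₁, rfl⟩ <;> rcases hy with rfl | ⟨b₂, hb₂, rfl⟩
      · rfl
      · simp [wcol1, Fin.ext_iff] at hxy
      · simp [wcol1, Fin.ext_iff] at hxy
      · simp only [wcol1, Fin.ext_iff] at hxy
        have : b₁ = b₂ := Fin.ext (by omega)
        rw [this]

lemma wm_lb_clique (hk : 3 ≤ k) (hn : 2 ≤ n) (r k' : ℕ)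
    (c : Option (Fin n × Fin (k-1)) → Fin k') (h : IsCondColoring (windmill k n) r c) :
    k ≤ k' := by
  set g : Option (Fin (k-1)) → Fin k' :=
    fun o => c (o.map fun b => ((⟨0, by omega⟩ : Fin n), b)) with hg
  have hginj : Function.Injective g := by
    intro x y hxy
    by_contra hne
    have hmapne : x.map (fun b => ((⟨0, by omega⟩ : Fin n), b))
        ≠ y.map (fun b => ((⟨0, by omega⟩ : Fin n), b)) := by
      intro he
      exact hne (Option.map_injective (fun a b hab => (Prod.mk.injEq _ _ _ _ ▸ hab).2) he)
    refine h.2.1 (u := x.map _) (v := y.map _) ⟨hmapne, ?_⟩ hxy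
    rcases x with _ | b₁ <;> rcases y with _ | b₂
    · exact Or.inl rfl
    · exact Or.inl rfl
    · exact Or.inr (Or.inl rfl)
    · exact Or.inr (Or.inr ⟨⟨0, by omega⟩, b₁, b₂, rfl, rfl⟩)
  have := Fintype.card_le_of_injective g hginj
  simp only [Fintype.card_option, Fintype.card_fin] at this
  omega

end Part2

def wcol2 (k n m : ℕ) (hm : 0 < m) : Option (Fin n × Fin (k-1)) → Fin (m+1) := fun x =>
  match x with
  | none => ⟨0, Nat.succ_pos m⟩
  | some (i, a) => ⟨(i.val * (k-1) + a.val) % m + 1,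
      by have := Nat.mod_lt (i.val * (k-1) + a.val) hm; omega⟩

section Part3
variable {k n : ℕ}

lemma wm_k_le (hk : 3 ≤ k) (hn : 2 ≤ n) : k ≤ n * (k - 1) := by
  have := Nat.mul_le_mul_right (k - 1) hn
  omega

/-- surjectivity onto nonzero colors -/
lemma wm_wcol2_hit (hk : 3 ≤ k) {m : ℕ} (hm : 0 < m) (hmle : m ≤ n * (k-1))
    {t : ℕ} (ht : t < m) :
    ∃ p : Fin n × Fin (k-1), wcol2 k n m hm (some p) = ⟨t + 1, by omega⟩ := by
  have hk1 : 0 < k - 1 := by omega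
  refine ⟨(⟨t / (k-1), ?_⟩, ⟨t % (k-1), Nat.mod_lt _ hk1⟩), ?_⟩
  · rw [Nat.div_lt_iff_lt_mul hk1]
    calc t < m := ht
    _ ≤ n * (k-1) := hmle
    _ = (k-1) * n := Nat.mul_comm _ _
    _ = n * (k-1) := Nat.mul_comm _ _
  · apply Fin.ext
    show (t / (k-1) * (k-1) + t % (k-1)) % m + 1 = t + 1
    rw [Nat.mul_comm, Nat.div_add_mod, Nat.mod_eq_of_lt ht]

lemma wm_mem3 (hk : 3 ≤ k) (hn : 2 ≤ n) (r m : ℕ) (hkm : k ≤ m) (hm : 0 < m)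
    (hmle : m ≤ n * (k-1)) (hminr : min (n * (k-1)) r = m) :
    IsCondColoring (windmill k n) r (wcol2 k n m hm) := by
  refine ⟨?_, ?_, ?_⟩
  · -- surjective
    intro y
    by_cases hy : y.val = 0
    · exact ⟨none, Fin.ext (by simpa [wcol2] using hy.symm)⟩
    · have ht : y.val - 1 < m := by have := y.isLt; omega
      obtain ⟨p, hp⟩ := wm_wcol2_hit hk hm hmle ht
      refine ⟨some p, hp.trans (Fin.ext ?_)⟩
      show (y.val - 1) + 1 = y.val
      omega
  · -- proper
    rintro u v ⟨hne, hstr⟩ hcc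
    rcases u with _ | ⟨i, a⟩ <;> rcases v with _ | ⟨j, b⟩
    · exact hne rfl
    · simp [wcol2, Fin.ext_iff] at hcc
    · simp [wcol2, Fin.ext_iff] at hcc
    · rcases hstr with h | h | ⟨i', a', b', h1, h2⟩
      · simp at h
      · simp at h
      · simp only [Option.some.injEq, Prod.mk.injEq] at h1 h2
        obtain ⟨rfl, rfl⟩ := h1
        obtain ⟨rfl, rfl⟩ := h2
        simp only [wcol2, Fin.ext_iff] at hcc
        refine hne ?_
        simp only [Option.some.injEq, Prod.mk.injEq, true_and]
        have e1 : a.val < m := by have := a.isLt; omega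
        have e2 : b.val < m := by have := b.isLt; omega
        have e3 : (j.val * (k-1) + a.val) % m = (j.val * (k-1) + b.val) % m := by omega
        exact Fin.ext (wm_modinj e1 e2 e3)
  · -- C2
    rintro (_ | ⟨i, a⟩)
    · -- center
      have himg : wcol2 k n m hm '' (windmill k n).neighborSet none
          = ({(⟨0, Nat.succ_pos m⟩ : Fin (m+1))}ᶜ : Set (Fin (m+1))) := by
        ext y
        simp only [Set.mem_image, Set.mem_compl_iff, Set.mem_singleton_iff]
        constructor
        · rintro ⟨x, hx, rfl⟩
          rcases x with _ | ⟨j, b⟩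
          · exact absurd rfl (wm_mem_nbhd_none.mp hx)
          · simp [wcol2, Fin.ext_iff]
        · intro hy
          have hy0 : y.val ≠ 0 := fun h => hy (Fin.ext h)
          have ht : y.val - 1 < m := by have := y.isLt; omega
          obtain ⟨p, hp⟩ := wm_wcol2_hit hk hm hmle ht
          refine ⟨some p, wm_mem_nbhd_none.mpr (by simp), hp.trans (Fin.ext ?_)⟩
          show (y.val - 1) + 1 = y.val
          omega
      rw [himg, wm_ncard_compl_singleton]
      simp only [Fintype.card_fin]
      rw [wm_gdeg_none]
      omega
    · -- leaf
      apply wm_c2_of_injOn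
      intro x hx y hy hxy
      rw [wm_mem_nbhd_some] at hx hy
      rcases hx with rfl | ⟨b₁, hb₁, rfl⟩ <;> rcases hy with rfl | ⟨b₂, hb₂, rfl⟩
      · rfl
      · simp [wcol2, Fin.ext_iff] at hxy
      · simp [wcol2, Fin.ext_iff] at hxy
      · simp only [wcol2, Fin.ext_iff] at hxy
        have e1 : b₁.val < m := by have := b₁.isLt; omega
        have e2 : b₂.val < m := by have := b₂.isLt; omega
        have e3 : (i.val * (k-1) + b₁.val) % m = (i.val * (k-1) + b₂.val) % m := by omega
        rw [show b₁ = b₂ from Fin.ext (wm_modinj e1 e2 e3)]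

lemma wm_lb3 (hk : 3 ≤ k) (hn : 2 ≤ n) (r k' : ℕ) (hr : k ≤ r)
    (c : Option (Fin n × Fin (k-1)) → Fin k') (h : IsCondColoring (windmill k n) r c) :
    min r (n * (k-1)) + 1 ≤ k' := by
  have h2 := h.2.2 none
  rw [wm_gdeg_none] at h2
  have hsub : c '' (windmill k n).neighborSet none ⊆ ({c none}ᶜ : Set (Fin k')) := by
    rintro _ ⟨x, hx, rfl⟩
    simp only [Set.mem_compl_iff, Set.mem_singleton_iff]
    exact fun he => h.2.1 hx he.symm
  have hle := Set.ncard_le_ncard hsub (Set.toFinite _)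
  rw [wm_ncard_compl_singleton] at hle
  simp only [Fintype.card_fin] at hle
  have hk' : 0 < k' := (c none).pos
  omega

end Part3

/-- For `k ≥ 3`, `n ≥ 2`, the windmill graph `Wd(k,n)` has maximum degree
`Δ = n(k-1)`, and `χ_r(Wd(k,n)) = k` if `2 ≤ r ≤ k - 1`, while
`χ_r(Wd(k,n)) = min {r, Δ} + 1` if `r ≥ k`. -/
theorem condChrom_windmill (k n : ℕ) (hk : 3 ≤ k) (hn : 2 ≤ n) :
    gMaxDeg (windmill k n) = n * (k - 1) ∧
    (∀ r, 2 ≤ r → r ≤ k - 1 → condChrom (windmill k n) r = k) ∧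
    (∀ r, k ≤ r → condChrom (windmill k n) r = min r (n * (k - 1)) + 1) := by
  have hmax : gMaxDeg (windmill k n) = n * (k - 1) := by
    rw [gMaxDeg]
    apply le_antisymm
    · have hne : {d : ℕ | ∃ v, gDeg (windmill k n) v = d}.Nonempty := ⟨_, none, rfl⟩
      apply csSup_le hne
      rintro d ⟨v, rfl⟩
      exact wm_gdeg_le v
    · exact le_csSup ⟨n * (k - 1), by rintro d ⟨v, rfl⟩; exact wm_gdeg_le v⟩
        ⟨none, wm_gdeg_none⟩
  refine ⟨hmax, ?_, ?_⟩
  · intro r hr2 hrk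
    apply le_antisymm
    · exact Nat.sInf_le ⟨wcol1 k n hk, wm_mem2 hk hn r hrk⟩
    · refine le_csInf ⟨k, wcol1 k n hk, wm_mem2 hk hn r hrk⟩ ?_
      rintro j ⟨c, hc⟩
      exact wm_lb_clique hk hn r j c hc
  · intro r hr
    have hkm : k ≤ min r (n * (k - 1)) := le_min hr (wm_k_le hk hn)
    have hm : 0 < min r (n * (k - 1)) := by omega
    have hmem : ∃ c : Option (Fin n × Fin (k - 1)) → Fin (min r (n * (k - 1)) + 1),
        IsCondColoring (windmill k n) r c :=
      ⟨wcol2 k n _ hm, wm_mem3 hk hn r _ hkm hm (min_le_right _ _) (min_comm _ _)⟩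
    apply le_antisymm
    · exact Nat.sInf_le hmem
    · refine le_csInf ⟨_, hmem⟩ ?_
      rintro j ⟨c, hc⟩
      exact wm_lb3 hk hn r j hr c hc
end

section
/- For integers k ≥ 3 and n ≥ 2, let L(Wd(k,n)) be the line graph of the windmill graph Wd(k,n) and let Δ be the maximum degree of L(Wd(k,n)). Then χ_Δ(L(Wd(k,n))) = n(k−1) + C(k−1, 2), where C(k−1,2) is the binomial coefficient (k−1 choose 2). -/
open SimpleGraph

section WMAux

variable {k n : ℕ}

lemma choose2_succ (b : ℕ) : (b+1).choose 2 = b.choose 2 + b := by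
  rw [Nat.choose_succ_succ]
  simp [Nat.choose_one_right]
  omega

lemma pairIdx_lt {a b K : ℕ} (hab : a < b) (hbK : b < K) : b.choose 2 + a < K.choose 2 := by
  have h1 : b.choose 2 + a < (b+1).choose 2 := by rw [choose2_succ]; omega
  exact lt_of_lt_of_le h1 (Nat.choose_le_choose 2 hbK)

lemma pairIdx_inj {a b a' b' : ℕ} (h1 : a < b) (h2 : a' < b')
    (h : b.choose 2 + a = b'.choose 2 + a') : a = a' ∧ b = b' := by
  rcases lt_trichotomy b b' with hb | hb | hb
  · have := pairIdx_lt h1 hb; omega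
  · subst hb; omega
  · have := pairIdx_lt h2 hb; omega

lemma pairIdx_surj : ∀ (K p : ℕ), p < K.choose 2 → ∃ a b, a < b ∧ b < K ∧ b.choose 2 + a = p := by
  intro K
  induction K with
  | zero => intro p hp; simp at hp
  | succ K ih =>
    intro p hp
    rcases lt_or_ge p (K.choose 2) with h | h
    · obtain ⟨a, b, h1, h2, h3⟩ := ih p h
      exact ⟨a, b, h1, h2.trans (Nat.lt_succ_self K), h3⟩
    · refine ⟨p - K.choose 2, K, ?_, Nat.lt_succ_self K, by omega⟩
      rw [choose2_succ] at hp; omega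

lemma block_lt {K i j a : ℕ} (ha : a < K) (hij : i < j) : i*K + a < j*K := by
  calc i*K + a < i*K + K := by omega
  _ = (i+1)*K := by ring
  _ ≤ j*K := Nat.mul_le_mul_right K hij

lemma block_inj {K i j a b : ℕ} (ha : a < K) (hb : b < K) (h : i*K + a = j*K + b) :
    i = j ∧ a = b := by
  rcases lt_trichotomy i j with hij | hij | hij
  · have := block_lt ha hij; omega
  · subst hij; omega
  · have := block_lt hb hij; omega


abbrev VV (k n : ℕ) := Option (Fin n × Fin (k-1))

def fcol (k n : ℕ) : VV k n → VV k n → ℕ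
  | none, none => 0
  | none, some p => p.1.val * (k-1) + p.2.val
  | some p, none => p.1.val * (k-1) + p.2.val
  | some p, some q => n * (k-1) + (max p.2.val q.2.val).choose 2 + min p.2.val q.2.val

lemma fcol_symm (x y : VV k n) : fcol k n x y = fcol k n y x := by
  rcases x with _ | p <;> rcases y with _ | q <;> simp [fcol, max_comm, min_comm]

def colS (k n : ℕ) : Sym2 (VV k n) → ℕ := Sym2.lift ⟨fcol k n, fcol_symm⟩

lemma colS_spoke (i : Fin n) (a : Fin (k-1)) :
    colS k n s(none, some (i,a)) = i.val * (k-1) + a.val := rfl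

lemma colS_clique (i j : Fin n) (a b : Fin (k-1)) :
    colS k n s(some (i,a), some (j,b))
      = n*(k-1) + (max a.val b.val).choose 2 + min a.val b.val := rfl

lemma windmill_adj {x y : VV k n} : (windmill k n).Adj x y ↔
    x ≠ y ∧ (x = none ∨ y = none ∨ ∃ i a b, x = some (i, a) ∧ y = some (i, b)) := Iff.rfl

lemma spoke_mem (i : Fin n) (a : Fin (k-1)) : s(none, some (i,a)) ∈ (windmill k n).edgeSet := by
  rw [SimpleGraph.mem_edgeSet, windmill_adj]
  exact ⟨by simp, Or.inl rfl⟩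

lemma clique_mem {i : Fin n} {a b : Fin (k-1)} (h : a ≠ b) :
    s(some (i,a), some (i,b)) ∈ (windmill k n).edgeSet := by
  rw [SimpleGraph.mem_edgeSet, windmill_adj]
  exact ⟨by simp [h], Or.inr (Or.inr ⟨i,a,b,rfl,rfl⟩)⟩


lemma edge_cases {e : Sym2 (VV k n)} (he : e ∈ (windmill k n).edgeSet) :
    (∃ i a, e = s(none, some (i,a))) ∨
    (∃ i a b, a ≠ b ∧ e = s(some (i,a), some (i,b))) := by
  induction e using Sym2.ind with
  | _ x y =>
    rw [SimpleGraph.mem_edgeSet, windmill_adj] at he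
    obtain ⟨hne, h⟩ := he
    rcases h with h | h | ⟨i, a, b, rfl, rfl⟩
    · subst h
      rcases y with _ | ⟨i, a⟩
      · exact absurd rfl hne
      · exact Or.inl ⟨i, a, rfl⟩
    · subst h
      rcases x with _ | ⟨i, a⟩
      · exact absurd rfl hne
      · exact Or.inl ⟨i, a, Sym2.eq_swap⟩
    · refine Or.inr ⟨i, a, b, ?_, rfl⟩
      intro hab; exact hne (by rw [hab])

lemma copy_eq {e : Sym2 (VV k n)} (he : e ∈ (windmill k n).edgeSet)
    {i j : Fin n} {x y : Fin (k-1)} (hv : some (i,x) ∈ e) (hw : some (j,y) ∈ e) : i = j := by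
  rcases edge_cases he with ⟨l, a, rfl⟩ | ⟨l, a, b, hab, rfl⟩ <;>
    simp only [Sym2.mem_iff, Option.some.injEq, Prod.mk.injEq, reduceCtorEq, false_or] at hv hw <;>
    aesop

lemma colS_lt {e : Sym2 (VV k n)} (he : e ∈ (windmill k n).edgeSet) :
    colS k n e < n*(k-1) + (k-1).choose 2 := by
  rcases edge_cases he with ⟨i, a, rfl⟩ | ⟨i, a, b, hab, rfl⟩
  · rw [colS_spoke]
    have := block_lt a.isLt i.isLt
    omega
  · rw [colS_clique]
    have hab' : a.val ≠ b.val := fun h => hab (Fin.ext h)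
    have h1 : min a.val b.val < max a.val b.val := by omega
    have h2 : max a.val b.val < k-1 := by
      have := a.isLt; have := b.isLt; omega
    have := pairIdx_lt h1 h2
    omega

def Good (hn : 0 < n) (e : Sym2 (VV k n)) : Prop :=
  (∃ i a, e = s(none, some (i,a))) ∨
  (∃ a b, a ≠ b ∧ e = s(some (⟨0,hn⟩,a), some (⟨0,hn⟩,b)))

lemma exists_good (hn : 0 < n) (hK : 0 < k - 1) {t : ℕ} (ht : t < n*(k-1) + (k-1).choose 2) :
    ∃ e : (windmill k n).edgeSet, Good hn e.val ∧ colS k n e.val = t := by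
  rcases lt_or_ge t (n*(k-1)) with h | h
  · have hi : t / (k-1) < n := (Nat.div_lt_iff_lt_mul hK).mpr (by omega)
    refine ⟨⟨_, spoke_mem ⟨t/(k-1), hi⟩ ⟨t % (k-1), Nat.mod_lt _ hK⟩⟩,
      Or.inl ⟨_, _, rfl⟩, ?_⟩
    rw [colS_spoke]
    have := Nat.div_add_mod t (k-1)
    simp only [mul_comm]
    omega
  · obtain ⟨a, b, hab, hbK, hidx⟩ := pairIdx_surj (k-1) (t - n*(k-1)) (by omega)
    have haK : a < k - 1 := hab.trans hbK
    have hfne : (⟨a, haK⟩ : Fin (k-1)) ≠ ⟨b, hbK⟩ := by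
      intro hf
      have := congrArg Fin.val hf
      simp at this; omega
    refine ⟨⟨_, clique_mem (i := ⟨0,hn⟩) hfne⟩, Or.inr ⟨_, _, hfne, rfl⟩, ?_⟩
    rw [colS_clique]
    simp only [Nat.max_eq_right hab.le, Nat.min_eq_left hab.le]
    omega

lemma lineAdj {e f : (windmill k n).edgeSet} (hne : e ≠ f) {v : VV k n}
    (hv1 : v ∈ e.val) (hv2 : v ∈ f.val) : (windmill k n).lineGraph.Adj e f :=
  SimpleGraph.lineGraph_adj_iff_exists.mpr ⟨hne, v, hv1, hv2⟩


lemma good_ne {m : ℕ} {c : (windmill k n).edgeSet → Fin m} (hn : 0 < n)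
    (hC1 : ∀ ⦃u v : (windmill k n).edgeSet⦄, (windmill k n).lineGraph.Adj u v → c u ≠ c v)
    (hinj : ∀ t, Set.InjOn c ((windmill k n).lineGraph.neighborSet t))
    {e1 e2 : (windmill k n).edgeSet} (h1 : Good hn e1.val) (h2 : Good hn e2.val)
    (hne : e1 ≠ e2) : c e1 ≠ c e2 := by
  have step : (windmill k n).lineGraph.Adj e1 e2 ∨
      ∃ t, (windmill k n).lineGraph.Adj t e1 ∧ (windmill k n).lineGraph.Adj t e2 := by
    by_cases hsh : ∃ v, v ∈ e1.val ∧ v ∈ e2.val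
    · obtain ⟨v, hv1, hv2⟩ := hsh
      exact Or.inl (lineAdj hne hv1 hv2)
    · push_neg at hsh
      right
      rcases h1 with ⟨i, a, hv1⟩ | ⟨a, b, hab, hv1⟩ <;>
        rcases h2 with ⟨j, a', hv2⟩ | ⟨a', b', hab', hv2⟩
      · exact absurd (by rw [hv2]; simp) (hsh none (by rw [hv1]; simp))
      · -- e1 spoke, e2 clique copy 0
        refine ⟨⟨_, spoke_mem ⟨0,hn⟩ a'⟩, lineAdj ?_ (v := none) (by simp) (by rw [hv1]; simp),
          lineAdj ?_ (v := some (⟨0,hn⟩, a')) (by simp) (by rw [hv2]; simp)⟩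
        · intro h
          exact hsh (some (⟨0,hn⟩, a')) (by rw [← congrArg Subtype.val h]; simp)
            (by rw [hv2]; simp)
        · intro h
          have : (none : VV k n) ∈ e2.val := by rw [← congrArg Subtype.val h]; simp
          rw [hv2] at this; simp at this
      · -- e1 clique copy 0, e2 spoke
        refine ⟨⟨_, spoke_mem ⟨0,hn⟩ a⟩, lineAdj ?_ (v := some (⟨0,hn⟩, a)) (by simp)
          (by rw [hv1]; simp), lineAdj ?_ (v := none) (by simp) (by rw [hv2]; simp)⟩
        · intro h
          have : (none : VV k n) ∈ e1.val := by rw [← congrArg Subtype.val h]; simp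
          rw [hv1] at this; simp at this
        · intro h
          exact hsh (some (⟨0,hn⟩, a)) (by rw [hv1]; simp)
            (by rw [← congrArg Subtype.val h]; simp)
      · -- both cliques copy 0
        have haa' : a ≠ a' := by
          intro h
          exact hsh (some (⟨0,hn⟩, a)) (by rw [hv1]; simp) (by rw [hv2, h]; simp)
        refine ⟨⟨_, clique_mem (i := ⟨0,hn⟩) haa'⟩, lineAdj ?_ (v := some (⟨0,hn⟩, a)) (by simp)
          (by rw [hv1]; simp), lineAdj ?_ (v := some (⟨0,hn⟩, a')) (by simp)
          (by rw [hv2]; simp)⟩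
        · intro h
          exact hsh (some (⟨0,hn⟩, a')) (by rw [← congrArg Subtype.val h]; simp)
            (by rw [hv2]; simp)
        · intro h
          exact hsh (some (⟨0,hn⟩, a)) (by rw [hv1]; simp)
            (by rw [← congrArg Subtype.val h]; simp)
  rcases step with h | ⟨t, ht1, ht2⟩
  · exact hC1 h
  · intro hcc
    exact hne (hinj t ht1 ht2 hcc)

lemma injOn_of_cond {m r : ℕ} {c : (windmill k n).edgeSet → Fin m}
    (hc : IsCondColoring (windmill k n).lineGraph r c)
    (hr : ∀ t, gDeg (windmill k n).lineGraph t ≤ r)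
    (t : (windmill k n).edgeSet) :
    Set.InjOn c ((windmill k n).lineGraph.neighborSet t) := by
  have h2 := hc.2.2 t
  rw [min_eq_left (hr t)] at h2
  have hle : (c '' (windmill k n).lineGraph.neighborSet t).ncard ≤
      ((windmill k n).lineGraph.neighborSet t).ncard := Set.ncard_image_le (Set.toFinite _)
  exact Set.injOn_of_ncard_image_eq (le_antisymm hle h2) (Set.toFinite _)

def col (e : (windmill k n).edgeSet) : Fin (n*(k-1) + (k-1).choose 2) :=
  ⟨colS k n e.val, colS_lt e.prop⟩

lemma mem_clique_shape {v : VV k n} {i : Fin n} {a b : Fin (k-1)}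
    (h : v ∈ s(some (i,a), some (i,b))) : ∃ x, v = some (i, x) := by
  rw [Sym2.mem_iff] at h; rcases h with h|h <;> exact ⟨_, h⟩

lemma clique_color_eq {i j : Fin n} {a b a' b' : Fin (k-1)} (hab : a ≠ b) (hab' : a' ≠ b')
    (hij : i = j)
    (h : colS k n s(some (i,a), some (i,b)) = colS k n s(some (j,a'), some (j,b'))) :
    s(some (i,a), some (i,b)) = s(some (j,a'), some (j,b')) := by
  subst hij
  rw [colS_clique, colS_clique] at h
  have hab1 : a.val ≠ b.val := fun hh => hab (Fin.ext hh)
  have hab2 : a'.val ≠ b'.val := fun hh => hab' (Fin.ext hh)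
  have h1 : min a.val b.val < max a.val b.val := by omega
  have h2 : min a'.val b'.val < max a'.val b'.val := by omega
  have hmm := pairIdx_inj h1 h2 (by omega)
  have hv : (a.val = a'.val ∧ b.val = b'.val) ∨ (a.val = b'.val ∧ b.val = a'.val) := by omega
  rw [Sym2.eq_iff]
  rcases hv with ⟨h3, h4⟩ | ⟨h3, h4⟩
  · exact Or.inl ⟨by rw [Fin.ext h3], by rw [Fin.ext h4]⟩
  · exact Or.inr ⟨by rw [Fin.ext h3], by rw [Fin.ext h4]⟩

lemma col_proper : ∀ ⦃e f : (windmill k n).edgeSet⦄,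
    (windmill k n).lineGraph.Adj e f → col e ≠ col f := by
  intro e f hadj hcc
  obtain ⟨hne, v, hv1, hv2⟩ := SimpleGraph.lineGraph_adj_iff_exists.mp hadj
  have hcol : colS k n e.val = colS k n f.val := congrArg Fin.val hcc
  rcases edge_cases e.prop with ⟨i,a,he⟩ | ⟨i,a,b,hab,he⟩ <;>
    rcases edge_cases f.prop with ⟨j,a',hf⟩ | ⟨j,a',b',hab',hf⟩
  · rw [he, hf, colS_spoke, colS_spoke] at hcol
    obtain ⟨h1, h2⟩ := block_inj a.isLt a'.isLt hcol
    exact hne (Subtype.ext (by rw [he, hf, (Fin.ext h1 : i = j), (Fin.ext h2 : a = a')]))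
  · rw [he, hf, colS_spoke, colS_clique] at hcol
    have := block_lt a.isLt i.isLt
    omega
  · rw [he, hf, colS_clique, colS_spoke] at hcol
    have := block_lt a'.isLt j.isLt
    omega
  · rw [he] at hv1; rw [hf] at hv2
    obtain ⟨x, rfl⟩ := mem_clique_shape hv1
    obtain ⟨y, hy⟩ := mem_clique_shape hv2
    have hij : i = j := by
      injection hy with hy'
      exact congrArg Prod.fst hy'
    rw [he, hf] at hcol
    exact hne (Subtype.ext (by rw [he, hf]; exact clique_color_eq hab hab' hij hcol))

lemma col_injOn_nb (e : (windmill k n).edgeSet) :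
    Set.InjOn col ((windmill k n).lineGraph.neighborSet e) := by
  intro f hf g hg hcc
  have hcol : colS k n f.val = colS k n g.val := congrArg Fin.val hcc
  obtain ⟨hnef, v, hv1, hv2⟩ := SimpleGraph.lineGraph_adj_iff_exists.mp
    ((SimpleGraph.mem_neighborSet _ _ _).mp hf)
  obtain ⟨hneg, w, hw1, hw2⟩ := SimpleGraph.lineGraph_adj_iff_exists.mp
    ((SimpleGraph.mem_neighborSet _ _ _).mp hg)
  rcases edge_cases f.prop with ⟨i,a,hfe⟩ | ⟨i,a,b,hab,hfe⟩ <;>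
    rcases edge_cases g.prop with ⟨j,a',hge⟩ | ⟨j,a',b',hab',hge⟩
  · rw [hfe, hge, colS_spoke, colS_spoke] at hcol
    obtain ⟨h1, h2⟩ := block_inj a.isLt a'.isLt hcol
    exact Subtype.ext (by rw [hfe, hge, (Fin.ext h1 : i = j), (Fin.ext h2 : a = a')])
  · rw [hfe, hge, colS_spoke, colS_clique] at hcol
    have := block_lt a.isLt i.isLt
    omega
  · rw [hfe, hge, colS_clique, colS_spoke] at hcol
    have := block_lt a'.isLt j.isLt
    omega
  · rw [hfe] at hv2; rw [hge] at hw2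
    obtain ⟨x, hx⟩ := mem_clique_shape hv2
    obtain ⟨y, hy⟩ := mem_clique_shape hw2
    rw [hx] at hv1; rw [hy] at hw1
    have hij : i = j := copy_eq e.prop hv1 hw1
    rw [hfe, hge] at hcol
    exact Subtype.ext (by rw [hfe, hge]; exact clique_color_eq hab hab' hij hcol)

lemma col_surj (hn : 0 < n) (hK : 0 < k-1) :
    Function.Surjective (col (k := k) (n := n)) := by
  intro y
  obtain ⟨e, -, hc⟩ := exists_good hn hK (t := y.val) y.isLt
  exact ⟨e, Fin.ext hc⟩

lemma upper (hn : 0 < n) (hK : 0 < k-1) (r : ℕ) :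
    ∃ c : (windmill k n).edgeSet → Fin (n*(k-1)+(k-1).choose 2),
      IsCondColoring (windmill k n).lineGraph r c := by
  refine ⟨col, col_surj hn hK, col_proper, fun e => ?_⟩
  rw [Set.ncard_image_of_injOn (col_injOn_nb e)]
  exact min_le_left _ _

lemma lower (hn : 0 < n) (hK : 0 < k-1) {m : ℕ}
    (h : ∃ c : (windmill k n).edgeSet → Fin m,
      IsCondColoring (windmill k n).lineGraph (gMaxDeg (windmill k n).lineGraph) c) :
    n*(k-1) + (k-1).choose 2 ≤ m := by
  obtain ⟨c, hc⟩ := h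
  have hbdd : ∀ t, gDeg (windmill k n).lineGraph t ≤ gMaxDeg (windmill k n).lineGraph := by
    intro t
    apply le_csSup
    · have hh : {d : ℕ | ∃ v, gDeg (windmill k n).lineGraph v = d}
          = Set.range (gDeg (windmill k n).lineGraph) := rfl
      rw [hh]
      exact (Set.finite_range _).bddAbove
    · exact ⟨t, rfl⟩
  have hinj := injOn_of_cond hc hbdd
  classical
  have key : Function.Injective (fun t : Fin (n*(k-1)+(k-1).choose 2) =>
      c (Classical.choose (exists_good hn hK t.isLt))) := by
    intro t1 t2 h12
    by_contra hne
    have s1 := Classical.choose_spec (exists_good hn hK t1.isLt)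
    have s2 := Classical.choose_spec (exists_good hn hK t2.isLt)
    have hee : Classical.choose (exists_good hn hK t1.isLt)
        ≠ Classical.choose (exists_good hn hK t2.isLt) := by
      intro hq
      apply hne; apply Fin.ext
      rw [← s1.2, ← s2.2, hq]
    exact good_ne hn hc.2.1 hinj s1.1 s2.1 hee h12
  simpa using Fintype.card_le_of_injective _ key


end WMAux

/-- For `k ≥ 3`, `n ≥ 2`, the line graph of the windmill graph satisfies
`χ_Δ(L(Wd(k,n))) = n(k-1) + C(k-1, 2)`, where `Δ` is the maximum degree of `L(Wd(k,n))`. -/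
theorem condChrom_lineGraph_windmill (k n : ℕ) (hk : 3 ≤ k) (hn : 2 ≤ n) :
    condChrom (windmill k n).lineGraph (gMaxDeg (windmill k n).lineGraph)
      = n * (k - 1) + Nat.choose (k - 1) 2 := by
  have hn0 : 0 < n := by omega
  have hK : 0 < k - 1 := by omega
  have hup := upper hn0 hK (gMaxDeg (windmill k n).lineGraph)
  apply le_antisymm
  · exact Nat.sInf_le hup
  · exact le_csInf ⟨_, hup⟩ fun m hm => lower hn0 hK hm
end

section
/- For n ≥ 2, let L(F_n) be the line graph of the friendship graph F_n, and let Δ be the maximum degree of L(F_n). Then χ_r(L(F_n)) = 2n for every r with 0 < r < Δ, and χ_Δ(L(F_n)) = 2n + 1. -/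
open SimpleGraph

namespace FriendAux

open SimpleGraph

variable {n : ℕ}

lemma adj_none_some (p : Fin n × Fin 2) : (windmill 3 n).Adj none (some p) :=
  ⟨by simp, Or.inl rfl⟩

lemma adj_rim' (i : Fin n) : (windmill 3 n).Adj (some (i,0)) (some (i,1)) :=
  ⟨by simp, Or.inr (Or.inr ⟨i, 0, 1, rfl, rfl⟩)⟩

def spokeE (p : Fin n × Fin 2) : (windmill 3 n).edgeSet :=
  ⟨s(none, some p), (windmill 3 n).mem_edgeSet.mpr (adj_none_some p)⟩

def rimE (i : Fin n) : (windmill 3 n).edgeSet :=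
  ⟨s(some (i,0), some (i,1)), (windmill 3 n).mem_edgeSet.mpr (adj_rim' i)⟩

lemma spokeE_injective : Function.Injective (spokeE (n := n)) := by
  intro p q h
  have h2 : s((none : Option (Fin n × Fin 2)), some p) = s(none, some q) :=
    congrArg Subtype.val h
  rw [Sym2.congr_right] at h2
  exact Option.some_injective _ h2

lemma rimE_injective : Function.Injective (rimE (n := n)) := by
  intro i j h
  have h2 := congrArg Subtype.val h
  simp only [rimE, Sym2.eq, Sym2.rel_iff', Prod.mk.injEq, Option.some.injEq,
    Prod.swap_prod_mk] at h2
  rcases h2 with ⟨⟨h1, -⟩, -⟩ | ⟨⟨-, h1⟩, -⟩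
  · exact h1
  · exact absurd h1 (by decide)

lemma spokeE_ne_rimE (p : Fin n × Fin 2) (i : Fin n) : spokeE p ≠ rimE i := by
  intro h
  have h2 := congrArg Subtype.val h
  simp [spokeE, rimE, Sym2.eq, Sym2.rel_iff', Prod.mk.injEq] at h2

lemma classify (e : (windmill 3 n).edgeSet) :
    (∃ p, e = spokeE p) ∨ (∃ i, e = rimE i) := by
  obtain ⟨e, he⟩ := e
  induction e using Sym2.ind with
  | _ x y =>
    rw [SimpleGraph.mem_edgeSet] at he
    obtain ⟨hne, h⟩ := he
    match x, y with
    | none, none => exact absurd rfl hne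
    | none, some p => exact Or.inl ⟨p, rfl⟩
    | some p, none => exact Or.inl ⟨p, Subtype.ext (Sym2.eq_swap)⟩
    | some (i, a), some (j, b) =>
      rcases h with h | h | ⟨i', a', b', h1, h2⟩
      · exact absurd h (by simp)
      · exact absurd h (by simp)
      · obtain ⟨hii, haa⟩ : i = i' ∧ a = a' := by simpa [Prod.ext_iff] using h1
        obtain ⟨hjj, hbb⟩ : j = i' ∧ b = b' := by simpa [Prod.ext_iff] using h2
        have hij : i = j := hii.trans hjj.symm
        subst hij; subst haa; subst hbb
        right
        refine ⟨i, ?_⟩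
        have hab : a ≠ b := fun hh => hne (by rw [hh])
        fin_cases a <;> fin_cases b <;>
          first
            | exact absurd rfl hab
            | exact Subtype.ext rfl
            | exact Subtype.ext Sym2.eq_swap
lemma adj_spoke_spoke {p q : Fin n × Fin 2} (h : p ≠ q) :
    (windmill 3 n).lineGraph.Adj (spokeE p) (spokeE q) := by
  rw [SimpleGraph.lineGraph_adj_iff_exists]
  refine ⟨fun hh => h (spokeE_injective hh), ⟨none, ?_, ?_⟩⟩ <;> simp [spokeE]

lemma adj_spoke_rim {i : Fin n} {a : Fin 2} {j : Fin n} :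
    (windmill 3 n).lineGraph.Adj (spokeE (i, a)) (rimE j) ↔ i = j := by
  rw [SimpleGraph.lineGraph_adj_iff_exists]
  constructor
  · rintro ⟨-, v, hv1, hv2⟩
    simp only [spokeE, rimE, Sym2.mem_iff] at hv1 hv2
    rcases hv1 with rfl | rfl
    · rcases hv2 with h | h <;> exact absurd h (by simp)
    · rcases hv2 with h | h <;>
      · simp only [Option.some.injEq, Prod.mk.injEq] at h
        exact h.1
  · rintro rfl
    refine ⟨spokeE_ne_rimE _ _, some (i, a), by simp [spokeE], ?_⟩
    fin_cases a <;> simp [rimE]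

lemma not_adj_rim_rim {i j : Fin n} : ¬ (windmill 3 n).lineGraph.Adj (rimE i) (rimE j) := by
  rw [SimpleGraph.lineGraph_adj_iff_exists]
  rintro ⟨hne, v, hv1, hv2⟩
  simp only [rimE, Sym2.mem_iff] at hv1 hv2
  have hij : i = j := by
    rcases hv1 with rfl | rfl <;> rcases hv2 with h | h <;>
      · simp only [Option.some.injEq, Prod.mk.injEq] at h
        exact h.1
  exact hne (by rw [hij])

lemma neighborSet_spoke (p : Fin n × Fin 2) :
    (windmill 3 n).lineGraph.neighborSet (spokeE p) =
      spokeE '' {q | q ≠ p} ∪ {rimE p.1} := by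
  ext e
  simp only [SimpleGraph.mem_neighborSet, Set.mem_union, Set.mem_image, Set.mem_setOf_eq,
    Set.mem_singleton_iff]
  constructor
  · intro hadj
    rcases classify e with ⟨q, rfl⟩ | ⟨j, rfl⟩
    · exact Or.inl ⟨q, fun hq => hadj.ne (by rw [hq]), rfl⟩
    · right
      obtain ⟨i, a⟩ := p
      have := adj_spoke_rim.mp hadj
      rw [this]
  · rintro (⟨q, hq, rfl⟩ | rfl)
    · exact adj_spoke_spoke hq.symm
    · obtain ⟨i, a⟩ := p
      exact (adj_spoke_rim.mpr rfl)

lemma neighborSet_rim (i : Fin n) :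
    (windmill 3 n).lineGraph.neighborSet (rimE i) = {spokeE (i, 0), spokeE (i, 1)} := by
  ext e
  simp only [SimpleGraph.mem_neighborSet, Set.mem_insert_iff, Set.mem_singleton_iff]
  constructor
  · intro hadj
    rcases classify e with ⟨⟨j, a⟩, rfl⟩ | ⟨j, rfl⟩
    · have hji : j = i := adj_spoke_rim.mp hadj.symm
      subst hji
      fin_cases a
      · exact Or.inl rfl
      · exact Or.inr rfl
    · exact absurd hadj not_adj_rim_rim
  · rintro (rfl | rfl) <;> exact (adj_spoke_rim.mpr rfl).symm
lemma ncard_ne (p : Fin n × Fin 2) : ({q | q ≠ p} : Set (Fin n × Fin 2)).ncard = 2 * n - 1 := by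
  have h1 : ({q | q ≠ p} : Set (Fin n × Fin 2)) = Set.univ \ {p} := by
    ext q; simp
  have h2 : Nat.card (Fin n × Fin 2) = 2 * n := by
    simp [Nat.card_eq_fintype_card]; ring
  rw [h1, Set.ncard_diff_singleton_of_mem (Set.mem_univ p), Set.ncard_univ, h2]

lemma deg_spoke (p : Fin n × Fin 2) (hn : 1 ≤ n) :
    gDeg (windmill 3 n).lineGraph (spokeE p) = 2 * n := by
  rw [gDeg, neighborSet_spoke]
  have hdisj : Disjoint (spokeE '' {q | q ≠ p}) ({rimE p.1} : Set _) := by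
    rw [Set.disjoint_singleton_right]
    rintro ⟨q, -, hq⟩
    exact spokeE_ne_rimE q p.1 hq
  rw [Set.ncard_union_eq hdisj (Set.toFinite _) (Set.toFinite _),
    Set.ncard_image_of_injective _ spokeE_injective, ncard_ne, Set.ncard_singleton]
  omega

lemma spokes_ne (i : Fin n) : spokeE (i, 0) ≠ spokeE (i, 1) := by
  intro h
  have := spokeE_injective h
  simp [Prod.ext_iff] at this

lemma deg_rim (i : Fin n) : gDeg (windmill 3 n).lineGraph (rimE i) = 2 := by
  rw [gDeg, neighborSet_rim, Set.ncard_pair (spokes_ne i)]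

lemma maxDeg_eq (hn : 1 ≤ n) : gMaxDeg (windmill 3 n).lineGraph = 2 * n := by
  have hmem : 2 * n ∈ {d | ∃ v, gDeg (windmill 3 n).lineGraph v = d} :=
    ⟨spokeE (⟨0, hn⟩, 0), deg_spoke _ hn⟩
  have hub : ∀ d ∈ {d | ∃ v, gDeg (windmill 3 n).lineGraph v = d}, d ≤ 2 * n := by
    rintro d ⟨v, rfl⟩
    rcases classify v with ⟨p, rfl⟩ | ⟨i, rfl⟩
    · rw [deg_spoke _ hn]
    · rw [deg_rim]; omega
  exact le_antisymm (csSup_le ⟨2 * n, hmem⟩ hub) (le_csSup ⟨2 * n, hub⟩ hmem)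
def enc (p : Fin n × Fin 2) : Fin (2 * n) :=
  ⟨2 * p.1.val + p.2.val, by have := p.1.isLt; have := p.2.isLt; omega⟩

lemma enc_injective : Function.Injective (enc (n := n)) := by
  rintro ⟨i, a⟩ ⟨j, b⟩ h
  have h' : 2 * i.val + a.val = 2 * j.val + b.val := congrArg Fin.val h
  have ha := a.isLt; have hb := b.isLt
  have hh : i.val = j.val ∧ a.val = b.val := by omega
  exact Prod.ext (Fin.ext hh.1) (Fin.ext hh.2)

lemma enc_surjective : Function.Surjective (enc (n := n)) := by
  have hcard : Fintype.card (Fin n × Fin 2) = Fintype.card (Fin (2 * n)) := by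
    simp; ring
  exact ((Fintype.bijective_iff_injective_and_card _).mpr ⟨enc_injective, hcard⟩).2

def rcol (i : Fin n) : Fin (2 * n) :=
  ⟨2 * ((i.val + 1) % n), by have h := Nat.mod_lt (i.val + 1) i.pos; omega⟩

lemma rcol_ne_enc (hn : 2 ≤ n) (i : Fin n) (a : Fin 2) : rcol i ≠ enc (i, a) := by
  intro h
  have h' : 2 * ((i.val + 1) % n) = 2 * i.val + a.val := congrArg Fin.val h
  have hi := i.isLt
  have ha := a.isLt
  rcases lt_or_ge (i.val + 1) n with hlt | hge
  · rw [Nat.mod_eq_of_lt hlt] at h'; omega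
  · have he : i.val + 1 = n := by omega
    rw [he, Nat.mod_self] at h'; omega

noncomputable def col1 (e : (windmill 3 n).edgeSet) : Fin (2 * n) :=
  if h : ∃ p, e = spokeE p then enc h.choose
  else rcol ((classify e).resolve_left h).choose

lemma col1_spoke (p : Fin n × Fin 2) : col1 (spokeE p) = enc p := by
  have h : ∃ q, spokeE p = spokeE (n := n) q := ⟨p, rfl⟩
  rw [col1, dif_pos h]
  exact congrArg enc (spokeE_injective h.choose_spec.symm)

lemma col1_rim (i : Fin n) : col1 (rimE i) = rcol i := by
  have hneg : ¬∃ p, rimE i = spokeE (n := n) p := by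
    rintro ⟨p, hp⟩
    exact spokeE_ne_rimE p i hp.symm
  rw [col1, dif_neg hneg]
  exact congrArg rcol (rimE_injective ((classify (rimE i)).resolve_left hneg).choose_spec.symm)

lemma col1_surjective : Function.Surjective (col1 (n := n)) := by
  intro y
  obtain ⟨p, hp⟩ := enc_surjective y
  exact ⟨spokeE p, by rw [col1_spoke, hp]⟩

lemma col1_proper (hn : 2 ≤ n) :
    ∀ ⦃u v⦄, (windmill 3 n).lineGraph.Adj u v → col1 u ≠ col1 v := by
  intro u v hadj
  rcases classify u with ⟨p, rfl⟩ | ⟨i, rfl⟩ <;> rcases classify v with ⟨q, rfl⟩ | ⟨j, rfl⟩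
  · rw [col1_spoke, col1_spoke]
    exact fun h => hadj.ne (congrArg spokeE (enc_injective h))
  · obtain ⟨i, a⟩ := p
    have hij : i = j := adj_spoke_rim.mp hadj
    subst hij
    rw [col1_spoke, col1_rim]
    exact (rcol_ne_enc hn i a).symm
  · obtain ⟨j, a⟩ := q
    have hij : j = i := adj_spoke_rim.mp hadj.symm
    subst hij
    rw [col1_spoke, col1_rim]
    exact rcol_ne_enc hn j a
  · exact absurd hadj not_adj_rim_rim

lemma is_cond_col1 (hn : 2 ≤ n) {r : ℕ} (hr : r ≤ 2 * n - 1) :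
    IsCondColoring (windmill 3 n).lineGraph r (col1 (n := n)) := by
  refine ⟨col1_surjective, col1_proper hn, ?_⟩
  intro v
  rcases classify v with ⟨p, rfl⟩ | ⟨i, rfl⟩
  · rw [deg_spoke p (by omega), neighborSet_spoke]
    have hsub : enc '' {q | q ≠ p} ⊆ col1 '' (spokeE '' {q | q ≠ p} ∪ {rimE p.1}) := by
      rintro x ⟨q, hq, rfl⟩
      exact ⟨spokeE q, Or.inl ⟨q, hq, rfl⟩, col1_spoke q⟩
    have h1 : (enc '' {q | q ≠ p}).ncard = 2 * n - 1 := by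
      rw [Set.ncard_image_of_injective _ enc_injective, ncard_ne]
    have h2 := Set.ncard_le_ncard hsub (Set.toFinite _)
    rw [h1] at h2
    omega
  · rw [deg_rim, neighborSet_rim]
    have himg : col1 '' {spokeE (i, 0), spokeE (i, 1)} =
        {enc (i, 0), enc (i, 1)} := by
      rw [Set.image_pair, col1_spoke, col1_spoke]
    rw [himg, Set.ncard_pair (fun h => spokes_ne i (congrArg spokeE (enc_injective h)))]
    omega
noncomputable def col2 (e : (windmill 3 n).edgeSet) : Fin (2 * n + 1) :=
  if h : ∃ p, e = spokeE p then ⟨(enc h.choose).val, by have := (enc h.choose).isLt; omega⟩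
  else ⟨2 * n, by omega⟩

lemma col2_spoke (p : Fin n × Fin 2) :
    col2 (spokeE p) = ⟨(enc p).val, by have := (enc p).isLt; omega⟩ := by
  have h : ∃ q, spokeE p = spokeE (n := n) q := ⟨p, rfl⟩
  rw [col2, dif_pos h]
  have : h.choose = p := spokeE_injective h.choose_spec.symm
  simp [this]

lemma col2_rim (i : Fin n) : col2 (rimE i) = ⟨2 * n, by omega⟩ := by
  have hneg : ¬∃ p, rimE i = spokeE (n := n) p := by
    rintro ⟨p, hp⟩
    exact spokeE_ne_rimE p i hp.symm
  rw [col2, dif_neg hneg]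

lemma col2_spoke_val (p : Fin n × Fin 2) : (col2 (spokeE p)).val = (enc p).val := by
  rw [col2_spoke]

lemma col2_spoke_injective : Function.Injective (fun p => col2 (spokeE (n := n) p)) := by
  intro p q h
  apply enc_injective
  apply Fin.ext
  have := congrArg Fin.val h
  rwa [col2_spoke_val, col2_spoke_val] at this

lemma col2_surjective (hn : 1 ≤ n) : Function.Surjective (col2 (n := n)) := by
  intro y
  rcases lt_or_ge y.val (2 * n) with hy | hy
  · obtain ⟨p, hp⟩ := enc_surjective ⟨y.val, hy⟩
    refine ⟨spokeE p, ?_⟩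
    apply Fin.ext
    rw [col2_spoke_val, hp]
  · refine ⟨rimE ⟨0, hn⟩, ?_⟩
    rw [col2_rim]
    apply Fin.ext
    have := y.isLt
    simp only []
    omega

lemma col2_proper :
    ∀ ⦃u v⦄, (windmill 3 n).lineGraph.Adj u v → col2 u ≠ col2 v := by
  intro u v hadj
  rcases classify u with ⟨p, rfl⟩ | ⟨i, rfl⟩ <;> rcases classify v with ⟨q, rfl⟩ | ⟨j, rfl⟩
  · exact fun h => hadj.ne (congrArg spokeE (col2_spoke_injective h))
  · intro h
    have h1 : (enc p).val = 2 * n := by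
      have h2 := congrArg Fin.val h
      rw [col2_spoke_val, col2_rim] at h2
      exact h2
    have := (enc p).isLt
    omega
  · intro h
    have h1 : (enc q).val = 2 * n := by
      have h2 := congrArg Fin.val h
      rw [col2_spoke_val, col2_rim] at h2
      exact h2.symm
    have := (enc q).isLt
    omega
  · exact absurd hadj not_adj_rim_rim

lemma is_cond_col2 (hn : 2 ≤ n) :
    IsCondColoring (windmill 3 n).lineGraph (2 * n) (col2 (n := n)) := by
  refine ⟨col2_surjective (by omega), col2_proper, ?_⟩
  intro v
  rcases classify v with ⟨p, rfl⟩ | ⟨i, rfl⟩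
  · rw [deg_spoke p (by omega), neighborSet_spoke, min_self]
    set T : Set (Fin (2 * n + 1)) :=
      (fun q => col2 (spokeE q)) '' {q | q ≠ p} ∪ {⟨2 * n, by omega⟩} with hT
    have hsub : T ⊆ col2 '' (spokeE '' {q | q ≠ p} ∪ {rimE p.1}) := by
      rintro x (⟨q, hq, rfl⟩ | rfl)
      · exact ⟨spokeE q, Or.inl ⟨q, hq, rfl⟩, rfl⟩
      · exact ⟨rimE p.1, Or.inr rfl, col2_rim p.1⟩
    have hdisj : Disjoint ((fun q => col2 (spokeE (n := n) q)) '' {q | q ≠ p})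
        ({(⟨2 * n, by omega⟩ : Fin (2 * n + 1))} : Set _) := by
      rw [Set.disjoint_singleton_right]
      rintro ⟨q, -, hq⟩
      have h1 : (enc q).val = 2 * n := by
        have h2 := congrArg Fin.val hq
        rw [col2_spoke_val] at h2
        exact h2
      have := (enc q).isLt
      omega
    have hcard : T.ncard = 2 * n := by
      rw [hT, Set.ncard_union_eq hdisj (Set.toFinite _) (Set.toFinite _),
        Set.ncard_image_of_injective _ col2_spoke_injective, ncard_ne, Set.ncard_singleton]
      omega
    have h2 := Set.ncard_le_ncard hsub (Set.toFinite _)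
    omega
  · rw [deg_rim, neighborSet_rim]
    have himg : col2 '' {spokeE (i, 0), spokeE (i, 1)} =
        {col2 (spokeE (i, 0)), col2 (spokeE (i, 1))} := Set.image_pair _ _ _
    rw [himg, Set.ncard_pair (fun h => spokes_ne i (congrArg spokeE (col2_spoke_injective h)))]
    omega

lemma lb_clique {k r : ℕ} (c : (windmill 3 n).edgeSet → Fin k)
    (hc : IsCondColoring (windmill 3 n).lineGraph r c) : 2 * n ≤ k := by
  have hinj : Function.Injective (fun p => c (spokeE (n := n) p)) := by
    intro p q h
    by_contra hne
    exact hc.2.1 (adj_spoke_spoke hne) h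
  have h := Fintype.card_le_of_injective _ hinj
  simp only [Fintype.card_prod, Fintype.card_fin] at h
  omega

lemma lb_delta (hn : 1 ≤ n) {k : ℕ} (c : (windmill 3 n).edgeSet → Fin k)
    (hc : IsCondColoring (windmill 3 n).lineGraph (2 * n) c) : 2 * n + 1 ≤ k := by
  set v := spokeE (n := n) (⟨0, hn⟩, 0) with hv
  have h2 := hc.2.2 v
  rw [deg_spoke _ hn, min_self] at h2
  have hsub : c '' (windmill 3 n).lineGraph.neighborSet v ⊆ Set.univ \ {c v} := by
    rintro x ⟨u, hu, rfl⟩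
    exact ⟨Set.mem_univ _, fun hx => hc.2.1 hu (Set.mem_singleton_iff.mp hx).symm⟩
  have hle := Set.ncard_le_ncard hsub (Set.toFinite _)
  have hcard : (Set.univ \ {c v} : Set (Fin k)).ncard = k - 1 := by
    rw [Set.ncard_diff_singleton_of_mem (Set.mem_univ _), Set.ncard_univ]
    simp
  have hk : 1 ≤ k := (c v).pos
  omega
end FriendAux

/-- For `n ≥ 2`, the line graph of the friendship graph `F_n = Wd(3,n)`, with
maximum degree `Δ`, satisfies `χ_r(L(F_n)) = 2n` for all `0 < r < Δ`, and
`χ_Δ(L(F_n)) = 2n + 1`. -/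
theorem condChrom_lineGraph_friendship (n : ℕ) (hn : 2 ≤ n) :
    (∀ r, 0 < r → r < gMaxDeg (windmill 3 n).lineGraph →
      condChrom (windmill 3 n).lineGraph r = 2 * n) ∧
    condChrom (windmill 3 n).lineGraph (gMaxDeg (windmill 3 n).lineGraph) = 2 * n + 1 := by
  have hn1 : 1 ≤ n := by omega
  have hmax : gMaxDeg (windmill 3 n).lineGraph = 2 * n := FriendAux.maxDeg_eq hn1
  constructor
  · intro r hr0 hrd
    rw [hmax] at hrd
    have hmem : 2 * n ∈ {k : ℕ | ∃ c : (windmill 3 n).edgeSet → Fin k,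
        IsCondColoring (windmill 3 n).lineGraph r c} :=
      ⟨FriendAux.col1, FriendAux.is_cond_col1 hn (by omega)⟩
    refine le_antisymm (Nat.sInf_le hmem) (le_csInf ⟨2 * n, hmem⟩ ?_)
    rintro k ⟨c, hc⟩
    exact FriendAux.lb_clique c hc
  · rw [hmax]
    have hmem : 2 * n + 1 ∈ {k : ℕ | ∃ c : (windmill 3 n).edgeSet → Fin k,
        IsCondColoring (windmill 3 n).lineGraph (2 * n) c} :=
      ⟨FriendAux.col2, FriendAux.is_cond_col2 hn⟩
    refine le_antisymm (Nat.sInf_le hmem) (le_csInf ⟨2 * n + 1, hmem⟩ ?_)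
    rintro k ⟨c, hc⟩
    exact FriendAux.lb_delta hn1 c hc
end

section
/- Let K(n₁,...,n_k) be the complete k-partite graph with part sizes n₁,...,n_k (each n_i ≥ 1, k ≥ 2), let M(K(n₁,...,n_k)) be its middle graph, and let Δ be the maximum degree of M(K(n₁,...,n_k)). Then χ_Δ(M(K(n₁,...,n_k))) = k + l, where n = n₁ + ··· + n_k and l = (1/2)·Σ_{i=1}^k n_i(n − n_i) is the number of edges of K(n₁,...,n_k). -/
open SimpleGraph

/-- The middle graph of `G`: vertices are `V(G) ⊕ E(G)`; two edges are adjacent iff they share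
an endpoint, and a vertex is adjacent to an edge iff it is incident with it. -/
def middleG {V : Type*} (G : SimpleGraph V) : SimpleGraph (V ⊕ G.edgeSet) where
  Adj x y :=
    match x, y with
    | Sum.inl _, Sum.inl _ => False
    | Sum.inl v, Sum.inr e => v ∈ (e : Sym2 V)
    | Sum.inr e, Sum.inl v => v ∈ (e : Sym2 V)
    | Sum.inr e, Sum.inr f => e ≠ f ∧ ∃ v, v ∈ (e : Sym2 V) ∧ v ∈ (f : Sym2 V)
  symm := by
    constructor
    rintro (v | e) (w | f) h
    · exact h.elim
    · exact h
    · exact h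
    · exact ⟨h.1.symm, h.2.imp fun v hv => ⟨hv.2, hv.1⟩⟩
  loopless := by
    constructor
    rintro (v | e) h
    · exact h
    · exact h.1 rfl

section Generic
variable {V : Type*} [Finite V] {G : SimpleGraph V}

lemma aux_gDeg_le_gMaxDeg (v : V) : gDeg G v ≤ gMaxDeg G :=
  le_csSup (Set.finite_range (gDeg G)).bddAbove ⟨v, rfl⟩

lemma aux_injOn_of_cond {m : ℕ} {c : V → Fin m} (hc : IsCondColoring G (gMaxDeg G) c) (x : V) :
    Set.InjOn c (G.neighborSet x) := by
  have h := hc.2.2 x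
  rw [min_eq_left (aux_gDeg_le_gMaxDeg x)] at h
  exact Set.injOn_of_ncard_image_eq
    (le_antisymm (Set.ncard_image_le (Set.toFinite _)) h) (Set.toFinite _)

end Generic

/-- abbreviation for the complete multipartite graph in question -/
private abbrev CMG (k : ℕ) (ni : Fin k → ℕ) : SimpleGraph (Σ i : Fin k, Fin (ni i)) :=
  completeMultipartiteGraph fun i : Fin k => Fin (ni i)

section Concrete
variable {k : ℕ} {ni : Fin k → ℕ}

lemma aux_card_edges (n l : ℕ) (hn : n = ∑ i, ni i)
    (hl : 2 * l = ∑ i, ni i * (n - ni i)) :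
    Fintype.card (CMG k ni).edgeSet = l := by
  classical
  have hunivcard : Fintype.card (Σ i : Fin k, Fin (ni i)) = n := by
    simp [Fintype.card_sigma, hn]
  have hpart : ∀ i : Fin k,
      (Finset.univ.filter fun w : Σ j : Fin k, Fin (ni j) => w.1 = i).card = ni i := by
    intro i
    have : (Finset.univ.filter fun w : Σ j : Fin k, Fin (ni j) => w.1 = i)
        = (Finset.univ : Finset (Fin (ni i))).map ⟨Sigma.mk i, sigma_mk_injective⟩ := by
      ext ⟨j, a⟩
      simp only [Finset.mem_filter, Finset.mem_univ, true_and, Finset.mem_map,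
        Function.Embedding.coeFn_mk]
      constructor
      · rintro rfl; exact ⟨a, rfl⟩
      · rintro ⟨b, hb⟩; cases hb; rfl
    simp [this]
  have hdeg : ∀ v : Σ i : Fin k, Fin (ni i), (CMG k ni).degree v = n - ni v.1 := by
    intro v
    rw [SimpleGraph.degree, SimpleGraph.neighborFinset_eq_filter]
    have hfe : Finset.univ.filter ((CMG k ni).Adj v)
        = Finset.univ.filter (fun w : Σ j : Fin k, Fin (ni j) => ¬ w.1 = v.1) := by
      apply Finset.filter_congr
      intro w _
      exact ⟨fun h h' => h h'.symm, fun h h' => h h'.symm⟩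
    rw [hfe]
    have h2 := Finset.card_filter_add_card_filter_not
      (s := (Finset.univ : Finset (Σ j : Fin k, Fin (ni j))))
      (p := fun w => w.1 = v.1)
    have h3 := hpart v.1
    have h4 : (Finset.univ : Finset (Σ j : Fin k, Fin (ni j))).card = n := by
      simpa [Finset.card_univ] using hunivcard
    have h5 : ni v.1 ≤ n := by
      rw [hn]
      exact Finset.single_le_sum (f := ni) (fun i _ => Nat.zero_le _) (Finset.mem_univ v.1)
    omega
  have hsum : ∑ v, (CMG k ni).degree v = 2 * l := by
    rw [← Finset.univ_sigma_univ, Finset.sum_sigma]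
    have : ∀ i : Fin k, ∑ a : Fin (ni i), (CMG k ni).degree ⟨i, a⟩ = ni i * (n - ni i) := by
      intro i
      simp [hdeg, Finset.sum_const, Finset.card_univ]
    rw [Finset.sum_congr rfl fun i _ => this i, ← hl]
  have := (CMG k ni).sum_degrees_eq_twice_card_edges
  rw [hsum] at this
  have hcard : (CMG k ni).edgeFinset.card = l := by omega
  rw [← hcard, SimpleGraph.edgeFinset, Set.toFinset_card]

/-- a vertex adjacent (in the middle graph) to two others forces distinct colors -/
lemma aux_key {m : ℕ} {c : ((Σ i : Fin k, Fin (ni i)) ⊕ (CMG k ni).edgeSet) → Fin m}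
    (hinj : ∀ x, Set.InjOn c ((middleG (CMG k ni)).neighborSet x))
    (g : (CMG k ni).edgeSet) {a b : (Σ i : Fin k, Fin (ni i)) ⊕ (CMG k ni).edgeSet}
    (ha : (middleG (CMG k ni)).Adj (Sum.inr g) a)
    (hb : (middleG (CMG k ni)).Adj (Sum.inr g) b) (hne : a ≠ b) : c a ≠ c b :=
  fun h => hne (hinj (Sum.inr g) ha hb h)

lemma aux_LB3 {m : ℕ} {c : ((Σ i : Fin k, Fin (ni i)) ⊕ (CMG k ni).edgeSet) → Fin m}
    (hinj : ∀ x, Set.InjOn c ((middleG (CMG k ni)).neighborSet x))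
    (u w : Σ i : Fin k, Fin (ni i)) (h : u.1 ≠ w.1) :
    c (Sum.inl u) ≠ c (Sum.inl w) := by
  have hg : s(u, w) ∈ (CMG k ni).edgeSet := h
  refine aux_key hinj ⟨s(u, w), hg⟩ ?_ ?_ ?_
  · exact Sym2.mem_mk_left u w
  · exact Sym2.mem_mk_right u w
  · intro hc
    exact h (congrArg Sigma.fst (Sum.inl.inj hc))

lemma aux_LB2 {m : ℕ} {c : ((Σ i : Fin k, Fin (ni i)) ⊕ (CMG k ni).edgeSet) → Fin m}
    (hprop : ∀ ⦃a b⦄, (middleG (CMG k ni)).Adj a b → c a ≠ c b)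
    (hinj : ∀ x, Set.InjOn c ((middleG (CMG k ni)).neighborSet x))
    (u : Σ i : Fin k, Fin (ni i)) (e : (CMG k ni).edgeSet) :
    c (Sum.inl u) ≠ c (Sum.inr e) := by
  obtain ⟨e, he⟩ := e
  revert he
  induction e using Sym2.ind with
  | _ x y =>
    intro he
    by_cases hu : u ∈ (s(x, y) : Sym2 (Σ i : Fin k, Fin (ni i)))
    · exact hprop (show (middleG (CMG k ni)).Adj (Sum.inl u) (Sum.inr ⟨s(x, y), he⟩) from hu)
    · have hxy : x.1 ≠ y.1 := he
      rw [Sym2.mem_iff] at hu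
      push_neg at hu
      -- pick a ∈ {x, y} with u.1 ≠ a.1
      obtain ⟨a, hae, hua⟩ : ∃ a : Σ i : Fin k, Fin (ni i),
          a ∈ (s(x, y) : Sym2 (Σ i : Fin k, Fin (ni i))) ∧ u.1 ≠ a.1 := by
        rcases eq_or_ne u.1 x.1 with h1 | h1
        · exact ⟨y, Sym2.mem_mk_right x y, h1 ▸ hxy⟩
        · exact ⟨x, Sym2.mem_mk_left x y, h1⟩
      have hg : s(u, a) ∈ (CMG k ni).edgeSet := hua
      refine aux_key hinj ⟨s(u, a), hg⟩ ?_ ?_ (by simp)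
      · exact Sym2.mem_mk_left u a
      · refine ⟨?_, a, Sym2.mem_mk_right u a, hae⟩
        intro hEq
        have : s(u, a) = s(x, y) := congrArg Subtype.val hEq
        have : u ∈ (s(x, y) : Sym2 (Σ i : Fin k, Fin (ni i))) := this ▸ Sym2.mem_mk_left u a
        rw [Sym2.mem_iff] at this
        rcases this with h | h
        · exact hu.1 h
        · exact hu.2 h

lemma aux_LB1 {m : ℕ} {c : ((Σ i : Fin k, Fin (ni i)) ⊕ (CMG k ni).edgeSet) → Fin m}
    (hprop : ∀ ⦃a b⦄, (middleG (CMG k ni)).Adj a b → c a ≠ c b)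
    (hinj : ∀ x, Set.InjOn c ((middleG (CMG k ni)).neighborSet x))
    (e f : (CMG k ni).edgeSet) (hef : e ≠ f) :
    c (Sum.inr e) ≠ c (Sum.inr f) := by
  obtain ⟨e, he⟩ := e
  obtain ⟨f, hf⟩ := f
  have hef' : e ≠ f := fun h => hef (Subtype.ext h)
  clear hef
  revert he hf hef'
  induction e using Sym2.ind with
  | _ u v =>
    induction f using Sym2.ind with
    | _ x y =>
      intro he hf hef'
      by_cases hshare : ∃ w, w ∈ (s(u, v) : Sym2 (Σ i : Fin k, Fin (ni i))) ∧
          w ∈ (s(x, y) : Sym2 (Σ i : Fin k, Fin (ni i)))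
      · exact hprop (show (middleG (CMG k ni)).Adj (Sum.inr ⟨s(u, v), he⟩)
          (Sum.inr ⟨s(x, y), hf⟩) from
          ⟨fun hq => hef' (congrArg Subtype.val hq), hshare⟩)
      · push_neg at hshare
        have huv : u.1 ≠ v.1 := he
        have hxy : x.1 ≠ y.1 := hf
        obtain ⟨a, hae, b, hbf, hab⟩ : ∃ a, a ∈ (s(u, v) : Sym2 (Σ i : Fin k, Fin (ni i))) ∧
            ∃ b, b ∈ (s(x, y) : Sym2 (Σ i : Fin k, Fin (ni i))) ∧ a.1 ≠ b.1 := by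
          rcases eq_or_ne u.1 x.1 with h1 | h1
          · exact ⟨u, Sym2.mem_mk_left u v, y, Sym2.mem_mk_right x y,
              fun hq => hxy (h1.symm.trans hq)⟩
          · exact ⟨u, Sym2.mem_mk_left u v, x, Sym2.mem_mk_left x y, h1⟩
        have hg : s(a, b) ∈ (CMG k ni).edgeSet := hab
        refine aux_key hinj ⟨s(a, b), hg⟩ ?_ ?_
          (fun hq => hef' (congrArg Subtype.val (Sum.inr.inj hq)))
        · refine ⟨?_, a, Sym2.mem_mk_left a b, hae⟩
          intro hEq
          have hq : s(a, b) = s(u, v) := congrArg Subtype.val hEq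
          exact hshare b (hq ▸ Sym2.mem_mk_right a b) hbf
        · refine ⟨?_, b, Sym2.mem_mk_right a b, hbf⟩
          intro hEq
          have hq : s(a, b) = s(x, y) := congrArg Subtype.val hEq
          exact hshare a hae (hq ▸ Sym2.mem_mk_left a b)

lemma aux_same (a b : Σ i : Fin k, Fin (ni i)) (hab : a.1 ≠ b.1)
    {u w : Σ i : Fin k, Fin (ni i)}
    (hu : u ∈ (s(a, b) : Sym2 (Σ i : Fin k, Fin (ni i))))
    (hw : w ∈ (s(a, b) : Sym2 (Σ i : Fin k, Fin (ni i)))) (h : u.1 = w.1) : u = w := by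
  rw [Sym2.mem_iff] at hu hw
  rcases hu with rfl | rfl <;> rcases hw with rfl | rfl
  · rfl
  · exact absurd h hab
  · exact absurd h.symm hab
  · rfl

lemma aux_lower (hni : ∀ i, 1 ≤ ni i) {m : ℕ}
    {c : ((Σ i : Fin k, Fin (ni i)) ⊕ (CMG k ni).edgeSet) → Fin m}
    (hc : IsCondColoring (middleG (CMG k ni)) (gMaxDeg (middleG (CMG k ni))) c) :
    k + Fintype.card (CMG k ni).edgeSet ≤ m := by
  have hinj := fun x => aux_injOn_of_cond hc x
  have hprop := hc.2.1
  have hFinj : Function.Injective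
      (Sum.elim (fun i : Fin k => c (Sum.inl ⟨i, ⟨0, hni i⟩⟩))
        (fun e : (CMG k ni).edgeSet => c (Sum.inr e))) := by
    rintro (i | e) (j | f) h
    · by_contra hij
      have hij' : i ≠ j := fun hq => hij (by rw [hq])
      exact aux_LB3 hinj ⟨i, ⟨0, hni i⟩⟩ ⟨j, ⟨0, hni j⟩⟩ hij' h
    · exact absurd h (aux_LB2 hprop hinj _ _)
    · exact absurd h.symm (aux_LB2 hprop hinj _ _)
    · by_contra hef
      have hef' : e ≠ f := fun hq => hef (by rw [hq])
      exact aux_LB1 hprop hinj e f hef' h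
  have := Fintype.card_le_of_injective _ hFinj
  simpa [Fintype.card_sum] using this

lemma aux_upper (hni : ∀ i, 1 ≤ ni i) (l : ℕ)
    (hEcard : Fintype.card (CMG k ni).edgeSet = l) (r : ℕ) :
    ∃ c : ((Σ i : Fin k, Fin (ni i)) ⊕ (CMG k ni).edgeSet) → Fin (k + l),
      IsCondColoring (middleG (CMG k ni)) r c := by
  classical
  let ef : (CMG k ni).edgeSet ≃ Fin l := (Fintype.equivFin _).trans (finCongr hEcard)
  refine ⟨Sum.elim
      (fun v => ⟨(v.1 : ℕ), Nat.lt_of_lt_of_le v.1.isLt (Nat.le_add_right k l)⟩)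
      (fun e => ⟨k + ((ef e : Fin l) : ℕ), Nat.add_lt_add_left (ef e).isLt k⟩),
    ?_, ?_, ?_⟩
  · -- surjective
    intro j
    by_cases hj : (j : ℕ) < k
    · exact ⟨Sum.inl ⟨⟨(j : ℕ), hj⟩, ⟨0, hni _⟩⟩, Fin.ext rfl⟩
    · have h2 : (j : ℕ) - k < l := by have := j.isLt; omega
      refine ⟨Sum.inr (ef.symm ⟨(j : ℕ) - k, h2⟩), Fin.ext ?_⟩
      show k + ((ef (ef.symm ⟨(j : ℕ) - k, h2⟩) : Fin l) : ℕ) = (j : ℕ)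
      rw [Equiv.apply_symm_apply]
      show k + ((j : ℕ) - k) = (j : ℕ)
      omega
  · -- proper
    rintro (u | e) (w | f) hadj heq
    · exact hadj
    · have h1 : ((u.1 : Fin k) : ℕ) = k + ((ef f : Fin l) : ℕ) := congrArg Fin.val heq
      have h2 : ((u.1 : Fin k) : ℕ) < k := u.1.isLt
      omega
    · have h1 : k + ((ef e : Fin l) : ℕ) = ((w.1 : Fin k) : ℕ) := congrArg Fin.val heq
      have h2 : ((w.1 : Fin k) : ℕ) < k := w.1.isLt
      omega
    · have h1 : k + ((ef e : Fin l) : ℕ) = k + ((ef f : Fin l) : ℕ) := congrArg Fin.val heq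
      exact hadj.1 (ef.injective (Fin.ext (by omega)))
  · -- condition C2
    intro x
    have hinjx : Set.InjOn
        (Sum.elim
          (fun v : Σ i : Fin k, Fin (ni i) =>
            (⟨(v.1 : ℕ), Nat.lt_of_lt_of_le v.1.isLt (Nat.le_add_right k l)⟩ : Fin (k + l)))
          (fun e => ⟨k + ((ef e : Fin l) : ℕ), Nat.add_lt_add_left (ef e).isLt k⟩))
        ((middleG (CMG k ni)).neighborSet x) := by
      rcases x with v | g
      · rintro (u | e) ha (w | f) hb hab
        · exact ha.elim
        · exact ha.elim
        · exact hb.elim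
        · have h1 : k + ((ef e : Fin l) : ℕ) = k + ((ef f : Fin l) : ℕ) := congrArg Fin.val hab
          exact congrArg Sum.inr (ef.injective (Fin.ext (by omega)))
      · obtain ⟨g, hg⟩ := g
        revert hg
        induction g using Sym2.ind with
        | _ a b =>
          intro hg
          rintro (u | e) ha (w | f) hb hab
          · have h1 := congrArg Fin.val hab
            simp only [Sum.elim_inl] at h1
            exact congrArg Sum.inl (aux_same a b hg ha hb (Fin.ext h1))
          · exact ((by
              have h1 : ((u.1 : Fin k) : ℕ) = k + ((ef f : Fin l) : ℕ) :=
                congrArg Fin.val hab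
              have h2 : ((u.1 : Fin k) : ℕ) < k := u.1.isLt
              omega : False)).elim
          · exact ((by
              have h1 : k + ((ef e : Fin l) : ℕ) = ((w.1 : Fin k) : ℕ) :=
                congrArg Fin.val hab
              have h2 : ((w.1 : Fin k) : ℕ) < k := w.1.isLt
              omega : False)).elim
          · have h1 : k + ((ef e : Fin l) : ℕ) = k + ((ef f : Fin l) : ℕ) :=
              congrArg Fin.val hab
            exact congrArg Sum.inr (ef.injective (Fin.ext (by omega)))
    rw [Set.ncard_image_of_injOn hinjx]
    exact min_le_left _ _

end Concrete

/-- Let `K(n₁, …, n_k)` be the complete `k`-partite graph (`k ≥ 2`, all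
`n_i ≥ 1`), `n = Σ n_i`, and `l = (1/2) Σ n_i (n - n_i)` its number of edges. Then the middle
graph satisfies `χ_Δ(M(K(n₁, …, n_k))) = k + l`, where `Δ` is its maximum degree. -/
theorem condChrom_middle_completeMultipartite (k : ℕ) (hk : 2 ≤ k)
    (ni : Fin k → ℕ) (hni : ∀ i, 1 ≤ ni i) (n l : ℕ)
    (hn : n = ∑ i, ni i) (hl : 2 * l = ∑ i, ni i * (n - ni i)) :
    condChrom (middleG (completeMultipartiteGraph fun i : Fin k => Fin (ni i)))
        (gMaxDeg (middleG (completeMultipartiteGraph fun i : Fin k => Fin (ni i))))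
      = k + l := by
  have hEcard : Fintype.card (CMG k ni).edgeSet = l := aux_card_edges n l hn hl
  obtain ⟨c, hc⟩ := aux_upper hni l hEcard (gMaxDeg (middleG (CMG k ni)))
  apply le_antisymm
  · exact Nat.sInf_le ⟨c, hc⟩
  · refine le_csInf ⟨k + l, c, hc⟩ fun m hm => ?_
    obtain ⟨c', hc'⟩ := hm
    have h := aux_lower hni hc'
    rwa [hEcard] at h
end

section
/- For n ≥ 4, let M(C_n) be the middle graph of the cycle C_n. Then χ_2(M(C_n)) = 3 and χ_3(M(C_n)) = 4. -/
open SimpleGraph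

section helpers
theorem mAdj_ll {V : Type*} {G : SimpleGraph V} {u v : V} : ¬ (middleG G).Adj (Sum.inl u) (Sum.inl v) := fun h => h
theorem mAdj_le {V : Type*} {G : SimpleGraph V} {v : V} {e : G.edgeSet} : (middleG G).Adj (Sum.inl v) (Sum.inr e) ↔ v ∈ (e : Sym2 V) := Iff.rfl
theorem mAdj_el {V : Type*} {G : SimpleGraph V} {v : V} {e : G.edgeSet} : (middleG G).Adj (Sum.inr e) (Sum.inl v) ↔ v ∈ (e : Sym2 V) := Iff.rfl
theorem mAdj_ee {V : Type*} {G : SimpleGraph V} {e f : G.edgeSet} : (middleG G).Adj (Sum.inr e) (Sum.inr f) ↔ e ≠ f ∧ ∃ v, v ∈ (e : Sym2 V) ∧ v ∈ (f : Sym2 V) := Iff.rfl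

theorem two_le_ncard {α : Type*} [Finite α] {S : Set α} {x y : α} (hx : x ∈ S) (hy : y ∈ S) (h : x ≠ y) : 2 ≤ S.ncard := by
  have h2 : ({x, y} : Set α).ncard = 2 := Set.ncard_pair h
  rw [← h2]
  exact Set.ncard_le_ncard (by simp [Set.insert_subset_iff, hx, hy]) (Set.toFinite S)

theorem three_le_ncard {α : Type*} [Finite α] {S : Set α} {x y z : α} (hx : x ∈ S) (hy : y ∈ S) (hz : z ∈ S)
    (hxy : x ≠ y) (hxz : x ≠ z) (hyz : y ≠ z) : 3 ≤ S.ncard := by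
  have h3 : ({x, y, z} : Set α).ncard = 3 := Set.ncard_eq_three.2 ⟨x, y, z, hxy, hxz, hyz, rfl⟩
  rw [← h3]
  exact Set.ncard_le_ncard (by simp [Set.insert_subset_iff, hx, hy, hz]) (Set.toFinite S)
end helpers

set_option linter.unusedSectionVars false
section cyc
variable {n : ℕ} [NeZero n]

theorem val1 (hn : 4 ≤ n) : (1 : Fin n).val = 1 := by
  rw [Fin.val_one', Nat.mod_eq_of_lt (by omega)]
theorem valadd (i j : Fin n) : (i + j).val = (i.val + j.val) % n := by rw [Fin.add_def]
theorem vadd1 (hn : 4 ≤ n) (i : Fin n) : ((i+1).val = i.val + 1 ∧ i.val + 1 < n) ∨ (i.val = n-1 ∧ (i+1).val = 0) := by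
  have h := valadd i 1
  rw [val1 hn] at h
  have := i.isLt
  rcases Nat.lt_or_ge (i.val + 1) n with hl | hl
  · rw [Nat.mod_eq_of_lt hl] at h; left; omega
  · have hin : i.val + 1 = n := by omega
    rw [hin, Nat.mod_self] at h; right; omega
theorem vadd2 (hn : 4 ≤ n) (i : Fin n) : ((i+2).val = i.val + 2 ∧ i.val + 2 < n) ∨ (i.val = n-2 ∧ (i+2).val = 0) ∨ (i.val = n-1 ∧ (i+2).val = 1) := by
  have e : i + 2 = (i + 1) + 1 := by open Fin.CommRing in ring
  rw [e]
  rcases vadd1 hn i with ⟨h1, h1'⟩ | ⟨h1, h1'⟩ <;> rcases vadd1 hn (i+1) with ⟨h2, h2'⟩ | ⟨h2, h2'⟩ <;> omega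
theorem adjc (hn : 4 ≤ n) (i : Fin n) : (cycleGraph n).Adj i (i+1) := by
  rw [cycleGraph_adj']; right; rw [add_sub_cancel_left, val1 hn]
theorem succ_ne (hn : 4 ≤ n) (i : Fin n) : i + 1 ≠ i := by
  intro h
  have := congrArg Fin.val h
  rcases vadd1 hn i with ⟨h1, _⟩ | ⟨_, h1⟩ <;> omega
theorem succ_succ_ne (hn : 4 ≤ n) (i : Fin n) : i + 1 + 1 ≠ i := by
  intro h
  have := congrArg Fin.val h
  rcases vadd1 hn i with ⟨h1, _⟩ | ⟨h1, h1'⟩ <;>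
    rcases vadd1 hn (i+1) with ⟨h2, _⟩ | ⟨h2, h2'⟩ <;> omega

/-- the i-th edge of the cycle -/
def Ei (hn : 4 ≤ n) (i : Fin n) : (cycleGraph n).edgeSet :=
  ⟨s(i, i+1), (cycleGraph n).mem_edgeSet.2 (adjc hn i)⟩

theorem edge_form (hn : 4 ≤ n) (e : (cycleGraph n).edgeSet) : ∃ i : Fin n, e = Ei hn i := by
  obtain ⟨e, he⟩ := e
  induction e with
  | _ a b =>
    rw [SimpleGraph.mem_edgeSet, cycleGraph_adj'] at he
    rcases he with h | h
    · refine ⟨b, ?_⟩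
      have hab : a = b + 1 := by
        have h2 : a - b = 1 := Fin.ext (by rw [h, val1 hn])
        have := congrArg (· + b) h2
        simpa [sub_add_cancel, add_comm] using this
      apply Subtype.ext
      show s(a, b) = s(b, b+1)
      rw [hab, Sym2.eq_swap]
    · refine ⟨a, ?_⟩
      have hab : b = a + 1 := by
        have h2 : b - a = 1 := Fin.ext (by rw [h, val1 hn])
        have := congrArg (· + a) h2
        simpa [sub_add_cancel, add_comm] using this
      apply Subtype.ext
      show s(a, b) = s(a, a+1)
      rw [hab]

theorem Ei_inj (hn : 4 ≤ n) {i j : Fin n} (h : Ei hn i = Ei hn j) : i = j := by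
  have h2 : s(i, i+1) = s(j, j+1) := congrArg Subtype.val h
  rw [Sym2.eq_iff] at h2
  rcases h2 with ⟨h3, _⟩ | ⟨h3, h4⟩
  · exact h3
  · exact absurd h4 (by rw [h3]; exact succ_succ_ne hn j)

theorem mem_Ei (hn : 4 ≤ n) {v i : Fin n} : v ∈ ((Ei hn i : (cycleGraph n).edgeSet) : Sym2 (Fin n)) ↔ v = i ∨ v = i + 1 := by
  show v ∈ s(i, i+1) ↔ _
  rw [Sym2.mem_iff]

theorem hA1 (hn : 4 ≤ n) (v : Fin n) : (middleG (cycleGraph n)).Adj (Sum.inl v) (Sum.inr (Ei hn v)) :=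
  mAdj_le.2 ((mem_Ei hn).2 (Or.inl rfl))
theorem hA2 (hn : 4 ≤ n) (v : Fin n) : (middleG (cycleGraph n)).Adj (Sum.inl v) (Sum.inr (Ei hn (v-1))) :=
  mAdj_le.2 ((mem_Ei hn).2 (Or.inr (sub_add_cancel v 1).symm))
theorem hA3 (hn : 4 ≤ n) (i : Fin n) : (middleG (cycleGraph n)).Adj (Sum.inr (Ei hn i)) (Sum.inr (Ei hn (i+1))) := by
  refine mAdj_ee.2 ⟨fun h => succ_ne hn i (Ei_inj hn h).symm, i+1, (mem_Ei hn).2 (Or.inr rfl), (mem_Ei hn).2 (Or.inl rfl)⟩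

/-- the symmetric lift assigning `φ i` to the edge `s(i, i+1)` -/
def symF {k : ℕ} (φ : Fin n → Fin k) : Sym2 (Fin n) → Fin k :=
  Sym2.lift ⟨fun a b => if (a.val = 0 ∨ b.val = 0) ∧ 2 ≤ a.val + b.val then φ (max a b) else φ (min a b),
    by
      intro a b
      dsimp only
      rw [sup_comm a b, inf_comm a b]
      apply if_congr _ rfl rfl
      constructor <;> rintro ⟨h1, h2⟩ <;> exact ⟨h1.symm, by omega⟩⟩

theorem symF_apply (hn : 4 ≤ n) {k : ℕ} (φ : Fin n → Fin k) (i : Fin n) : symF φ s(i, i+1) = φ i := by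
  have hlt := i.isLt
  rw [symF, Sym2.lift_mk]
  dsimp only
  rcases vadd1 hn i with ⟨h1, h1'⟩ | ⟨h1, h1'⟩
  · have hmin : min i (i+1) = i := min_eq_left (by rw [Fin.le_def]; omega)
    rw [if_neg, hmin]
    rintro ⟨h2, h3⟩; omega
  · have hmax : max i (i+1) = i := max_eq_left (by rw [Fin.le_def]; omega)
    rw [if_pos, hmax]
    exact ⟨Or.inr (by omega), by omega⟩

theorem build (hn : 4 ≤ n) {k r : ℕ} (φV φE : Fin n → Fin k)
    (ha : ∀ i, φE i ≠ φE (i+1))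
    (hb : ∀ i, φV i ≠ φE i) (hb' : ∀ i, φV (i+1) ≠ φE i)
    (hs : ∀ y, (∃ i, φV i = y) ∨ ∃ i, φE i = y)
    (hce : ∀ i : Fin n, r ≤ ({φE i, φE (i+2), φV (i+1), φV (i+2)} : Set (Fin k)).ncard) :
    ∃ c : (Fin n ⊕ (cycleGraph n).edgeSet) → Fin k, IsCondColoring (middleG (cycleGraph n)) r c := by
  classical
  refine ⟨Sum.elim φV (fun e => symF φE e.val), ?_, ?_, ?_⟩
  · -- surjective
    intro y
    rcases hs y with ⟨i, hi⟩ | ⟨i, hi⟩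
    · exact ⟨Sum.inl i, hi⟩
    · exact ⟨Sum.inr (Ei hn i), by simpa [Ei, symF_apply hn] using hi⟩
  · -- proper
    have key : ∀ (v : Fin n) (e : (cycleGraph n).edgeSet),
        (middleG (cycleGraph n)).Adj (Sum.inl v) (Sum.inr e) →
        φV v ≠ symF φE e.val := by
      intro v e hadj
      obtain ⟨j, rfl⟩ := edge_form hn e
      rw [mAdj_le, mem_Ei hn] at hadj
      show φV v ≠ symF φE s(j, j+1)
      rw [symF_apply hn]
      rcases hadj with h1 | h1
      · rw [h1]; exact hb j
      · rw [h1]; exact hb' j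
    rintro (v | e) (w | f) hadj
    · exact absurd hadj mAdj_ll
    · exact key v f hadj
    · exact (key w e hadj.symm).symm
    · obtain ⟨i, rfl⟩ := edge_form hn e
      obtain ⟨j, rfl⟩ := edge_form hn f
      obtain ⟨hne, w, hw1, hw2⟩ := mAdj_ee.1 hadj
      rw [mem_Ei hn] at hw1 hw2
      show symF φE s(i, i+1) ≠ symF φE s(j, j+1)
      rw [symF_apply hn, symF_apply hn]
      rcases hw1 with rfl | rfl <;> rcases hw2 with h2 | h2
      · exact absurd (by rw [h2]) hne
      · rw [h2]; exact (ha j).symm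
      · rw [← h2]; exact ha i
      · have h3 : i = j := add_right_cancel h2
        exact absurd (by rw [h3]) hne
  · -- C2
    rintro (v | e)
    · -- vertex case
      have hsub : (middleG (cycleGraph n)).neighborSet (Sum.inl v) ⊆
          {Sum.inr (Ei hn (v-1)), Sum.inr (Ei hn v)} := by
        rintro (w | e) h
        · exact (mAdj_ll (G := cycleGraph n) (u := v) (v := w) h).elim
        · obtain ⟨j, rfl⟩ := edge_form hn e
          rw [mem_neighborSet, mAdj_le, mem_Ei hn] at h
          rcases h with rfl | rfl
          · right; rfl
          · left
            show _ = Sum.inr (Ei hn (j + 1 - 1))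
            rw [add_sub_cancel_right]
      have hd : gDeg (middleG (cycleGraph n)) (Sum.inl v) ≤ 2 := by
        refine le_trans (Set.ncard_le_ncard hsub (Set.toFinite _)) ?_
        refine le_trans (Set.ncard_insert_le _ _) ?_
        simp
      refine le_trans (le_trans (min_le_left _ _) hd) ?_
      have hmem1 : φE (v-1) ∈ Sum.elim φV (fun e => symF φE e.val) ''
          (middleG (cycleGraph n)).neighborSet (Sum.inl v) :=
        ⟨Sum.inr (Ei hn (v-1)), hA2 hn v, by simpa [Ei] using symF_apply hn φE (v-1)⟩
      have hmem2 : φE v ∈ Sum.elim φV (fun e => symF φE e.val) ''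
          (middleG (cycleGraph n)).neighborSet (Sum.inl v) :=
        ⟨Sum.inr (Ei hn v), hA1 hn v, by simpa [Ei] using symF_apply hn φE v⟩
      refine two_le_ncard hmem1 hmem2 ?_
      have := ha (v-1)
      rwa [sub_add_cancel] at this
    · -- edge case
      obtain ⟨j, rfl⟩ := edge_form hn e
      refine le_trans (min_le_right _ _) ?_
      have hkey := hce (j-1)
      rw [show j - 1 + 2 = j + 1 by open Fin.CommRing in ring, sub_add_cancel] at hkey
      refine le_trans hkey (Set.ncard_le_ncard ?_ (Set.toFinite _))
      intro x hx
      have cEi : ∀ i : Fin n, Sum.elim φV (fun e : (cycleGraph n).edgeSet => symF φE e.val) (Sum.inr (Ei hn i)) = φE i := by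
        intro i; simpa [Ei] using symF_apply hn φE i
      rcases hx with rfl | rfl | rfl | rfl
      · -- φE (j-1)
        refine ⟨Sum.inr (Ei hn (j-1)), ?_, cEi _⟩
        have := (hA3 hn (j-1)).symm
        rwa [sub_add_cancel] at this
      · -- φE (j+1)
        exact ⟨Sum.inr (Ei hn (j+1)), hA3 hn j, cEi _⟩
      · -- φV j
        exact ⟨Sum.inl j, (hA1 hn j).symm, rfl⟩
      · -- φV (j+1)
        exact ⟨Sum.inl (j+1), mAdj_el.2 ((mem_Ei hn).2 (Or.inr rfl)), rfl⟩
end cyc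
def pE2 (n : ℕ) (i : Fin n) : Fin 3 :=
  if i.val = n - 1 ∧ n % 2 = 1 then 2 else ⟨i.val % 2, by omega⟩
def other3 (a b : Fin 3) : Fin 3 := ⟨(3 - a.val - b.val) % 3, Nat.mod_lt _ (by norm_num)⟩
def pV2 (n : ℕ) [NeZero n] (i : Fin n) : Fin 3 := other3 (pE2 n (i - 1)) (pE2 n i)
def pE3 (n : ℕ) (i : Fin n) : Fin 4 :=
  if i.val = n - 1 ∧ n % 2 = 1 then 2 else ⟨i.val % 2, by omega⟩
def pV3 (n : ℕ) (i : Fin n) : Fin 4 :=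
  if n % 2 = 1 ∧ (i.val = 0 ∨ i.val = n - 1) then 3 else ⟨2 + i.val % 2, by omega⟩

theorem other3_ne : ∀ a b : Fin 3, a ≠ b → other3 a b ≠ a ∧ other3 a b ≠ b := by decide

section conc
variable {n : ℕ} [NeZero n]

theorem pE2_val (i : Fin n) : (pE2 n i).val = if i.val = n - 1 ∧ n % 2 = 1 then 2 else i.val % 2 := by
  unfold pE2; split <;> rfl
theorem pE3_val (i : Fin n) : (pE3 n i).val = if i.val = n - 1 ∧ n % 2 = 1 then 2 else i.val % 2 := by
  unfold pE3; split <;> rfl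
theorem pV3_val (i : Fin n) : (pV3 n i).val = if n % 2 = 1 ∧ (i.val = 0 ∨ i.val = n - 1) then 3 else 2 + i.val % 2 := by
  unfold pV3; split <;> rfl

theorem ha2 (hn : 4 ≤ n) (i : Fin n) : pE2 n i ≠ pE2 n (i + 1) := by
  have hlt := i.isLt
  apply Fin.ne_of_val_ne
  rw [pE2_val, pE2_val]
  rcases vadd1 hn i with ⟨h1, h1'⟩ | ⟨h1, h1'⟩ <;> split_ifs <;> omega

theorem hb2 (hn : 4 ≤ n) (i : Fin n) : pV2 n i ≠ pE2 n i := by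
  have h := ha2 hn (i - 1)
  rw [sub_add_cancel] at h
  exact (other3_ne _ _ h).2

theorem hb2' (hn : 4 ≤ n) (i : Fin n) : pV2 n (i + 1) ≠ pE2 n i := by
  show other3 (pE2 n (i + 1 - 1)) (pE2 n (i + 1)) ≠ pE2 n i
  rw [add_sub_cancel_right]
  exact (other3_ne _ _ (ha2 hn i)).1

theorem val0 : ((0 : Fin n)).val = 0 := rfl

theorem pE2_zero (hn : 4 ≤ n) : pE2 n 0 = ⟨0, by norm_num⟩ := by
  apply Fin.ext
  rw [pE2_val, if_neg (by rw [val0]; omega), val0]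

theorem pE2_one (hn : 4 ≤ n) : pE2 n 1 = ⟨1, by norm_num⟩ := by
  apply Fin.ext
  rw [pE2_val, if_neg (by rw [val1 hn]; omega), val1 hn]

theorem hs2 (hn : 4 ≤ n) : ∀ y : Fin 3, (∃ i, pV2 n i = y) ∨ ∃ i, pE2 n i = y := by
  intro y
  fin_cases y
  · exact Or.inr ⟨0, pE2_zero hn⟩
  · exact Or.inr ⟨1, pE2_one hn⟩
  · by_cases hpar : n % 2 = 1
    · refine Or.inr ⟨⟨n - 1, by omega⟩, ?_⟩
      apply Fin.ext
      rw [pE2_val, if_pos ⟨rfl, hpar⟩]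
    · refine Or.inl ⟨1, ?_⟩
      show other3 (pE2 n (1 - 1)) (pE2 n 1) = _
      rw [sub_self, pE2_zero hn, pE2_one hn]
      rfl

theorem hce2 (hn : 4 ≤ n) (i : Fin n) :
    2 ≤ ({pE2 n i, pE2 n (i + 2), pV2 n (i + 1), pV2 n (i + 2)} : Set (Fin 3)).ncard := by
  refine two_le_ncard (x := pV2 n (i + 1)) (y := pE2 n i) (by simp) (by simp) (hb2' hn i)
end conc
section conc3
variable {n : ℕ} [NeZero n]

theorem ha3 (hn : 4 ≤ n) (i : Fin n) : pE3 n i ≠ pE3 n (i + 1) := by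
  have hlt := i.isLt
  apply Fin.ne_of_val_ne
  rw [pE3_val, pE3_val]
  rcases vadd1 hn i with ⟨h1, h1'⟩ | ⟨h1, h1'⟩ <;> split_ifs <;> omega

theorem hb3 (hn : 4 ≤ n) (i : Fin n) : pV3 n i ≠ pE3 n i := by
  have hlt := i.isLt
  apply Fin.ne_of_val_ne
  rw [pV3_val, pE3_val]
  split_ifs <;> omega

theorem hb3' (hn : 4 ≤ n) (i : Fin n) : pV3 n (i + 1) ≠ pE3 n i := by
  have hlt := i.isLt
  apply Fin.ne_of_val_ne
  rw [pV3_val, pE3_val]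
  rcases vadd1 hn i with ⟨h1, h1'⟩ | ⟨h1, h1'⟩ <;> split_ifs <;> omega

theorem val2 (hn : 4 ≤ n) : ((2 : Fin n)).val = 2 := by
  have h : (2 : Fin n) = 1 + 1 := by open Fin.CommRing in norm_num
  rw [h]
  rcases vadd1 hn 1 with ⟨h1, h1'⟩ | ⟨h1, h1'⟩ <;> rw [val1 hn] at * <;> omega

theorem hs3 (hn : 4 ≤ n) : ∀ y : Fin 4, (∃ i, pV3 n i = y) ∨ ∃ i, pE3 n i = y := by
  intro y
  have hv0 := @val0 n
  have hv1 := val1 hn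
  have hv2 := val2 hn
  fin_cases y
  · refine Or.inr ⟨0, Fin.ext ?_⟩
    rw [pE3_val, hv0, if_neg (by omega)]
  · refine Or.inr ⟨1, Fin.ext ?_⟩
    rw [pE3_val, hv1, if_neg (by omega)]
  · by_cases hpar : n % 2 = 1
    · refine Or.inr ⟨⟨n - 1, by omega⟩, Fin.ext ?_⟩
      rw [pE3_val, if_pos ⟨rfl, hpar⟩]
    · refine Or.inl ⟨2, Fin.ext ?_⟩
      rw [pV3_val, hv2, if_neg (by omega)]
  · refine Or.inl ⟨1, Fin.ext ?_⟩
    rw [pV3_val, hv1, if_neg (by omega)]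

theorem hce3 (hn : 4 ≤ n) (i : Fin n) :
    3 ≤ ({pE3 n i, pE3 n (i + 2), pV3 n (i + 1), pV3 n (i + 2)} : Set (Fin 4)).ncard := by
  have hlt := i.isLt
  have H1 := vadd1 hn i
  have H2 := vadd2 hn i
  have H3 := vadd1 hn (i + 1)
  have H4 : i + 1 + 1 = i + 2 := by open Fin.CommRing in ring
  rw [H4] at H3
  by_cases hu : (pV3 n (i + 1)).val = (pV3 n (i + 2)).val
  · rw [pV3_val, pV3_val] at hu
    refine three_le_ncard (x := pE3 n i) (y := pE3 n (i + 2)) (z := pV3 n (i + 1))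
      (by simp) (by simp) (by simp) ?_ ?_ ?_ <;> apply Fin.ne_of_val_ne
    · rw [pE3_val, pE3_val]
      split_ifs at hu ⊢ <;> omega
    · rw [pE3_val, pV3_val]
      split_ifs at hu ⊢ <;> omega
    · rw [pE3_val, pV3_val]
      split_ifs at hu ⊢ <;> omega
  · by_cases hsp : i.val = n - 1 ∧ n % 2 = 1
    · refine three_le_ncard (x := pE3 n (i + 2)) (y := pV3 n (i + 1)) (z := pV3 n (i + 2))
        (by simp) (by simp) (by simp) ?_ ?_ (Fin.ne_of_val_ne hu) <;> apply Fin.ne_of_val_ne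
      · rw [pE3_val, pV3_val]
        split_ifs <;> omega
      · rw [pE3_val, pV3_val]
        split_ifs <;> omega
    · refine three_le_ncard (x := pE3 n i) (y := pV3 n (i + 1)) (z := pV3 n (i + 2))
        (by simp) (by simp) (by simp) ?_ ?_ (Fin.ne_of_val_ne hu) <;> apply Fin.ne_of_val_ne
      · rw [pE3_val, pV3_val]
        split_ifs <;> omega
      · rw [pE3_val, pV3_val]
        split_ifs <;> omega
end conc3
theorem condChrom_eq {V : Type*} (G : SimpleGraph V) (r k : ℕ)
    (hmem : ∃ c : V → Fin k, IsCondColoring G r c)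
    (hlb : ∀ m, m < k → ¬ ∃ c : V → Fin m, IsCondColoring G r c) :
    condChrom G r = k := by
  refine le_antisymm (Nat.sInf_le hmem) (le_csInf ⟨k, hmem⟩ ?_)
  intro b hb
  by_contra h
  exact hlb b (by omega) hb

section lb
variable {n : ℕ} [NeZero n]

theorem adj01 (hn : 4 ≤ n) : (middleG (cycleGraph n)).Adj (Sum.inl 1) (Sum.inr (Ei hn 0)) :=
  mAdj_le.2 ((mem_Ei hn).2 (Or.inr (zero_add 1).symm))

theorem adjE01 (hn : 4 ≤ n) : (middleG (cycleGraph n)).Adj (Sum.inr (Ei hn 0)) (Sum.inr (Ei hn 1)) := by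
  have := hA3 hn 0
  rwa [zero_add] at this

theorem no_small_2 (hn : 4 ≤ n) {m : ℕ} (hm : m < 3)
    (c : (Fin n ⊕ (cycleGraph n).edgeSet) → Fin m)
    (hc : IsCondColoring (middleG (cycleGraph n)) 2 c) : False := by
  obtain ⟨-, hproper, -⟩ := hc
  have d1 : c (Sum.inl 1) ≠ c (Sum.inr (Ei hn 0)) := hproper (adj01 hn)
  have d2 : c (Sum.inl 1) ≠ c (Sum.inr (Ei hn 1)) := hproper (hA1 hn 1)
  have d3 : c (Sum.inr (Ei hn 0)) ≠ c (Sum.inr (Ei hn 1)) := hproper (adjE01 hn)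
  have h3 : 3 ≤ (Set.univ : Set (Fin m)).ncard :=
    three_le_ncard (Set.mem_univ _) (Set.mem_univ _) (Set.mem_univ _) d1 d2 d3
  rw [Set.ncard_univ, Nat.card_eq_fintype_card, Fintype.card_fin] at h3
  omega

theorem no_small_3 (hn : 4 ≤ n) {m : ℕ} (hm : m < 4)
    (c : (Fin n ⊕ (cycleGraph n).edgeSet) → Fin m)
    (hc : IsCondColoring (middleG (cycleGraph n)) 3 c) : False := by
  obtain ⟨-, hproper, hC2⟩ := hc
  have hne01 : (0 : Fin n) ≠ 1 := by
    apply Fin.ne_of_val_ne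
    rw [val0, val1 hn]
    omega
  have hdeg : 3 ≤ gDeg (middleG (cycleGraph n)) (Sum.inr (Ei hn 0)) := by
    show 3 ≤ ((middleG (cycleGraph n)).neighborSet (Sum.inr (Ei hn 0))).ncard
    refine three_le_ncard (x := Sum.inl 0) (y := Sum.inl 1) (z := Sum.inr (Ei hn 1))
      ?_ ?_ ?_ (by simp [hne01]) (by simp) (by simp)
    · exact mAdj_el.2 ((mem_Ei hn).2 (Or.inl rfl))
    · exact (adj01 hn).symm
    · exact adjE01 hn
  have h1 : 3 ≤ min (gDeg (middleG (cycleGraph n)) (Sum.inr (Ei hn 0))) 3 := le_min hdeg le_rfl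
  have h2 := hC2 (Sum.inr (Ei hn 0))
  have hnotmem : c (Sum.inr (Ei hn 0)) ∉
      c '' (middleG (cycleGraph n)).neighborSet (Sum.inr (Ei hn 0)) := by
    rintro ⟨u, hu, hequ⟩
    exact (hproper hu).symm hequ
  have hss : c '' (middleG (cycleGraph n)).neighborSet (Sum.inr (Ei hn 0)) ⊂ Set.univ := by
    rw [Set.ssubset_univ_iff]
    intro heq
    exact hnotmem (heq ▸ Set.mem_univ _)
  have h4 := Set.ncard_lt_ncard hss (Set.toFinite _)
  rw [Set.ncard_univ, Nat.card_eq_fintype_card, Fintype.card_fin] at h4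
  omega
end lb


/-- For `n ≥ 4`, the middle graph of the cycle `C_n` satisfies
`χ_2(M(C_n)) = 3` and `χ_3(M(C_n)) = 4`. -/
theorem condChrom_middle_cycle (n : ℕ) (hn : 4 ≤ n) :
    condChrom (middleG (cycleGraph n)) 2 = 3 ∧ condChrom (middleG (cycleGraph n)) 3 = 4 := by
  haveI : NeZero n := ⟨by omega⟩
  constructor
  · refine condChrom_eq _ 2 3
      (build hn (pV2 n) (pE2 n) (ha2 hn) (hb2 hn) (hb2' hn) (hs2 hn) (hce2 hn)) ?_
    rintro m hm ⟨c, hc⟩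
    exact no_small_2 hn hm c hc
  · refine condChrom_eq _ 3 4
      (build hn (pV3 n) (pE3 n) (ha3 hn) (hb3 hn) (hb3' hn) (hs3 hn) (hce3 hn)) ?_
    rintro m hm ⟨c, hc⟩
    exact no_small_3 hn hm c hc
end

section
/- For n ≥ 2, let M(F_n) be the middle graph of the friendship graph F_n, with maximum degree Δ = Δ(M(F_n)) = 2n + 2. Then χ_r(M(F_n)) = 2n + 1 if 0 < r ≤ 2n, χ_r(M(F_n)) = 2n + 2 if r = 2n + 1, and χ_Δ(M(F_n)) = 2n + 4. -/
open SimpleGraph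

namespace CMF

abbrev FV (n : ℕ) : Type := Option (Fin n × Fin 2)

def Wn (n : ℕ) : SimpleGraph (FV n) := windmill 3 n

variable {n : ℕ}

lemma Wn_adj {x y : FV n} : (Wn n).Adj x y ↔
    x ≠ y ∧ (x = none ∨ y = none ∨
      ∃ (i : Fin n) (a b : Fin 2), x = some (i,a) ∧ y = some (i,b)) := Iff.rfl

lemma spoke_adj (i : Fin n) (a : Fin 2) : (Wn n).Adj none (some (i,a)) :=
  Wn_adj.mpr ⟨by simp, Or.inl rfl⟩

lemma rim_adj (i : Fin n) : (Wn n).Adj (some (i,0)) (some (i,1)) :=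
  Wn_adj.mpr ⟨by simp, Or.inr (Or.inr ⟨i,0,1,rfl,rfl⟩)⟩

def spoke (i : Fin n) (a : Fin 2) : (Wn n).edgeSet :=
  ⟨s(none, some (i,a)), spoke_adj i a⟩

def rim (i : Fin n) : (Wn n).edgeSet :=
  ⟨s(some (i,0), some (i,1)), rim_adj i⟩

lemma edge_cases (e : (Wn n).edgeSet) :
    (∃ i a, e = spoke i a) ∨ (∃ i, e = rim i) := by
  obtain ⟨s, hs⟩ := e
  revert hs
  induction s using Sym2.inductionOn with
  | hf x y =>
    intro hs
    have hadj : (Wn n).Adj x y := hs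
    obtain ⟨hne, h⟩ := Wn_adj.mp hadj
    rcases h with h | h | ⟨i, a, b, h1, h2⟩
    · subst h
      match y with
      | none => exact absurd rfl hne
      | some (i, a) => exact Or.inl ⟨i, a, rfl⟩
    · subst h
      match x with
      | none => exact absurd rfl hne
      | some (i, a) => exact Or.inl ⟨i, a, Subtype.ext Sym2.eq_swap⟩
    · subst h1; subst h2
      have hab : a ≠ b := by rintro rfl; exact hne rfl
      fin_cases a <;> fin_cases b
      · exact absurd rfl hab
      · exact Or.inr ⟨i, rfl⟩
      · exact Or.inr ⟨i, Subtype.ext Sym2.eq_swap⟩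
      · exact absurd rfl hab

@[simp] lemma spoke_inj {i j : Fin n} {a b : Fin 2} : spoke i a = spoke j b ↔ i = j ∧ a = b := by
  constructor
  · intro h
    have := Subtype.ext_iff.mp h
    simp only [spoke, Sym2.eq_iff] at this
    rcases this with ⟨-, h2⟩ | ⟨h1, -⟩
    · simpa [Prod.ext_iff] using h2
    · exact absurd h1 (by simp)
  · rintro ⟨rfl, rfl⟩; rfl

@[simp] lemma rim_inj {i j : Fin n} : rim i = rim j ↔ i = j := by
  constructor
  · intro h
    have := Subtype.ext_iff.mp h
    simp only [rim, Sym2.eq_iff] at this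
    rcases this with ⟨h1, -⟩ | ⟨h1, -⟩ <;> simpa [Prod.ext_iff] using h1
  · rintro rfl; rfl

@[simp] lemma spoke_ne_rim {i j : Fin n} {a : Fin 2} : spoke i a ≠ rim j := by
  intro h
  have := Subtype.ext_iff.mp h
  simp only [spoke, rim, Sym2.eq_iff] at this
  rcases this with ⟨h1, -⟩ | ⟨h1, -⟩ <;> exact absurd h1 (by simp)

@[simp] lemma rim_ne_spoke {i j : Fin n} {a : Fin 2} : rim j ≠ spoke i a :=
  fun h => spoke_ne_rim h.symm

@[simp] lemma mem_spoke_iff {v : FV n} {i : Fin n} {a : Fin 2} :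
    v ∈ ((spoke i a : (Wn n).edgeSet) : Sym2 (FV n)) ↔
      v = none ∨ v = some (i,a) := Sym2.mem_iff

@[simp] lemma mem_rim_iff {v : FV n} {i : Fin n} :
    v ∈ ((rim i : (Wn n).edgeSet) : Sym2 (FV n)) ↔
      v = some (i,0) ∨ v = some (i,1) := Sym2.mem_iff

@[simp] lemma madj_ll {V : Type*} {G : SimpleGraph V} {v w : V} :
    ¬ (middleG G).Adj (Sum.inl v) (Sum.inl w) := fun h => h

@[simp] lemma madj_lr {V : Type*} {G : SimpleGraph V} {v : V} {e : G.edgeSet} :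
    (middleG G).Adj (Sum.inl v) (Sum.inr e) ↔ v ∈ (e : Sym2 V) := Iff.rfl

@[simp] lemma madj_rl {V : Type*} {G : SimpleGraph V} {v : V} {e : G.edgeSet} :
    (middleG G).Adj (Sum.inr e) (Sum.inl v) ↔ v ∈ (e : Sym2 V) := Iff.rfl

@[simp] lemma madj_rr {V : Type*} {G : SimpleGraph V} {e f : G.edgeSet} :
    (middleG G).Adj (Sum.inr e) (Sum.inr f) ↔
      e ≠ f ∧ ∃ v, v ∈ (e : Sym2 V) ∧ v ∈ (f : Sym2 V) := Iff.rfl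

abbrev MG (n : ℕ) := middleG (Wn n)

lemma nbhd_center :
    (MG n).neighborSet (Sum.inl none) =
      Set.range (fun p : Fin n × Fin 2 => Sum.inr (spoke p.1 p.2)) := by
  ext z
  cases z with
  | inl w => simp [SimpleGraph.mem_neighborSet]
  | inr e =>
    simp only [SimpleGraph.mem_neighborSet, madj_lr, Set.mem_range]
    constructor
    · intro h
      rcases edge_cases e with ⟨i, a, rfl⟩ | ⟨i, rfl⟩
      · exact ⟨(i,a), rfl⟩
      · simp at h
    · rintro ⟨⟨i,a⟩, h⟩
      have : e = spoke i a := (Sum.inr.inj h).symm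
      subst this; simp

lemma nbhd_some (i : Fin n) (a : Fin 2) :
    (MG n).neighborSet (Sum.inl (some (i,a))) =
      {Sum.inr (spoke i a), Sum.inr (rim i)} := by
  ext z
  cases z with
  | inl w => simp [SimpleGraph.mem_neighborSet]
  | inr e =>
    simp only [SimpleGraph.mem_neighborSet, madj_lr, Set.mem_insert_iff,
      Set.mem_singleton_iff]
    constructor
    · intro h
      rcases edge_cases e with ⟨j, b, rfl⟩ | ⟨j, rfl⟩
      · left
        simp only [mem_spoke_iff] at h
        rcases h with h | h
        · exact absurd h (by simp)
        · obtain ⟨h1, h2⟩ := Prod.ext_iff.mp (Option.some.inj h)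
          subst h1; subst h2; rfl
      · right
        simp only [mem_rim_iff] at h
        rcases h with h | h <;>
        · obtain ⟨h1, -⟩ := Prod.ext_iff.mp (Option.some.inj h)
          subst h1; rfl
    · rintro (h | h) <;> (have := Sum.inr.inj h; subst this)
      · simp
      · fin_cases a <;> simp

lemma nbhd_spoke (i : Fin n) (a : Fin 2) :
    (MG n).neighborSet (Sum.inr (spoke i a)) =
      insert (Sum.inl none) (insert (Sum.inl (some (i,a)))
        (insert (Sum.inr (rim i))
          ((fun p : Fin n × Fin 2 => (Sum.inr (spoke p.1 p.2) :
              FV n ⊕ (Wn n).edgeSet)) '' {p | p ≠ (i,a)}))) := by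
  ext z
  cases z with
  | inl w =>
    simp only [SimpleGraph.mem_neighborSet, madj_rl, mem_spoke_iff, Set.mem_insert_iff,
      Set.mem_image, Set.mem_setOf_eq]
    constructor
    · rintro (rfl | rfl)
      · exact Or.inl rfl
      · exact Or.inr (Or.inl rfl)
    · rintro (h | h | h | ⟨p, -, h⟩)
      · exact Or.inl (Sum.inl.inj h)
      · exact Or.inr (Sum.inl.inj h)
      · exact absurd h (by simp)
      · exact absurd h (by simp)
  | inr e =>
    simp only [SimpleGraph.mem_neighborSet, madj_rr, Set.mem_insert_iff,
      Set.mem_image, Set.mem_setOf_eq]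
    constructor
    · rintro ⟨hne, v, hv1, hv2⟩
      rcases edge_cases e with ⟨j, b, rfl⟩ | ⟨j, rfl⟩
      · refine Or.inr (Or.inr (Or.inr ⟨(j,b), ?_, rfl⟩))
        intro h
        obtain ⟨h1, h2⟩ := Prod.ext_iff.mp h
        exact hne (by rw [show j = i from h1, show b = a from h2])
      · refine Or.inr (Or.inr (Or.inl ?_))
        simp only [mem_spoke_iff] at hv1
        simp only [mem_rim_iff] at hv2
        rcases hv1 with rfl | rfl
        · rcases hv2 with h | h <;> exact absurd h (by simp)
        · rcases hv2 with h | h <;>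
          · obtain ⟨h1, -⟩ := Prod.ext_iff.mp (Option.some.inj h)
            subst h1; rfl
    · rintro (h | h | h | ⟨⟨j,b⟩, hp, h⟩)
      · exact absurd h (by simp)
      · exact absurd h (by simp)
      · have := (Sum.inr.inj h).symm; subst this
        refine ⟨by simp, some (i,a), by simp, ?_⟩
        simp only [mem_rim_iff]
        fin_cases a
        · exact Or.inl rfl
        · exact Or.inr rfl
      · have := (Sum.inr.inj h).symm; subst this
        refine ⟨?_, none, by simp, by simp⟩
        intro hc
        obtain ⟨h1, h2⟩ := spoke_inj.mp hc.symm
        exact hp (Prod.ext_iff.mpr ⟨h1, h2⟩)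

lemma nbhd_rim (i : Fin n) :
    (MG n).neighborSet (Sum.inr (rim i)) =
      {Sum.inl (some (i,0)), Sum.inl (some (i,1)),
        Sum.inr (spoke i 0), Sum.inr (spoke i 1)} := by
  ext z
  cases z with
  | inl w =>
    simp only [SimpleGraph.mem_neighborSet, madj_rl, mem_rim_iff, Set.mem_insert_iff,
      Set.mem_singleton_iff]
    constructor
    · rintro (rfl | rfl)
      · exact Or.inl rfl
      · exact Or.inr (Or.inl rfl)
    · rintro (h | h | h | h)
      · exact Or.inl (Sum.inl.inj h)
      · exact Or.inr (Sum.inl.inj h)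
      · exact absurd h (by simp)
      · exact absurd h (by simp)
  | inr e =>
    simp only [SimpleGraph.mem_neighborSet, madj_rr, Set.mem_insert_iff,
      Set.mem_singleton_iff]
    constructor
    · rintro ⟨hne, v, hv1, hv2⟩
      rcases edge_cases e with ⟨j, b, rfl⟩ | ⟨j, rfl⟩
      · simp only [mem_spoke_iff] at hv2
        simp only [mem_rim_iff] at hv1
        rcases hv2 with rfl | rfl
        · rcases hv1 with h | h <;> exact absurd h (by simp)
        · rcases hv1 with h | h <;>
          · obtain ⟨h1, h2⟩ := Prod.ext_iff.mp (Option.some.inj h)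
            subst h1
            fin_cases b
            · exact Or.inr (Or.inr (Or.inl rfl))
            · exact Or.inr (Or.inr (Or.inr rfl))
      · exfalso
        simp only [mem_rim_iff] at hv1 hv2
        rcases hv1 with rfl | rfl <;> rcases hv2 with h | h <;>
        · obtain ⟨h1, -⟩ := Prod.ext_iff.mp (Option.some.inj h)
          exact hne (by rw [show i = j from h1])
    · rintro (h | h | h | h)
      · exact absurd h (by simp)
      · exact absurd h (by simp)
      · have := (Sum.inr.inj h).symm; subst this
        exact ⟨by simp, some (i,0), by simp, by simp⟩
      · have := (Sum.inr.inj h).symm; subst this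
        exact ⟨by simp, some (i,1), by simp, by simp⟩

lemma spoke_map_injective :
    Function.Injective (fun p : Fin n × Fin 2 =>
      (Sum.inr (spoke p.1 p.2) : FV n ⊕ (Wn n).edgeSet)) := by
  rintro ⟨i,a⟩ ⟨j,b⟩ h
  obtain ⟨h1, h2⟩ := spoke_inj.mp (Sum.inr.inj h)
  exact Prod.ext_iff.mpr ⟨h1, h2⟩

lemma card_FVpair : Nat.card (Fin n × Fin 2) = 2 * n := by
  simp [Nat.card_eq_fintype_card, Fintype.card_prod]; ring

lemma deg_center : gDeg (MG n) (Sum.inl none) = 2 * n := by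
  rw [gDeg, nbhd_center, ← Set.image_univ,
    Set.ncard_image_of_injective _ spoke_map_injective, Set.ncard_univ, card_FVpair]

lemma deg_some (i : Fin n) (a : Fin 2) : gDeg (MG n) (Sum.inl (some (i,a))) = 2 := by
  rw [gDeg, nbhd_some, Set.ncard_pair (by simp)]

lemma deg_rim (i : Fin n) : gDeg (MG n) (Sum.inr (rim i)) = 4 := by
  rw [gDeg, nbhd_rim]
  rw [Set.ncard_insert_of_notMem (by simp) (Set.toFinite _),
    Set.ncard_insert_of_notMem (by simp [Prod.ext_iff]) (Set.toFinite _),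
    Set.ncard_insert_of_notMem (by simp [Fin.ext_iff]) (Set.toFinite _),
    Set.ncard_singleton]

lemma deg_spoke (hn : 1 ≤ n) (i : Fin n) (a : Fin 2) :
    gDeg (MG n) (Sum.inr (spoke i a)) = 2 * n + 2 := by
  rw [gDeg, nbhd_spoke]
  have himg : ((fun p : Fin n × Fin 2 => (Sum.inr (spoke p.1 p.2) :
      FV n ⊕ (Wn n).edgeSet)) '' {p | p ≠ (i,a)}).ncard = 2 * n - 1 := by
    rw [Set.ncard_image_of_injective _ spoke_map_injective,
      show {p : Fin n × Fin 2 | p ≠ (i,a)} = Set.univ \ {(i,a)} by ext p; simp,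
      Set.ncard_diff_singleton_of_mem (Set.mem_univ _),
      Set.ncard_univ, card_FVpair]
  rw [Set.ncard_insert_of_notMem (by simp) (Set.toFinite _),
    Set.ncard_insert_of_notMem (by simp) (Set.toFinite _),
    Set.ncard_insert_of_notMem (by simp) (Set.toFinite _), himg]
  omega

/-! ### helpers for colorings -/

lemma succ_mod_lt (i : Fin n) : ((i:ℕ)+1) % n < n := Nat.mod_lt _ i.pos

lemma succ_mod_ne (hn : 2 ≤ n) (i : Fin n) : ((i:ℕ)+1) % n ≠ (i:ℕ) := by
  rcases Nat.lt_or_ge ((i:ℕ)+1) n with h | h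
  · rw [Nat.mod_eq_of_lt h]; omega
  · have hi := i.isLt
    have hieq : (i:ℕ)+1 = n := by omega
    rw [hieq, Nat.mod_self]; omega

/-- lift a pair of color functions (for spokes and rims) to a function on edges -/
def eColFun (f : Fin n → Fin 2 → ℕ) (g : Fin n → ℕ) : (Wn n).edgeSet → ℕ := fun e =>
  Sym2.lift ⟨fun x y =>
    match x, y with
    | none, none => 0
    | none, some p => f p.1 p.2
    | some p, none => f p.1 p.2
    | some p, some q => g (min p.1 q.1), by
      intro x y
      cases x <;> cases y <;> simp [min_comm]⟩ (e : Sym2 (FV n))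

@[simp] lemma eColFun_spoke (f : Fin n → Fin 2 → ℕ) (g : Fin n → ℕ) (i : Fin n) (a : Fin 2) :
    eColFun f g (spoke i a) = f i a := by
  simp [eColFun, spoke]

@[simp] lemma eColFun_rim (f : Fin n → Fin 2 → ℕ) (g : Fin n → ℕ) (i : Fin n) :
    eColFun f g (rim i) = g i := by
  simp [eColFun, rim]

lemma spoke_val_inj {i j : Fin n} {a b : Fin 2}
    (h : 2*(i:ℕ)+1+(a:ℕ) = 2*(j:ℕ)+1+(b:ℕ)) : i = j ∧ a = b := by
  have ha := a.isLt; have hb := b.isLt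
  have : (i:ℕ) = (j:ℕ) ∧ (a:ℕ) = (b:ℕ) := by omega
  exact ⟨Fin.ext this.1, Fin.ext this.2⟩

lemma spoke_decode (m : ℕ) (h1 : 1 ≤ m) (h2 : m ≤ 2*n) :
    ∃ (i : Fin n) (a : Fin 2), 2*(i:ℕ)+1+(a:ℕ) = m := by
  refine ⟨⟨(m-1)/2, by omega⟩, ⟨(m-1)%2, by omega⟩, ?_⟩
  simp only [Fin.val_mk]
  omega

lemma condChrom_eq_of {V : Type*} (G : SimpleGraph V) (r m : ℕ)
    (hmem : ∃ c : V → Fin m, IsCondColoring G r c)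
    (hlb : ∀ k, (∃ c : V → Fin k, IsCondColoring G r c) → m ≤ k) :
    condChrom G r = m :=
  le_antisymm (Nat.sInf_le hmem) (le_csInf ⟨m, hmem⟩ fun k hk => hlb k hk)

/-! ### a family of colorings -/

section ColF

variable {k : ℕ} (xc yc rc : Fin n → ℕ)

def ncF : FV n ⊕ (Wn n).edgeSet → ℕ :=
  Sum.elim
    (fun w => match w with
      | none => 0
      | some (i, a) => if (a:ℕ) = 0 then xc i else yc i)
    (eColFun (fun i a => 2*(i:ℕ)+1+(a:ℕ)) rc)

@[simp] lemma ncF_center : ncF xc yc rc (Sum.inl none) = 0 := rfl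

@[simp] lemma ncF_some (i : Fin n) (a : Fin 2) :
    ncF xc yc rc (Sum.inl (some (i,a))) = if (a:ℕ) = 0 then xc i else yc i := rfl

@[simp] lemma ncF_spoke (i : Fin n) (a : Fin 2) :
    ncF xc yc rc (Sum.inr (spoke i a)) = 2*(i:ℕ)+1+(a:ℕ) := by
  simp [ncF]

@[simp] lemma ncF_rim (i : Fin n) :
    ncF xc yc rc (Sum.inr (rim i)) = rc i := by
  simp [ncF]

def colF (hk : ∀ z, ncF xc yc rc z < k) : FV n ⊕ (Wn n).edgeSet → Fin k :=
  fun z => ⟨ncF xc yc rc z, hk z⟩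

@[simp] lemma colF_val (hk : ∀ z, ncF xc yc rc z < k) (z) :
    (colF xc yc rc hk z : ℕ) = ncF xc yc rc z := rfl

lemma colF_proper
    (H1 : ∀ i, xc i ≠ 2*(i:ℕ)+1) (H2 : ∀ i, yc i ≠ 2*(i:ℕ)+2)
    (H3 : ∀ (i : Fin n) (a : Fin 2), rc i ≠ 2*(i:ℕ)+1+(a:ℕ)) (H4 : ∀ i, xc i ≠ rc i) (H5 : ∀ i, yc i ≠ rc i)
    (hk : ∀ z, ncF xc yc rc z < k) :
    ∀ ⦃u v⦄, (MG n).Adj u v → colF xc yc rc hk u ≠ colF xc yc rc hk v := by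
  have hlr : ∀ (w : FV n) (e : (Wn n).edgeSet), w ∈ (e : Sym2 (FV n)) →
      ncF xc yc rc (Sum.inl w) ≠ ncF xc yc rc (Sum.inr e) := by
    intro w e hw
    rcases edge_cases e with ⟨j, b, rfl⟩ | ⟨j, rfl⟩
    · rcases mem_spoke_iff.mp hw with rfl | rfl
      · simp only [ncF_center, ncF_spoke]; omega
      · fin_cases b <;> simpa using (by first | exact H1 j | exact H2 j)
    · rcases mem_rim_iff.mp hw with rfl | rfl
      · simpa using H4 j
      · simpa using H5 j
  intro u v huv heq
  have hval : ncF xc yc rc u = ncF xc yc rc v := congrArg Fin.val heq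
  cases u with
  | inl w =>
    cases v with
    | inl w' => exact madj_ll huv
    | inr e => exact hlr w e (madj_lr.mp huv) hval
  | inr e =>
    cases v with
    | inl w => exact hlr w e (madj_rl.mp huv) hval.symm
    | inr f =>
      obtain ⟨hne, x, hx1, hx2⟩ := madj_rr.mp huv
      rcases edge_cases e with ⟨i, a, rfl⟩ | ⟨i, rfl⟩ <;>
        rcases edge_cases f with ⟨j, b, rfl⟩ | ⟨j, rfl⟩
      · simp only [ncF_spoke] at hval
        obtain ⟨rfl, rfl⟩ := spoke_val_inj hval
        exact hne rfl
      · rcases mem_spoke_iff.mp hx1 with rfl | rfl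
        · rcases mem_rim_iff.mp hx2 with h | h <;> simp at h
        · obtain rfl : i = j := by
            rcases mem_rim_iff.mp hx2 with h | h <;>
              exact (Prod.ext_iff.mp (Option.some.inj h)).1
          simp only [ncF_spoke, ncF_rim] at hval
          exact H3 i a hval.symm
      · rcases mem_spoke_iff.mp hx2 with rfl | rfl
        · rcases mem_rim_iff.mp hx1 with h | h <;> simp at h
        · obtain rfl : j = i := by
            rcases mem_rim_iff.mp hx1 with h | h <;>
              exact (Prod.ext_iff.mp (Option.some.inj h)).1
          simp only [ncF_spoke, ncF_rim] at hval
          exact H3 j b hval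
      · rcases mem_rim_iff.mp hx1 with rfl | rfl <;>
          rcases mem_rim_iff.mp hx2 with h | h <;>
        · obtain ⟨h1, -⟩ := Prod.ext_iff.mp (Option.some.inj h)
          exact hne (by rw [show i = j from h1])

lemma colF_c2_center (hk : ∀ z, ncF xc yc rc z < k) (r : ℕ) :
    min (gDeg (MG n) (Sum.inl none)) r ≤
      (colF xc yc rc hk '' (MG n).neighborSet (Sum.inl none)).ncard := by
  rw [deg_center, nbhd_center, ← Set.range_comp, ← Set.image_univ]
  have hinj : Function.Injective
      ((colF xc yc rc hk) ∘ fun p : Fin n × Fin 2 => Sum.inr (spoke p.1 p.2)) := by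
    rintro ⟨i, a⟩ ⟨j, b⟩ h
    have hv : 2*(i:ℕ)+1+(a:ℕ) = 2*(j:ℕ)+1+(b:ℕ) := by
      have := congrArg Fin.val h
      simpa using this
    obtain ⟨rfl, rfl⟩ := spoke_val_inj hv
    rfl
  rw [Set.ncard_image_of_injective _ hinj, Set.ncard_univ, card_FVpair]
  exact min_le_left _ _

lemma colF_c2_some (H3 : ∀ (i : Fin n) (a : Fin 2), rc i ≠ 2*(i:ℕ)+1+(a:ℕ))
    (hk : ∀ z, ncF xc yc rc z < k) (r : ℕ) (i : Fin n) (a : Fin 2) :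
    min (gDeg (MG n) (Sum.inl (some (i,a)))) r ≤
      (colF xc yc rc hk '' (MG n).neighborSet (Sum.inl (some (i,a)))).ncard := by
  rw [deg_some, nbhd_some, Set.image_pair]
  rw [Set.ncard_pair (by
    intro h
    exact H3 i a (by simpa using (congrArg Fin.val h).symm))]
  exact min_le_left _ _

lemma colF_c2_rim
    (H1 : ∀ i, xc i ≠ 2*(i:ℕ)+1) (H2 : ∀ i, yc i ≠ 2*(i:ℕ)+2)
    (H6 : ∀ i, xc i ≠ yc i) (H7 : ∀ i, xc i ≠ 2*(i:ℕ)+2) (H8 : ∀ i, yc i ≠ 2*(i:ℕ)+1)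
    (hk : ∀ z, ncF xc yc rc z < k) (r : ℕ) (i : Fin n) :
    min (gDeg (MG n) (Sum.inr (rim i))) r ≤
      (colF xc yc rc hk '' (MG n).neighborSet (Sum.inr (rim i))).ncard := by
  rw [deg_rim, nbhd_rim]
  rw [Set.image_insert_eq, Set.image_insert_eq, Set.image_insert_eq, Set.image_singleton]
  rw [Set.ncard_insert_of_notMem (by
      simp only [Set.mem_insert_iff, Set.mem_singleton_iff, Fin.ext_iff, colF_val,
        ncF_some, ncF_spoke]
      push_neg
      refine ⟨?_, ?_, ?_⟩ <;> simp
      · exact H6 i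
      · exact H1 i
      · exact H7 i) (Set.toFinite _),
    Set.ncard_insert_of_notMem (by
      simp only [Set.mem_insert_iff, Set.mem_singleton_iff, Fin.ext_iff, colF_val,
        ncF_some, ncF_spoke]
      push_neg
      refine ⟨?_, ?_⟩ <;> simp
      · exact H8 i
      · exact H2 i) (Set.toFinite _),
    Set.ncard_insert_of_notMem (by
      simp only [Set.mem_singleton_iff, Fin.ext_iff, colF_val, ncF_spoke]
      simp) (Set.toFinite _),
    Set.ncard_singleton]
  exact min_le_left _ _

end ColF

lemma colF_spoke_comp_inj {k : ℕ} (xc yc rc : Fin n → ℕ) (hk : ∀ z, ncF xc yc rc z < k) :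
    Function.Injective (fun p : Fin n × Fin 2 => colF xc yc rc hk (Sum.inr (spoke p.1 p.2))) := by
  rintro ⟨i, a⟩ ⟨j, b⟩ h
  have hv : 2*(i:ℕ)+1+(a:ℕ) = 2*(j:ℕ)+1+(b:ℕ) := by
    have := congrArg Fin.val h
    simpa using this
  obtain ⟨rfl, rfl⟩ := spoke_val_inj hv
  rfl

lemma colF_spoke_range_ncard {k : ℕ} (xc yc rc : Fin n → ℕ) (hk : ∀ z, ncF xc yc rc z < k) :
    (Set.range (fun p : Fin n × Fin 2 => colF xc yc rc hk (Sum.inr (spoke p.1 p.2)))).ncard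
      = 2 * n := by
  rw [← Set.image_univ, Set.ncard_image_of_injective _ (colF_spoke_comp_inj xc yc rc hk),
    Set.ncard_univ, card_FVpair]

/-- generic: the image of the neighborhood of a spoke contains the center color and all
other spoke colors, hence has at least `2*n` colors. -/
lemma colF_c2_spoke_ge {k : ℕ} (hn : 2 ≤ n) (xc yc rc : Fin n → ℕ)
    (hk : ∀ z, ncF xc yc rc z < k) (i : Fin n) (a : Fin 2) :
    2 * n ≤ (colF xc yc rc hk '' (MG n).neighborSet (Sum.inr (spoke i a))).ncard := by
  set cF := colF xc yc rc hk with hcF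
  set sc := fun p : Fin n × Fin 2 => cF (Sum.inr (spoke p.1 p.2)) with hsc
  set T : Set (Fin k) := insert (cF (Sum.inl none)) (Set.range sc \ {sc (i,a)}) with hT
  have hTsub : T ⊆ cF '' (MG n).neighborSet (Sum.inr (spoke i a)) := by
    rintro z hz
    rcases hz with rfl | ⟨⟨p, rfl⟩, hzne⟩
    · exact ⟨Sum.inl none, by rw [nbhd_spoke]; exact Set.mem_insert _ _, rfl⟩
    · refine ⟨Sum.inr (spoke p.1 p.2), ?_, rfl⟩
      rw [nbhd_spoke]
      refine Set.mem_insert_of_mem _ (Set.mem_insert_of_mem _ (Set.mem_insert_of_mem _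
        ⟨p, ?_, rfl⟩))
      intro hp
      exact hzne (by rw [Set.mem_singleton_iff, hp])
  have hTcard : T.ncard = 2 * n := by
    have hrange : (Set.range sc).ncard = 2*n := by
      rw [hsc, hcF]; exact colF_spoke_range_ncard xc yc rc hk
    have hmem : sc (i,a) ∈ Set.range sc := Set.mem_range.mpr ⟨(i,a), rfl⟩
    have hdiff : (Set.range sc \ {sc (i,a)}).ncard = 2*n - 1 := by
      rw [Set.ncard_diff_singleton_of_mem hmem, hrange]
    have hnm : cF (Sum.inl none) ∉ Set.range sc \ {sc (i,a)} := by
      rintro ⟨⟨p, hp⟩, -⟩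
      have := congrArg Fin.val hp
      simp only [hsc, hcF, colF_val, ncF_spoke, ncF_center] at this
      omega
    rw [hT, Set.ncard_insert_of_notMem hnm (Set.toFinite _), hdiff]
    omega
  calc 2*n = T.ncard := hTcard.symm
    _ ≤ _ := Set.ncard_le_ncard hTsub (Set.toFinite _)

/-! ### coloring 1 : `2n+1` colors, `r ≤ 2n` -/

def xc1 : Fin n → ℕ := fun _ => 0
def yc1 : Fin n → ℕ := fun i => 2*(((i:ℕ)+1) % n)+1
def rc1 : Fin n → ℕ := fun i => 2*(((i:ℕ)+1) % n)+2

lemma nc1_lt (z : FV n ⊕ (Wn n).edgeSet) : ncF xc1 yc1 rc1 z < 2*n+1 := by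
  cases z with
  | inl w =>
    match w with
    | none => simpa using Nat.succ_pos _
    | some (i, a) =>
      have h1 := succ_mod_lt i
      by_cases h : (a:ℕ) = 0 <;> simp [xc1, yc1, h] <;> omega
  | inr e =>
    rcases edge_cases e with ⟨i, a, rfl⟩ | ⟨i, rfl⟩
    · have := i.isLt; have := a.isLt
      simp only [ncF_spoke]; omega
    · have := succ_mod_lt i
      simp only [ncF_rim, rc1]; omega

lemma iscc1 (hn : 2 ≤ n) (r : ℕ) (hr2 : r ≤ 2*n) :
    ∃ c : FV n ⊕ (Wn n).edgeSet → Fin (2*n+1), IsCondColoring (MG n) r c := by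
  refine ⟨colF xc1 yc1 rc1 nc1_lt, ?_, ?_, ?_⟩
  · -- surjective
    rintro ⟨m, hm⟩
    by_cases h0 : m = 0
    · exact ⟨Sum.inl none, Fin.ext (by simp [h0])⟩
    · obtain ⟨i, a, hia⟩ := spoke_decode (n := n) m (by omega) (by omega)
      exact ⟨Sum.inr (spoke i a), Fin.ext (by simpa using hia)⟩
  · -- proper
    refine colF_proper xc1 yc1 rc1 ?_ ?_ ?_ ?_ ?_ nc1_lt
    · intro i; simp [xc1]
    · intro i; have := succ_mod_lt i; simp only [yc1]; omega
    · intro i a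
      have h1 := succ_mod_ne hn i
      have h2 := a.isLt
      simp only [rc1]; omega
    · intro i; simp [xc1, rc1]
    · intro i; simp only [yc1, rc1]; omega
  · -- C2
    intro v
    rcases v with w | e
    · match w with
      | none => exact colF_c2_center xc1 yc1 rc1 nc1_lt r
      | some (i, a) =>
        refine colF_c2_some xc1 yc1 rc1 ?_ nc1_lt r i a
        intro j b
        have h1 := succ_mod_ne hn j
        have h2 := b.isLt
        simp only [rc1]; omega
    · rcases edge_cases e with ⟨i, a, rfl⟩ | ⟨i, rfl⟩
      · have h := colF_c2_spoke_ge hn xc1 yc1 rc1 nc1_lt i a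
        exact le_trans (le_trans (min_le_right _ _) hr2) h
      · refine colF_c2_rim xc1 yc1 rc1 ?_ ?_ ?_ ?_ ?_ nc1_lt r i
        · intro j; simp [xc1]
        · intro j; have := succ_mod_lt j; simp only [yc1]; omega
        · intro j; simp only [xc1, yc1]; omega
        · intro j; simp [xc1]
        · intro j; have := succ_mod_ne hn j; simp only [yc1]; omega

/-! ### clique lower bound -/

def cliqueMap {k : ℕ} (c : FV n ⊕ (Wn n).edgeSet → Fin k) : FV n → Fin k := fun w =>
  match w with
  | none => c (Sum.inl none)
  | some p => c (Sum.inr (spoke p.1 p.2))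

lemma cliqueMap_inj {k : ℕ} (c : FV n ⊕ (Wn n).edgeSet → Fin k)
    (hprop : ∀ ⦃u v⦄, (MG n).Adj u v → c u ≠ c v) :
    Function.Injective (cliqueMap c) := by
    intro w w' h
    match w, w' with
    | none, none => rfl
    | none, some p =>
      exact absurd h (hprop (madj_lr.mpr (by simp)))
    | some p, none =>
      exact absurd h.symm (hprop (madj_lr.mpr (by simp)))
    | some p, some q =>
      by_cases hpq : p = q
      · rw [hpq]
      · refine absurd h (hprop (madj_rr.mpr ⟨?_, none, by simp, by simp⟩))
        intro hs
        obtain ⟨h1, h2⟩ := spoke_inj.mp hs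
        exact hpq (Prod.ext_iff.mpr ⟨h1, h2⟩)

lemma clique_lb {r k : ℕ} (c : FV n ⊕ (Wn n).edgeSet → Fin k)
    (hc : IsCondColoring (MG n) r c) : 2*n+1 ≤ k := by
  obtain ⟨-, hprop, -⟩ := hc
  have hcard := Nat.card_le_card_of_injective (cliqueMap c) (cliqueMap_inj c hprop)
  simp only [Nat.card_eq_fintype_card, Fintype.card_option, Fintype.card_prod,
    Fintype.card_fin] at hcard
  omega

/-! ### coloring 2 : `2n+2` colors, `r = 2n+1` -/

def xc2 : Fin n → ℕ := fun _ => 0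
def yc2 : Fin n → ℕ := fun i => 2*(((i:ℕ)+1) % n)+1
def rc2 (n : ℕ) : Fin n → ℕ := fun _ => 2*n+1

lemma nc2_lt (z : FV n ⊕ (Wn n).edgeSet) : ncF xc2 yc2 (rc2 n) z < 2*n+2 := by
  cases z with
  | inl w =>
    match w with
    | none => simp
    | some (i, a) =>
      have h1 := succ_mod_lt i
      by_cases h : (a:ℕ) = 0 <;> simp [xc2, yc2, h] <;> omega
  | inr e =>
    rcases edge_cases e with ⟨i, a, rfl⟩ | ⟨i, rfl⟩
    · have := i.isLt; have := a.isLt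
      simp only [ncF_spoke]; omega
    · simp only [ncF_rim, rc2]; omega

lemma c2_spoke_full (hn : 2 ≤ n) (i : Fin n) (a : Fin 2) :
    min (gDeg (MG n) (Sum.inr (spoke i a))) (2*n+1) ≤
      (colF xc2 yc2 (rc2 n) nc2_lt '' (MG n).neighborSet (Sum.inr (spoke i a))).ncard := by
  rw [deg_spoke (by omega) i a]
  have hmin : min (2*n+2) (2*n+1) = 2*n+1 := by omega
  rw [hmin]
  set cF := colF xc2 yc2 (rc2 n) nc2_lt with hcF
  set T : Set (Fin (2*n+2)) := Set.univ \ {cF (Sum.inr (spoke i a))} with hT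
  have hTcard : T.ncard = 2*n+1 := by
    rw [hT, Set.ncard_diff_singleton_of_mem (Set.mem_univ _),
      Set.ncard_univ]
    simp
  have hTsub : T ⊆ cF '' (MG n).neighborSet (Sum.inr (spoke i a)) := by
    rintro ⟨m, hm⟩ ⟨-, hne⟩
    have hmne : m ≠ 2*(i:ℕ)+1+(a:ℕ) := by
      intro h
      exact hne (Set.mem_singleton_iff.mpr (Fin.ext h))
    rw [nbhd_spoke]
    by_cases h0 : m = 0
    · exact ⟨Sum.inl none, Set.mem_insert _ _, Fin.ext (by simpa [hcF] using h0.symm)⟩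
    by_cases hr : m = 2*n+1
    · refine ⟨Sum.inr (rim i), ?_, Fin.ext ?_⟩
      · exact Set.mem_insert_of_mem _ (Set.mem_insert_of_mem _ (Set.mem_insert _ _))
      · simp only [hcF, colF_val, ncF_rim, rc2]; omega
    · have hub : m ≤ 2*n := by have := hm; omega
      obtain ⟨j, b, hjb⟩ := spoke_decode (n := n) m (by omega) (by omega)
      refine ⟨Sum.inr (spoke j b), ?_, Fin.ext (by simpa [hcF] using hjb)⟩
      refine Set.mem_insert_of_mem _ (Set.mem_insert_of_mem _ (Set.mem_insert_of_mem _
        ⟨(j,b), ?_, rfl⟩))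
      intro hp
      obtain ⟨rfl, rfl⟩ := Prod.ext_iff.mp hp
      exact hmne hjb.symm
  calc 2*n+1 = T.ncard := hTcard.symm
    _ ≤ _ := Set.ncard_le_ncard hTsub (Set.toFinite _)

lemma iscc2 (hn : 2 ≤ n) :
    ∃ c : FV n ⊕ (Wn n).edgeSet → Fin (2*n+2), IsCondColoring (MG n) (2*n+1) c := by
  refine ⟨colF xc2 yc2 (rc2 n) nc2_lt, ?_, ?_, ?_⟩
  · rintro ⟨m, hm⟩
    by_cases h0 : m = 0
    · exact ⟨Sum.inl none, Fin.ext (by simp [h0])⟩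
    by_cases hr : m = 2*n+1
    · refine ⟨Sum.inr (rim ⟨0, by omega⟩), Fin.ext ?_⟩
      simp only [colF_val, ncF_rim, rc2]; omega
    · obtain ⟨i, a, hia⟩ := spoke_decode (n := n) m (by omega) (by omega)
      exact ⟨Sum.inr (spoke i a), Fin.ext (by simpa using hia)⟩
  · refine colF_proper xc2 yc2 (rc2 n) ?_ ?_ ?_ ?_ ?_ nc2_lt
    · intro i; simp [xc2]
    · intro i; have := succ_mod_lt i; simp only [yc2]; omega
    · intro i a
      have h2 := a.isLt; have h3 := i.isLt
      simp only [rc2]; omega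
    · intro i; simp [xc2, rc2]
    · intro i; have := succ_mod_lt i; simp only [yc2, rc2]; omega
  · intro v
    rcases v with w | e
    · match w with
      | none => exact colF_c2_center xc2 yc2 (rc2 n) nc2_lt _
      | some (i, a) =>
        refine colF_c2_some xc2 yc2 (rc2 n) ?_ nc2_lt _ i a
        intro j b
        have h2 := b.isLt; have h3 := j.isLt
        simp only [rc2]; omega
    · rcases edge_cases e with ⟨i, a, rfl⟩ | ⟨i, rfl⟩
      · exact c2_spoke_full hn i a
      · refine colF_c2_rim xc2 yc2 (rc2 n) ?_ ?_ ?_ ?_ ?_ nc2_lt _ i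
        · intro j; simp [xc2]
        · intro j; have := succ_mod_lt j; simp only [yc2]; omega
        · intro j; simp only [xc2, yc2]; omega
        · intro j; simp [xc2]
        · intro j; have := succ_mod_ne hn j; simp only [yc2]; omega

lemma lb2 (hn : 2 ≤ n) {k : ℕ} (c : FV n ⊕ (Wn n).edgeSet → Fin k)
    (hc : IsCondColoring (MG n) (2*n+1) c) : 2*n+2 ≤ k := by
  obtain ⟨-, hprop, hcond⟩ := hc
  set i0 : Fin n := ⟨0, by omega⟩
  have h1 := hcond (Sum.inr (spoke i0 0))
  rw [deg_spoke (by omega) i0 0] at h1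
  have hmin : min (2*n+2) (2*n+1) = 2*n+1 := by omega
  rw [hmin] at h1
  have hsub : c '' (MG n).neighborSet (Sum.inr (spoke i0 0)) ⊆
      Set.univ \ {c (Sum.inr (spoke i0 0))} := by
    rintro z ⟨u, hu, rfl⟩
    refine ⟨Set.mem_univ _, ?_⟩
    simpa using (hprop (((MG n).mem_neighborSet _ _).mp hu)).symm
  have hcard : (Set.univ \ {c (Sum.inr (spoke i0 0))} : Set (Fin k)).ncard = k - 1 := by
    rw [Set.ncard_diff_singleton_of_mem (Set.mem_univ _), Set.ncard_univ]
    simp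
  have := le_trans h1 (le_trans (Set.ncard_le_ncard hsub (Set.toFinite _)) (le_of_eq hcard))
  omega

/-! ### coloring 3 : `2n+4` colors, `r = 2n+2` -/

def xc3 (n : ℕ) : Fin n → ℕ := fun _ => 2*n+1
def yc3 (n : ℕ) : Fin n → ℕ := fun _ => 2*n+2
def rc3 (n : ℕ) : Fin n → ℕ := fun _ => 2*n+3

lemma nc3_lt (z : FV n ⊕ (Wn n).edgeSet) : ncF (xc3 n) (yc3 n) (rc3 n) z < 2*n+4 := by
  cases z with
  | inl w =>
    match w with
    | none => simp
    | some (i, a) =>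
      by_cases h : (a:ℕ) = 0 <;> simp [xc3, yc3, h] <;> omega
  | inr e =>
    rcases edge_cases e with ⟨i, a, rfl⟩ | ⟨i, rfl⟩
    · have := i.isLt; have := a.isLt
      simp only [ncF_spoke]; omega
    · simp only [ncF_rim, rc3]; omega

lemma c3_spoke_full (hn : 2 ≤ n) (i : Fin n) (a : Fin 2) :
    min (gDeg (MG n) (Sum.inr (spoke i a))) (2*n+2) ≤
      (colF (xc3 n) (yc3 n) (rc3 n) nc3_lt '' (MG n).neighborSet (Sum.inr (spoke i a))).ncard := by
  rw [deg_spoke (by omega) i a, min_self]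
  set cF := colF (xc3 n) (yc3 n) (rc3 n) nc3_lt with hcF
  have hvert : (cF (Sum.inl (some (i,a))) : ℕ) = 2*n+1+(a:ℕ) := by
    fin_cases a <;> simp [hcF, xc3, yc3]
  set own : Fin (2*n+4) := cF (Sum.inr (spoke i a)) with hown
  set miss : Fin (2*n+4) := ⟨2*n+2-(a:ℕ), by omega⟩ with hmiss
  set T : Set (Fin (2*n+4)) := Set.univ \ {own, miss} with hT
  have hownval : (own : ℕ) = 2*(i:ℕ)+1+(a:ℕ) := by simp [hown, hcF]
  have hTcard : T.ncard = 2*n+2 := by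
    have hne : own ≠ miss := by
      have hi := i.isLt; have ha := a.isLt
      intro h
      have := congrArg Fin.val h
      rw [hownval] at this
      simp only [hmiss] at this
      omega
    rw [hT, Set.ncard_diff (by simp) (Set.toFinite _), Set.ncard_univ,
      Set.ncard_pair hne]
    simp
  have hTsub : T ⊆ cF '' (MG n).neighborSet (Sum.inr (spoke i a)) := by
    rintro ⟨m, hm⟩ ⟨-, hne⟩
    simp only [Set.mem_insert_iff, Set.mem_singleton_iff, not_or, Fin.ext_iff,
      hownval, hmiss] at hne
    obtain ⟨hne1, hne2⟩ := hne
    rw [nbhd_spoke]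
    have ha := a.isLt; have hi := i.isLt
    by_cases h0 : m = 0
    · exact ⟨Sum.inl none, Set.mem_insert _ _, Fin.ext (by simpa [hcF] using h0.symm)⟩
    by_cases hx : m = 2*n+1+(a:ℕ)
    · refine ⟨Sum.inl (some (i,a)), ?_, Fin.ext (by
        show (cF (Sum.inl (some (i,a))) : ℕ) = m
        rw [hvert]; omega)⟩
      exact Set.mem_insert_of_mem _ (Set.mem_insert _ _)
    by_cases he : m = 2*n+3
    · refine ⟨Sum.inr (rim i), ?_, Fin.ext ?_⟩
      · exact Set.mem_insert_of_mem _ (Set.mem_insert_of_mem _ (Set.mem_insert _ _))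
      · simp only [hcF, colF_val, ncF_rim, rc3]; omega
    · have hub : m ≤ 2*n := by omega
      obtain ⟨j, b, hjb⟩ := spoke_decode (n := n) m (by omega) (by omega)
      refine ⟨Sum.inr (spoke j b), ?_, Fin.ext (by simpa [hcF] using hjb)⟩
      refine Set.mem_insert_of_mem _ (Set.mem_insert_of_mem _ (Set.mem_insert_of_mem _
        ⟨(j,b), ?_, rfl⟩))
      intro hp
      obtain ⟨rfl, rfl⟩ := Prod.ext_iff.mp hp
      exact hne1 hjb.symm
  calc 2*n+2 = T.ncard := hTcard.symm
    _ ≤ _ := Set.ncard_le_ncard hTsub (Set.toFinite _)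

lemma iscc3 (hn : 2 ≤ n) :
    ∃ c : FV n ⊕ (Wn n).edgeSet → Fin (2*n+4), IsCondColoring (MG n) (2*n+2) c := by
  refine ⟨colF (xc3 n) (yc3 n) (rc3 n) nc3_lt, ?_, ?_, ?_⟩
  · rintro ⟨m, hm⟩
    by_cases h0 : m = 0
    · exact ⟨Sum.inl none, Fin.ext (by simp [h0])⟩
    by_cases hx : m = 2*n+1
    · refine ⟨Sum.inl (some (⟨0, by omega⟩, 0)), Fin.ext ?_⟩
      simp only [colF_val, ncF_some]
      simp [xc3, hx]
    by_cases hy : m = 2*n+2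
    · refine ⟨Sum.inl (some (⟨0, by omega⟩, 1)), Fin.ext ?_⟩
      simp only [colF_val, ncF_some]
      simp [yc3, hy]
    by_cases he : m = 2*n+3
    · refine ⟨Sum.inr (rim ⟨0, by omega⟩), Fin.ext ?_⟩
      simp only [colF_val, ncF_rim, rc3]; omega
    · obtain ⟨i, a, hia⟩ := spoke_decode (n := n) m (by omega) (by omega)
      exact ⟨Sum.inr (spoke i a), Fin.ext (by simpa using hia)⟩
  · refine colF_proper (xc3 n) (yc3 n) (rc3 n) ?_ ?_ ?_ ?_ ?_ nc3_lt
    · intro i; have := i.isLt; simp only [xc3]; omega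
    · intro i; have := i.isLt; simp only [yc3]; omega
    · intro i a; have := i.isLt; have := a.isLt; simp only [rc3]; omega
    · intro i; simp [xc3, rc3]
    · intro i; simp [yc3, rc3]
  · intro v
    rcases v with w | e
    · match w with
      | none => exact colF_c2_center (xc3 n) (yc3 n) (rc3 n) nc3_lt _
      | some (i, a) =>
        refine colF_c2_some (xc3 n) (yc3 n) (rc3 n) ?_ nc3_lt _ i a
        intro j b; have := j.isLt; have := b.isLt; simp only [rc3]; omega
    · rcases edge_cases e with ⟨i, a, rfl⟩ | ⟨i, rfl⟩
      · exact c3_spoke_full hn i a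
      · refine colF_c2_rim (xc3 n) (yc3 n) (rc3 n) ?_ ?_ ?_ ?_ ?_ nc3_lt _ i
        · intro j; have := j.isLt; simp only [xc3]; omega
        · intro j; have := j.isLt; simp only [yc3]; omega
        · intro j; simp only [xc3, yc3]; omega
        · intro j; have := j.isLt; simp only [xc3]; omega
        · intro j; have := j.isLt; simp only [yc3]; omega

/-! ### lower bound for `r = 2n+2` -/

lemma lb3 (hn : 2 ≤ n) {k : ℕ} (c : FV n ⊕ (Wn n).edgeSet → Fin k)
    (hc : IsCondColoring (MG n) (2*n+2) c) : 2*n+4 ≤ k := by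
  obtain ⟨-, hprop, hcond⟩ := hc
  set i0 : Fin n := ⟨0, by omega⟩ with hi0
  have hInj : ∀ a : Fin 2, Set.InjOn c ((MG n).neighborSet (Sum.inr (spoke i0 a))) := by
    intro a
    have h1 := hcond (Sum.inr (spoke i0 a))
    rw [deg_spoke (by omega) i0 a, min_self] at h1
    have hNcard : ((MG n).neighborSet (Sum.inr (spoke i0 a))).ncard = 2*n+2 :=
      deg_spoke (by omega) i0 a
    have heq : (c '' ((MG n).neighborSet (Sum.inr (spoke i0 a)))).ncard =
        ((MG n).neighborSet (Sum.inr (spoke i0 a))).ncard :=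
      le_antisymm (Set.ncard_image_le (Set.toFinite _)) (by rw [hNcard]; exact h1)
    exact Set.injOn_of_ncard_image_eq heq (Set.toFinite _)
  have hmem_none : ∀ a : Fin 2,
      Sum.inl (none : FV n) ∈ (MG n).neighborSet (Sum.inr (spoke i0 a)) := by
    intro a; rw [nbhd_spoke]; exact Set.mem_insert _ _
  have hmem_vert : ∀ a : Fin 2,
      Sum.inl (some (i0, a)) ∈ (MG n).neighborSet (Sum.inr (spoke i0 a)) := by
    intro a; rw [nbhd_spoke]
    exact Set.mem_insert_of_mem _ (Set.mem_insert _ _)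
  have hmem_rim : ∀ a : Fin 2,
      Sum.inr (rim i0) ∈ (MG n).neighborSet (Sum.inr (spoke i0 a)) := by
    intro a; rw [nbhd_spoke]
    exact Set.mem_insert_of_mem _ (Set.mem_insert_of_mem _ (Set.mem_insert _ _))
  have hmem_spoke : ∀ (a : Fin 2) (p : Fin n × Fin 2), p ≠ (i0, a) →
      Sum.inr (spoke p.1 p.2) ∈ (MG n).neighborSet (Sum.inr (spoke i0 a)) := by
    intro a p hp; rw [nbhd_spoke]
    exact Set.mem_insert_of_mem _ (Set.mem_insert_of_mem _ (Set.mem_insert_of_mem _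
      ⟨p, hp, rfl⟩))
  set cx : Fin k := c (Sum.inl (some (i0, 0))) with hcx
  set cy : Fin k := c (Sum.inl (some (i0, 1))) with hcy
  set ce : Fin k := c (Sum.inr (rim i0)) with hce
  have Fx : ∀ w : FV n, cliqueMap c w ≠ cx := by
    intro w h
    rcases w with _ | p
    · have := hInj 0 (hmem_none 0) (hmem_vert 0) h
      simp at this
    · by_cases hp : p = (i0, (0 : Fin 2))
      · subst hp
        exact hprop (madj_rl.mpr (by simp)) h
      · have := hInj 0 (hmem_spoke 0 p hp) (hmem_vert 0) h
        simp at this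
  have Fy : ∀ w : FV n, cliqueMap c w ≠ cy := by
    intro w h
    rcases w with _ | p
    · have := hInj 1 (hmem_none 1) (hmem_vert 1) h
      simp at this
    · by_cases hp : p = (i0, (1 : Fin 2))
      · subst hp
        exact hprop (madj_rl.mpr (by simp)) h
      · have := hInj 1 (hmem_spoke 1 p hp) (hmem_vert 1) h
        simp at this
  have Fe : ∀ w : FV n, cliqueMap c w ≠ ce := by
    intro w h
    rcases w with _ | p
    · have := hInj 0 (hmem_none 0) (hmem_rim 0) h
      simp at this
    · by_cases hp : p = (i0, (0 : Fin 2))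
      · subst hp
        exact hprop (madj_rr.mpr ⟨spoke_ne_rim, some (i0, 0), by simp, by simp⟩) h
      · have := hInj 0 (hmem_spoke 0 p hp) (hmem_rim 0) h
        simp at this
  have Gxy : cx ≠ cy := by
    intro h
    have h4 := hcond (Sum.inr (rim i0))
    rw [deg_rim] at h4
    have hmin : min 4 (2*n+2) = 4 := by omega
    rw [hmin] at h4
    have hsub : c '' (MG n).neighborSet (Sum.inr (rim i0)) ⊆
        {cx, c (Sum.inr (spoke i0 0)), c (Sum.inr (spoke i0 1))} := by
      rw [nbhd_rim]
      rintro z ⟨u, hu, rfl⟩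
      simp only [Set.mem_insert_iff, Set.mem_singleton_iff] at hu
      rcases hu with rfl | rfl | rfl | rfl
      · exact Set.mem_insert _ _
      · exact Set.mem_insert_iff.mpr (Or.inl h.symm)
      · exact Set.mem_insert_of_mem _ (Set.mem_insert _ _)
      · exact Set.mem_insert_of_mem _ (Set.mem_insert_of_mem _ rfl)
    have hle := Set.ncard_le_ncard hsub (Set.toFinite _)
    have h3 : ({cx, c (Sum.inr (spoke i0 0)), c (Sum.inr (spoke i0 1))} : Set (Fin k)).ncard
        ≤ 3 := by
      refine le_trans (Set.ncard_insert_le _ _) ?_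
      have := Set.ncard_insert_le (c (Sum.inr (spoke i0 0))) {c (Sum.inr (spoke i0 1))}
      simp only [Set.ncard_singleton] at this
      omega
    omega
  have Gxe : cx ≠ ce := hprop (madj_lr.mpr (by simp))
  have Gye : cy ≠ ce := hprop (madj_lr.mpr (by simp))
  set ψ : FV n ⊕ Fin 3 → Fin k := Sum.elim (cliqueMap c)
    (fun t : Fin 3 => if (t:ℕ) = 0 then cx else if (t:ℕ) = 1 then cy else ce) with hψ
  have hψinj : Function.Injective ψ := by
    have hclique := cliqueMap_inj c hprop
    rintro (w | t) (w' | t') h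
    · rw [hclique h]
    · exfalso
      fin_cases t' <;>
        first
          | exact Fx w h
          | exact Fy w h
          | exact Fe w h
    · exfalso
      fin_cases t <;>
        first
          | exact Fx w' h.symm
          | exact Fy w' h.symm
          | exact Fe w' h.symm
    · fin_cases t <;> fin_cases t' <;>
        first
          | rfl
          | exact absurd h Gxy
          | exact absurd h Gxe
          | exact absurd h Gye
          | exact absurd h.symm Gxy
          | exact absurd h.symm Gxe
          | exact absurd h.symm Gye
  have hcard := Nat.card_le_card_of_injective ψ hψinj
  simp only [Nat.card_eq_fintype_card, Fintype.card_sum, Fintype.card_option,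
    Fintype.card_prod, Fintype.card_fin] at hcard
  omega

/-! ### maximum degree -/

lemma maxdeg (hn : 2 ≤ n) : gMaxDeg (MG n) = 2*n+2 := by
  have hub : ∀ d ∈ {d : ℕ | ∃ v, gDeg (MG n) v = d}, d ≤ 2*n+2 := by
    rintro d ⟨v, rfl⟩
    rcases v with (_ | ⟨i, a⟩) | e
    · rw [deg_center]; omega
    · rw [deg_some]; omega
    · rcases edge_cases e with ⟨i, a, rfl⟩ | ⟨i, rfl⟩
      · rw [deg_spoke (by omega) i a]
      · rw [deg_rim]; omega
  apply le_antisymm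
  · exact csSup_le ⟨2*n, Sum.inl none, deg_center⟩ hub
  · exact le_csSup ⟨2*n+2, hub⟩ ⟨Sum.inr (spoke ⟨0, by omega⟩ 0), deg_spoke (by omega) _ _⟩

end CMF

/-- For `n ≥ 2`, the middle graph of the friendship graph `F_n = Wd(3,n)`
has maximum degree `Δ = 2n + 2`, and `χ_r(M(F_n)) = 2n + 1` if `0 < r ≤ 2n`,
`χ_{2n+1}(M(F_n)) = 2n + 2`, and `χ_Δ(M(F_n)) = 2n + 4`. -/
theorem condChrom_middle_friendship (n : ℕ) (hn : 2 ≤ n) :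
    gMaxDeg (middleG (windmill 3 n)) = 2 * n + 2 ∧
    (∀ r, 0 < r → r ≤ 2 * n → condChrom (middleG (windmill 3 n)) r = 2 * n + 1) ∧
    condChrom (middleG (windmill 3 n)) (2 * n + 1) = 2 * n + 2 ∧
    condChrom (middleG (windmill 3 n)) (2 * n + 2) = 2 * n + 4 := by
  refine ⟨CMF.maxdeg hn, fun r hr1 hr2 => ?_, ?_, ?_⟩
  · exact CMF.condChrom_eq_of (CMF.MG n) r (2*n+1) (CMF.iscc1 hn r hr2)
      (fun k hk => hk.elim fun c hc => by have := CMF.clique_lb c hc; omega)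
  · exact CMF.condChrom_eq_of (CMF.MG n) (2*n+1) (2*n+2) (CMF.iscc2 hn)
      (fun k hk => hk.elim fun c hc => CMF.lb2 hn c hc)
  · exact CMF.condChrom_eq_of (CMF.MG n) (2*n+2) (2*n+4) (CMF.iscc3 hn)
      (fun k hk => hk.elim fun c hc => CMF.lb3 hn c hc)
end
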